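/- arXiv:1811.10487 — 13 statements merged into one kernel-verified Lean document; each statement's English description precedes it below -/
import Mathlib

section
/- Fix N ≥ 1 and penalties 0 < π_1 < π_2 < ⋯ < π_N. Let x ∈ ℝ^N with x ≥ 0 and let w ≥ 0. Then the vector y*(x;w) is feasible for the second-stage linear program, i.e. 0 ≤ y*_i(x;w) ≤ x_i for all i and Σ_{i=1}^N y*_i(x;w) = max(Σ_{i=1}^N x_i − w, 0), and it is optimal: for every y ∈ ℝ^N with 0 ≤ y_i ≤ x_i for all i and Σ_{i=1}^N y_i = max(Σ_{i=1}^N x_i − w, 0), one has Σ_{i=1}^N π_i y*_i(x;w) ≤ Σ_{i=1}^N π_i y_i. -/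
open MeasureTheory Finset

noncomputable section

/-- `phi N x j = Σ_{k=j}^N x_k` (with `phi N x (N+1) = 0`). -/
def phi (N : ℕ) (x : ℕ → ℝ) (j : ℕ) : ℝ := ∑ k ∈ Finset.Icc j N, x k

/-- The optimal shortfall `y*(x;w)`: `y*_i = x_i` if `w < φ_{i+1}(x)`,
`y*_i = φ_i(x) - w` if `φ_{i+1}(x) ≤ w < φ_i(x)`, and `y*_i = 0` otherwise
(in particular `y* = 0` when `w ≥ φ_1(x)`). -/
def ystar (N : ℕ) (x : ℕ → ℝ) (w : ℝ) (i : ℕ) : ℝ :=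
  if w < phi N x (i + 1) then x i
  else if w < phi N x i then phi N x i - w
  else 0

/-- helper: `max (phi j - w) 0`. -/
def gfun (N : ℕ) (x : ℕ → ℝ) (w : ℝ) (j : ℕ) : ℝ := max (phi N x j - w) 0

lemma phi_succ (N : ℕ) (x : ℕ → ℝ) {i : ℕ} (hi : i ≤ N) :
    phi N x i = x i + phi N x (i + 1) := by
  unfold phi
  have e : Finset.Icc i N = insert i (Finset.Icc (i+1) N) := by
    ext k; simp only [Finset.mem_Icc, Finset.mem_insert]; omega
  rw [e, Finset.sum_insert (by simp)]

lemma phi_top (N : ℕ) (x : ℕ → ℝ) : phi N x (N + 1) = 0 := by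
  unfold phi
  rw [Finset.Icc_eq_empty (by omega), Finset.sum_empty]

lemma gfun_top (N : ℕ) (x : ℕ → ℝ) {w : ℝ} (hw : 0 ≤ w) : gfun N x w (N + 1) = 0 := by
  unfold gfun
  rw [phi_top]
  simp [max_eq_right]; linarith

lemma ystar_eq_sub (N : ℕ) (x : ℕ → ℝ) (w : ℝ) {i : ℕ} (hi : i ≤ N) (hxi : 0 ≤ x i) :
    ystar N x w i = gfun N x w i - gfun N x w (i + 1) := by
  have hφ := phi_succ N x hi
  unfold ystar gfun
  by_cases h1 : w < phi N x (i + 1)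
  · rw [if_pos h1, max_eq_left (by linarith), max_eq_left (by linarith)]
    linarith
  · rw [if_neg h1]
    by_cases h2 : w < phi N x i
    · rw [if_pos h2, max_eq_left (by linarith), max_eq_right (by linarith)]
      linarith
    · rw [if_neg h2, max_eq_right (by linarith), max_eq_right (by linarith)]
      linarith

lemma tail_sum (N : ℕ) (x : ℕ → ℝ) (w : ℝ) (hw : 0 ≤ w)
    (hx : ∀ i ∈ Finset.Icc 1 N, 0 ≤ x i)
    {j : ℕ} (hj1 : 1 ≤ j) (hj2 : j ≤ N + 1) :
    ∑ i ∈ Finset.Icc j N, ystar N x w i = gfun N x w j := by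
  have h1 : ∑ i ∈ Finset.Icc j N, ystar N x w i
      = ∑ k ∈ Finset.range (N + 1 - j), (gfun N x w (j + k) - gfun N x w (j + k + 1)) := by
    rw [← Finset.Ico_add_one_right_eq_Icc, Finset.sum_Ico_eq_sum_range]
    apply Finset.sum_congr rfl
    intro k hk
    rw [Finset.mem_range] at hk
    exact ystar_eq_sub N x w (by omega) (hx _ (by simp; omega))
  rw [h1]
  have h2 := Finset.sum_range_sub' (fun k => gfun N x w (j + k)) (N + 1 - j)
  simp only [← Nat.add_assoc] at h2 ⊢
  rw [h2]
  have : j + (N + 1 - j) = N + 1 := by omega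
  rw [this, Nat.add_zero, gfun_top N x hw, sub_zero]

lemma pi_telescope (π : ℕ → ℝ) {i : ℕ} (hi : 1 ≤ i) :
    π i = π 1 + ∑ j ∈ Finset.Icc 2 i, (π j - π (j - 1)) := by
  induction i, hi using Nat.le_induction with
  | base => simp [Finset.Icc_eq_empty (show ¬(2:ℕ) ≤ 1 by omega)]
  | succ n hn ih =>
    rw [Finset.sum_Icc_succ_top (by omega)]
    simp only [Nat.add_sub_cancel]
    linarith

lemma abel_identity (N : ℕ) (π : ℕ → ℝ) (y : ℕ → ℝ) :
    ∑ i ∈ Finset.Icc 1 N, π i * y i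
      = π 1 * ∑ i ∈ Finset.Icc 1 N, y i
        + ∑ j ∈ Finset.Icc 2 N, (π j - π (j - 1)) * ∑ i ∈ Finset.Icc j N, y i := by
  have h1 : ∀ i ∈ Finset.Icc 1 N, π i * y i
      = π 1 * y i + ∑ j ∈ Finset.Icc 2 i, (π j - π (j - 1)) * y i := by
    intro i hi
    rw [Finset.mem_Icc] at hi
    rw [← Finset.sum_mul]
    rw [pi_telescope π hi.1]
    ring
  rw [Finset.sum_congr rfl h1, Finset.sum_add_distrib, ← Finset.mul_sum]
  congr 1
  rw [Finset.sum_comm' (t' := Finset.Icc 2 N) (s' := fun j => Finset.Icc j N)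
    (by intro i j; simp only [Finset.mem_Icc]; omega)]
  apply Finset.sum_congr rfl
  intro j _
  rw [Finset.mul_sum]

/-- `y*(x;w)` is feasible and optimal for the second-stage LP. -/
theorem ystar_feasible_and_optimal
    (N : ℕ) (hN : 1 ≤ N) (π : ℕ → ℝ)
    (hπ1 : 0 < π 1) (hπ : ∀ i, 1 ≤ i → i < N → π i < π (i + 1))
    (x : ℕ → ℝ) (hx : ∀ i ∈ Finset.Icc 1 N, 0 ≤ x i)
    (w : ℝ) (hw : 0 ≤ w) :
    (∀ i ∈ Finset.Icc 1 N, 0 ≤ ystar N x w i ∧ ystar N x w i ≤ x i) ∧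
    (∑ i ∈ Finset.Icc 1 N, ystar N x w i
        = max (∑ i ∈ Finset.Icc 1 N, x i - w) 0) ∧
    (∀ y : ℕ → ℝ, (∀ i ∈ Finset.Icc 1 N, 0 ≤ y i ∧ y i ≤ x i) →
      (∑ i ∈ Finset.Icc 1 N, y i = max (∑ i ∈ Finset.Icc 1 N, x i - w) 0) →
      ∑ i ∈ Finset.Icc 1 N, π i * ystar N x w i
        ≤ ∑ i ∈ Finset.Icc 1 N, π i * y i) := by
  have hphix : phi N x 1 = ∑ k ∈ Finset.Icc 1 N, x k := rfl
  refine ⟨?_, ?_, ?_⟩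
  · -- feasibility bounds
    intro i hi
    rw [Finset.mem_Icc] at hi
    have hxi : 0 ≤ x i := hx i (by simp [hi.1, hi.2])
    have hφ := phi_succ N x hi.2
    unfold ystar
    by_cases h1 : w < phi N x (i + 1)
    · rw [if_pos h1]; exact ⟨hxi, le_refl _⟩
    · rw [if_neg h1]
      by_cases h2 : w < phi N x i
      · rw [if_pos h2]; constructor <;> [linarith; linarith]
      · rw [if_neg h2]; exact ⟨le_refl _, hxi⟩
  · -- sum identity
    rw [tail_sum N x w hw hx (le_refl 1) (by omega)]
    unfold gfun
    rw [hphix]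
  · -- optimality
    intro y hy hysum
    rw [abel_identity N π y, abel_identity N π (ystar N x w)]
    rw [tail_sum N x w hw hx (le_refl 1) (by omega), hysum]
    have hg1 : gfun N x w 1 = max (∑ i ∈ Finset.Icc 1 N, x i - w) 0 := by
      unfold gfun; rw [hphix]
    rw [hg1]
    apply add_le_add (le_refl _)
    apply Finset.sum_le_sum
    intro j hj
    rw [Finset.mem_Icc] at hj
    have hΔ : 0 ≤ π j - π (j - 1) := by
      have := hπ (j - 1) (by omega) (by omega)
      have hj' : j - 1 + 1 = j := by omega
      rw [hj'] at this
      linarith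
    have hTstar : ∑ i ∈ Finset.Icc j N, ystar N x w i = gfun N x w j :=
      tail_sum N x w hw hx (by omega) (by omega)
    rw [hTstar]
    apply mul_le_mul_of_nonneg_left _ hΔ
    -- need gfun j ≤ ∑_{Icc j N} y
    have hTy0 : 0 ≤ ∑ i ∈ Finset.Icc j N, y i := by
      apply Finset.sum_nonneg
      intro i hi
      rw [Finset.mem_Icc] at hi
      exact (hy i (by simp; omega)).1
    have hsplit : ∀ z : ℕ → ℝ, (∑ i ∈ Finset.Icc 1 (j-1), z i) + (∑ i ∈ Finset.Icc j N, z i)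
        = ∑ i ∈ Finset.Icc 1 N, z i := by
      intro z
      have e1 : Finset.Icc 1 (j-1) = Finset.Ioc 0 (j-1) := by
        ext k; simp only [Finset.mem_Icc, Finset.mem_Ioc]; omega
      have e2 : Finset.Icc j N = Finset.Ioc (j-1) N := by
        ext k; simp only [Finset.mem_Icc, Finset.mem_Ioc]; omega
      have e3 : Finset.Icc 1 N = Finset.Ioc 0 N := by
        ext k; simp only [Finset.mem_Icc, Finset.mem_Ioc]; omega
      rw [e1, e2, e3]
      exact Finset.sum_Ioc_consecutive z (by omega) (by omega)
    have hxbound : ∑ i ∈ Finset.Icc 1 (j-1), y i ≤ ∑ i ∈ Finset.Icc 1 (j-1), x i := by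
      apply Finset.sum_le_sum
      intro i hi
      rw [Finset.mem_Icc] at hi
      exact (hy i (by simp; omega)).2
    have hphi_j : phi N x j = (∑ i ∈ Finset.Icc 1 N, x i) - ∑ i ∈ Finset.Icc 1 (j-1), x i := by
      have := hsplit x
      unfold phi
      linarith
    have hS : ∑ i ∈ Finset.Icc 1 N, x i - w ≤ max (∑ i ∈ Finset.Icc 1 N, x i - w) 0 :=
      le_max_left _ _
    have hTy : phi N x j - w ≤ ∑ i ∈ Finset.Icc j N, y i := by
      have := hsplit y
      rw [hysum] at this
      linarith
    unfold gfun
    exact max_le hTy hTy0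
end
end

section
/- Fix N ≥ 1 and penalties 0 < π_1 < π_2 < ⋯ < π_N. For every x ∈ ℝ^N with x ≥ 0, the second-stage expected value V(x) := ∫_0^∞ (Σ_{i=1}^N π_i y*_i(x;w)) f(w) dw equals Σ_{i=1}^N π_i [ x_i F(φ_{i+1}(x)) + φ_i(x) F(φ_i(x)) − φ_i(x) F(φ_{i+1}(x)) − G(φ_i(x)) + G(φ_{i+1}(x)) ]. -/
open MeasureTheory Finset

noncomputable section

open Set in
/-- Key single-index computation. -/
lemma key_integral (f F G : ℝ → ℝ)
    (hf_cont : Continuous f)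
    (hf_zero : ∀ z : ℝ, z ≤ 0 → f z = 0)
    (hf_int : Integrable f)
    (hF : ∀ z : ℝ, F z = ∫ w in Set.Iic z, f w)
    (hG : ∀ z : ℝ, G z = ∫ w in (0:ℝ)..z, w * f w)
    (b a : ℝ) (hb : 0 ≤ b) (hba : b ≤ a) :
    ∫ w in Set.Ioi (0:ℝ),
      (if w < b then a - b else if w < a then a - w else 0) * f w
      = (a - b) * F b + a * F a - a * F b - G a + G b := by
  have hfe : f = (Ioi (0:ℝ)).indicator f := by
    funext w
    by_cases h : 0 < w
    · simp [Set.indicator_of_mem, h]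
    · simp [Set.indicator_of_notMem, h, hf_zero w (le_of_not_gt h)]
  have hIoc : ∀ z : ℝ, F z = ∫ w in Ioc 0 z, f w := by
    intro z
    rw [hF z]
    conv_lhs => rw [hfe]
    rw [setIntegral_indicator measurableSet_Ioi, Set.Iic_inter_Ioi]
  have hIoo : ∀ z : ℝ, F z = ∫ w in Ioo 0 z, f w := by
    intro z
    rw [hIoc z, integral_Ioc_eq_integral_Ioo]
  have hFdiff : ∀ z₁ z₂ : ℝ, 0 ≤ z₁ → z₁ ≤ z₂ →
      ∫ w in Ioo z₁ z₂, f w = F z₂ - F z₁ := by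
    intro z₁ z₂ h1 h12
    rw [← integral_Ioc_eq_integral_Ioo, hIoc, hIoc]
    have : Ioc 0 z₂ = Ioc 0 z₁ ∪ Ioc z₁ z₂ := (Set.Ioc_union_Ioc_eq_Ioc h1 h12).symm
    rw [this, setIntegral_union (Set.Ioc_disjoint_Ioc_of_le le_rfl) measurableSet_Ioc
      hf_int.integrableOn hf_int.integrableOn]
    ring
  have hGdiff : G a - G b = ∫ w in Ioo b a, w * f w := by
    have hi : ∀ c d : ℝ, IntervalIntegrable (fun w => w * f w) volume c d :=
      fun c d => (continuous_id.mul hf_cont).intervalIntegrable c d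
    rw [hG, hG, intervalIntegral.integral_interval_sub_left (hi 0 a) (hi 0 b),
      intervalIntegral.integral_of_le hba, integral_Ioc_eq_integral_Ioo]
  set g2 : ℝ → ℝ := fun w => (a - w) * f w with hg2
  have hpt : ∀ w : ℝ, w ≠ b →
      (if w < b then a - b else if w < a then a - w else 0) * f w
        = (a - b) * (Ioo 0 b).indicator f w + (Ioo b a).indicator g2 w := by
    intro w hw
    by_cases h1 : w < b
    · rw [if_pos h1]
      by_cases h0 : 0 < w
      · rw [Set.indicator_of_mem (Set.mem_Ioo.2 ⟨h0, h1⟩),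
          Set.indicator_of_notMem
            (fun hmem => absurd (Set.mem_Ioo.1 hmem).1 (not_lt.2 h1.le))]
        ring
      · have hw0 : f w = 0 := hf_zero w (le_of_not_gt h0)
        rw [Set.indicator_of_notMem (fun hmem => h0 (Set.mem_Ioo.1 hmem).1),
          Set.indicator_of_notMem (fun hmem => absurd (Set.mem_Ioo.1 hmem).1
            (not_lt.2 ((le_of_not_gt h0).trans hb))), hw0]
        ring
    · have hbw : b < w := lt_of_le_of_ne (not_lt.1 h1) (Ne.symm hw)
      rw [if_neg h1,
        Set.indicator_of_notMem (fun hmem => absurd (Set.mem_Ioo.1 hmem).2 (not_lt.2 hbw.le))]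
      by_cases h2 : w < a
      · rw [if_pos h2, Set.indicator_of_mem (Set.mem_Ioo.2 ⟨hbw, h2⟩), hg2]
        ring
      · rw [if_neg h2, Set.indicator_of_notMem (fun hmem => absurd (Set.mem_Ioo.1 hmem).2 h2)]
        ring
  have haeb : ∀ᵐ w : ℝ, w ≠ b := by
    have : (volume : Measure ℝ) {b} = 0 := measure_singleton b
    simpa [ae_iff] using this
  have hcong : ∫ w in Set.Ioi (0:ℝ),
      (if w < b then a - b else if w < a then a - w else 0) * f w
      = ∫ w in Set.Ioi (0:ℝ),
        ((a - b) * (Ioo 0 b).indicator f w + (Ioo b a).indicator g2 w) := by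
    refine setIntegral_congr_ae measurableSet_Ioi ?_
    filter_upwards [haeb] with w hw _ using hpt w hw
  rw [hcong]
  have hint1 : Integrable (fun w => (a - b) * (Ioo (0:ℝ) b).indicator f w)
      (volume.restrict (Ioi (0:ℝ))) :=
    ((hf_int.integrableOn.integrable_indicator measurableSet_Ioo).const_mul _).restrict
  have hg2c : Continuous g2 := (continuous_const.sub continuous_id).mul hf_cont
  have hint2' : IntegrableOn g2 (Ioo b a) :=
    (hg2c.integrableOn_Icc (a := b) (b := a)).mono_set Set.Ioo_subset_Icc_self
  have hint2 : Integrable ((Ioo b a).indicator g2) (volume.restrict (Ioi (0:ℝ))) :=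
    (hint2'.integrable_indicator measurableSet_Ioo).restrict
  rw [integral_add hint1 hint2, integral_const_mul,
    integral_indicator measurableSet_Ioo, integral_indicator measurableSet_Ioo,
    Measure.restrict_restrict measurableSet_Ioo, Measure.restrict_restrict measurableSet_Ioo]
  have e1 : Ioo (0:ℝ) b ∩ Ioi 0 = Ioo 0 b := Set.inter_eq_left.2 (fun w hw => hw.1)
  have e2 : Ioo b a ∩ Ioi (0:ℝ) = Ioo b a :=
    Set.inter_eq_left.2 (fun w hw => lt_of_le_of_lt hb hw.1)
  rw [e1, e2]
  have hv1 : ∫ w in Ioo (0:ℝ) b, f w = F b := by rw [hIoo b]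
  have hsplit : ∫ w in Ioo b a, g2 w = a * (F a - F b) - (G a - G b) := by
    have hfab : IntegrableOn (fun w => a * f w) (Ioo b a) :=
      hf_int.integrableOn.const_mul a
    have hwf : IntegrableOn (fun w => w * f w) (Ioo b a) :=
      ((continuous_id.mul hf_cont).integrableOn_Icc (a := b) (b := a)).mono_set
        Set.Ioo_subset_Icc_self
    have hgg : ∀ w : ℝ, g2 w = a * f w - w * f w := fun w => by rw [hg2]; ring
    rw [show (fun w => g2 w) = fun w => a * f w - w * f w from funext hgg]
    rw [integral_sub hfab hwf, integral_const_mul, hFdiff b a hb hba, hGdiff]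
  rw [hv1, hsplit]
  ring

/-- the second-stage expected value
`V(x) = ∫_0^∞ (Σ_i π_i y*_i(x;w)) f(w) dw` equals the closed-form expression. -/
theorem expected_second_stage_value
    (N : ℕ) (hN : 1 ≤ N) (π : ℕ → ℝ)
    (hπ1 : 0 < π 1) (hπ : ∀ i, 1 ≤ i → i < N → π i < π (i + 1))
    (f F G : ℝ → ℝ)
    (hf_cont : Continuous f)
    (hf_zero : ∀ z : ℝ, z ≤ 0 → f z = 0)
    (hf_pos : ∀ z : ℝ, 0 < z → 0 < f z)
    (hf_int : MeasureTheory.Integrable f)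
    (hf_tot : (∫ z : ℝ, f z) = 1)
    (hF : ∀ z : ℝ, F z = ∫ w in Set.Iic z, f w)
    (hG : ∀ z : ℝ, G z = ∫ w in (0:ℝ)..z, w * f w)
    (x : ℕ → ℝ) (hx : ∀ i ∈ Finset.Icc 1 N, 0 ≤ x i) :
    (∫ w in Set.Ioi (0:ℝ), (∑ i ∈ Finset.Icc 1 N, π i * ystar N x w i) * f w)
      = ∑ i ∈ Finset.Icc 1 N, π i *
          (x i * F (phi N x (i + 1)) + phi N x i * F (phi N x i)
            - phi N x i * F (phi N x (i + 1))
            - G (phi N x i) + G (phi N x (i + 1))) := by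
  classical
  have hphi_nonneg : ∀ j : ℕ, 1 ≤ j → 0 ≤ phi N x j := by
    intro j hj
    refine Finset.sum_nonneg fun k hk => ?_
    refine hx k ?_
    simp only [Finset.mem_Icc] at hk ⊢
    omega
  have hstep : ∀ i ∈ Finset.Icc 1 N, phi N x i = x i + phi N x (i + 1) := by
    intro i hi
    simp only [Finset.mem_Icc] at hi
    have hins : Finset.Icc i N = insert i (Finset.Icc (i + 1) N) := by
      ext k; simp only [Finset.mem_Icc, Finset.mem_insert]; omega
    have hnm : i ∉ Finset.Icc (i + 1) N := by simp
    rw [phi, hins, Finset.sum_insert hnm]; rfl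
  have hyb : ∀ i ∈ Finset.Icc 1 N, ∀ w : ℝ, |ystar N x w i| ≤ x i := by
    intro i hi w
    have hxi : 0 ≤ x i := hx i hi
    have hs := hstep i hi
    rw [ystar]
    split_ifs with h1 h2
    · rw [abs_of_nonneg hxi]
    · have h1' := not_lt.1 h1
      rw [abs_of_nonneg (by linarith)]
      linarith
    · simpa using hxi
  have hymeas : ∀ i : ℕ, Measurable (fun w => ystar N x w i) := by
    intro i
    unfold ystar
    exact Measurable.ite (measurableSet_lt measurable_id measurable_const)
      measurable_const
      (Measurable.ite (measurableSet_lt measurable_id measurable_const)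
        (measurable_const.sub measurable_id) measurable_const)
  have hinteg : ∀ i ∈ Finset.Icc 1 N,
      Integrable (fun w => π i * ystar N x w i * f w)
        (volume.restrict (Set.Ioi (0:ℝ))) := by
    intro i hi
    refine Integrable.mono' ((hf_int.abs.const_mul (|π i| * x i)).restrict) ?_ ?_
    · exact ((measurable_const.mul (hymeas i)).mul
        hf_cont.measurable).aestronglyMeasurable
    · refine Filter.Eventually.of_forall fun w => ?_
      simp only [Real.norm_eq_abs, abs_mul]
      exact mul_le_mul_of_nonneg_right
        (mul_le_mul_of_nonneg_left (hyb i hi w) (abs_nonneg _)) (abs_nonneg _)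
  simp_rw [Finset.sum_mul]
  rw [MeasureTheory.integral_finset_sum _ hinteg]
  refine Finset.sum_congr rfl fun i hi => ?_
  have hs := hstep i hi
  have hxi : 0 ≤ x i := hx i hi
  have hb : 0 ≤ phi N x (i + 1) := hphi_nonneg _ (by omega)
  have hba : phi N x (i + 1) ≤ phi N x i := by linarith
  have hxab : x i = phi N x i - phi N x (i + 1) := by linarith
  have hrw : ∀ w : ℝ, π i * ystar N x w i * f w
      = π i * ((if w < phi N x (i + 1) then phi N x i - phi N x (i + 1)
          else if w < phi N x i then phi N x i - w else 0) * f w) := by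
    intro w
    simp only [ystar]
    rw [← hxab, mul_assoc]
  simp_rw [hrw]
  rw [MeasureTheory.integral_const_mul,
    key_integral f F G hf_cont hf_zero hf_int hF hG _ _ hb hba, hxab]
end
end

section
/- Fix N ≥ 1 and penalties 0 = π_0 < π_1 < π_2 < ⋯ < π_N, and let V(x) = Σ_{i=1}^N π_i [ x_i F(φ_{i+1}(x)) + φ_i(x) F(φ_i(x)) − φ_i(x) F(φ_{i+1}(x)) − G(φ_i(x)) + G(φ_{i+1}(x)) ]. Then at every x in the open positive orthant, V has partial derivatives given by ∂V/∂x_i (x) = Σ_{j=1}^i (π_j − π_{j−1}) F(φ_j(x)) for every 1 ≤ i ≤ N. -/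
open MeasureTheory Finset

noncomputable section

/-- The closed-form second-stage expected value `V(x)`. -/
def Vform (N : ℕ) (π : ℕ → ℝ) (F G : ℝ → ℝ) (x : ℕ → ℝ) : ℝ :=
  ∑ i ∈ Finset.Icc 1 N, π i *
    (x i * F (phi N x (i + 1)) + phi N x i * F (phi N x i)
      - phi N x i * F (phi N x (i + 1))
      - G (phi N x i) + G (phi N x (i + 1)))

/-- Abel-summation / telescoping helper. -/
lemma abel_sum (π : ℕ → ℝ) (hπ0 : π 0 = 0) (c : ℕ → ℝ) :
    ∀ n : ℕ,
      (∑ m ∈ Finset.Icc 1 n, π m * (c m - c (m + 1))) + π n * c (n + 1)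
        = ∑ j ∈ Finset.Icc 1 n, (π j - π (j - 1)) * c j := by
  intro n
  induction n with
  | zero => simp [hπ0]
  | succ k ih =>
    rw [Finset.sum_Icc_succ_top (by omega : 1 ≤ k + 1),
      Finset.sum_Icc_succ_top (by omega : 1 ≤ k + 1)]
    simp only [Nat.add_sub_cancel]
    linarith [ih]

/-- on the open positive orthant,
`∂V/∂x_i (x) = Σ_{j=1}^i (π_j - π_{j-1}) F(φ_j(x))` for every `1 ≤ i ≤ N`. -/
theorem Vform_partial_deriv
    (N : ℕ) (hN : 1 ≤ N) (π : ℕ → ℝ)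
    (hπ0 : π 0 = 0) (hπ : ∀ i, i < N → π i < π (i + 1))
    (f F G : ℝ → ℝ)
    (hf_cont : Continuous f)
    (hf_zero : ∀ z : ℝ, z ≤ 0 → f z = 0)
    (hf_pos : ∀ z : ℝ, 0 < z → 0 < f z)
    (hf_int : MeasureTheory.Integrable f)
    (hf_tot : (∫ z : ℝ, f z) = 1)
    (hF : ∀ z : ℝ, F z = ∫ w in Set.Iic z, f w)
    (hG : ∀ z : ℝ, G z = ∫ w in (0:ℝ)..z, w * f w)
    (x : ℕ → ℝ) (hx : ∀ i ∈ Finset.Icc 1 N, 0 < x i)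
    (i : ℕ) (hi1 : 1 ≤ i) (hiN : i ≤ N) :
    HasDerivAt (fun t : ℝ => Vform N π F G (Function.update x i t))
      (∑ j ∈ Finset.Icc 1 i, (π j - π (j - 1)) * F (phi N x j)) (x i) := by
  -- derivative of F
  have hF' : ∀ z : ℝ, HasDerivAt F (f z) z := by
    intro z
    have h1 : HasDerivAt (fun u : ℝ => ∫ w in (0:ℝ)..u, f w) (f z) z :=
      intervalIntegral.integral_hasDerivAt_right hf_int.intervalIntegrable
        (hf_cont.stronglyMeasurable.stronglyMeasurableAtFilter) hf_cont.continuousAt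
    have h2 := h1.const_add (∫ w in Set.Iic (0:ℝ), f w)
    refine h2.congr_of_eventuallyEq (Filter.Eventually.of_forall fun y => ?_)
    have h3 := intervalIntegral.integral_Iic_sub_Iic (μ := volume) (a := (0:ℝ)) (b := y)
      hf_int.integrableOn hf_int.integrableOn
    show F y = (∫ w in Set.Iic (0:ℝ), f w) + ∫ w in (0:ℝ)..y, f w
    rw [hF y]
    linarith [h3]
  -- derivative of G
  have hGc : Continuous fun w : ℝ => w * f w := continuous_id.mul hf_cont
  have hG' : ∀ z : ℝ, HasDerivAt G (z * f z) z := by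
    intro z
    have h1 : HasDerivAt (fun u : ℝ => ∫ w in (0:ℝ)..u, w * f w) (z * f z) z :=
      intervalIntegral.integral_hasDerivAt_right (hGc.intervalIntegrable 0 z)
        (hGc.stronglyMeasurable.stronglyMeasurableAtFilter) hGc.continuousAt
    exact h1.congr_of_eventuallyEq (Filter.Eventually.of_forall fun y => hG y)
  set s := x i with hs
  -- how phi changes under update
  have hphi_update : ∀ (t : ℝ) (j : ℕ),
      phi N (Function.update x i t) j = phi N x j + (if j ≤ i then t - x i else 0) := by
    intro t j
    unfold phi
    by_cases h : j ≤ i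
    · have hm : i ∈ Finset.Icc j N := Finset.mem_Icc.2 ⟨h, hiN⟩
      rw [Finset.sum_update_of_mem hm, if_pos h, ← Finset.erase_eq,
        Finset.sum_erase_eq_sub hm]
      ring
    · have hm : i ∉ Finset.Icc j N := fun hc => h (Finset.mem_Icc.1 hc).1
      rw [Finset.sum_update_of_notMem hm, if_neg h, add_zero]
  -- recurrence for phi
  have hphi_rec : ∀ m : ℕ, m ≤ N → phi N x m = x m + phi N x (m + 1) := by
    intro m hm
    unfold phi
    rw [Finset.Icc_add_one_left_eq_Ioc,
      ← Finset.Ioc_insert_left hm, Finset.sum_insert Finset.left_notMem_Ioc]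
  -- per-term derivatives
  have hterm : ∀ m ∈ Finset.Icc 1 N,
      HasDerivAt (fun t : ℝ => π m *
        (Function.update x i t m * F (phi N (Function.update x i t) (m + 1))
          + phi N (Function.update x i t) m * F (phi N (Function.update x i t) m)
          - phi N (Function.update x i t) m * F (phi N (Function.update x i t) (m + 1))
          - G (phi N (Function.update x i t) m) + G (phi N (Function.update x i t) (m + 1))))
        (if m < i then π m * (F (phi N x m) - F (phi N x (m + 1)))
          else if m = i then π i * F (phi N x i) else 0) s := by
    intro m hm
    obtain ⟨hm1, hmN⟩ := Finset.mem_Icc.1 hm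
    rcases lt_trichotomy m i with hmi | hmi | hmi
    · -- m < i : both phi m and phi (m+1) shift with t
      set a := phi N x m with ha
      set b := phi N x (m + 1) with hb
      have e1 : ∀ t : ℝ, phi N (Function.update x i t) m = a + (t - s) := fun t => by
        rw [hphi_update, if_pos hmi.le]
      have e2 : ∀ t : ℝ, phi N (Function.update x i t) (m + 1) = b + (t - s) := fun t => by
        rw [hphi_update, if_pos (by omega : m + 1 ≤ i)]
      have e3 : ∀ t : ℝ, Function.update x i t m = x m := fun t =>
        Function.update_of_ne (by omega) _ _
      simp only [e1, e2, e3, if_pos hmi]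
      have hA : HasDerivAt (fun t : ℝ => a + (t - s)) 1 s := by
        simpa using ((hasDerivAt_id s).sub_const s).const_add a
      have hAs : a + (s - s) = a := by ring
      have hBs : b + (s - s) = b := by ring
      have hFA : HasDerivAt (fun t : ℝ => F (a + (t - s))) (f a) s := by
        have := (hF' (a + (s - s))).comp s hA
        simpa [hAs, Function.comp_def] using this
      have hB : HasDerivAt (fun t : ℝ => b + (t - s)) 1 s := by
        simpa using ((hasDerivAt_id s).sub_const s).const_add b
      have hFB : HasDerivAt (fun t : ℝ => F (b + (t - s))) (f b) s := by
        have := (hF' (b + (s - s))).comp s hB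
        simpa [hBs, Function.comp_def] using this
      have hGA : HasDerivAt (fun t : ℝ => G (a + (t - s))) (a * f a) s := by
        have := (hG' (a + (s - s))).comp s hA
        simpa [hAs, Function.comp_def] using this
      have hGB : HasDerivAt (fun t : ℝ => G (b + (t - s))) (b * f b) s := by
        have := (hG' (b + (s - s))).comp s hB
        simpa [hBs, Function.comp_def] using this
      have h := (((((hFB.const_mul (x m)).add (hA.mul hFA)).sub (hA.mul hFB)).sub hGA).add
        hGB).const_mul (π m)
      refine h.congr_deriv ?_
      have hab : a = x m + b := hphi_rec m hmN
      simp only [hAs, hBs]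
      rw [hab]; ring
    · -- m = i
      subst hmi
      set a := phi N x m with ha
      set b := phi N x (m + 1) with hb
      have e1 : ∀ t : ℝ, phi N (Function.update x m t) m = a + (t - s) := fun t => by
        rw [hphi_update, if_pos le_rfl]
      have e2 : ∀ t : ℝ, phi N (Function.update x m t) (m + 1) = b := fun t => by
        rw [hphi_update, if_neg (by omega), add_zero]
      have e3 : ∀ t : ℝ, Function.update x m t m = t := fun t =>
        Function.update_self _ _ _
      simp only [e1, e2, e3]
      rw [if_neg (lt_irrefl m)]
      simp only [if_pos trivial, eq_self_iff_true, if_true]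
      have hA : HasDerivAt (fun t : ℝ => a + (t - s)) 1 s := by
        simpa using ((hasDerivAt_id s).sub_const s).const_add a
      have hAs : a + (s - s) = a := by ring
      have hFA : HasDerivAt (fun t : ℝ => F (a + (t - s))) (f a) s := by
        have := (hF' (a + (s - s))).comp s hA
        simpa [hAs, Function.comp_def] using this
      have hGA : HasDerivAt (fun t : ℝ => G (a + (t - s))) (a * f a) s := by
        have := (hG' (a + (s - s))).comp s hA
        simpa [hAs, Function.comp_def] using this
      have h := (((((hasDerivAt_id s).mul_const (F b)).add (hA.mul hFA)).sub
        (hA.mul_const (F b))).sub hGA).add_const (G b) |>.const_mul (π m)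
      refine h.congr_deriv ?_
      simp only [hAs, id_eq]
      ring
    · -- m > i : constant in t
      have e1 : ∀ t : ℝ, phi N (Function.update x i t) m = phi N x m := fun t => by
        rw [hphi_update, if_neg (by omega), add_zero]
      have e2 : ∀ t : ℝ, phi N (Function.update x i t) (m + 1) = phi N x (m + 1) := fun t => by
        rw [hphi_update, if_neg (by omega), add_zero]
      have e3 : ∀ t : ℝ, Function.update x i t m = x m := fun t =>
        Function.update_of_ne (by omega) _ _
      simp only [e1, e2, e3, if_neg (by omega : ¬ m < i), if_neg (by omega : ¬ m = i)]
      exact hasDerivAt_const _ _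
  have hsum := HasDerivAt.sum hterm
  have hDeq : (∑ m ∈ Finset.Icc 1 N,
      (if m < i then π m * (F (phi N x m) - F (phi N x (m + 1)))
        else if m = i then π i * F (phi N x i) else 0))
      = ∑ j ∈ Finset.Icc 1 i, (π j - π (j - 1)) * F (phi N x j) := by
    rw [← Finset.sum_subset (Finset.Icc_subset_Icc_right hiN)
      (fun m hm hnm => by
        have h1 : i < m := by
          simp only [Finset.mem_Icc] at hm hnm; omega
        rw [if_neg (by omega), if_neg (by omega)])]
    obtain ⟨n, rfl⟩ : ∃ n, i = n + 1 := ⟨i - 1, by omega⟩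
    rw [← abel_sum π hπ0 (fun j => F (phi N x j)) (n + 1)]
    rw [Finset.sum_Icc_succ_top (by omega : 1 ≤ n + 1),
      Finset.sum_Icc_succ_top (by omega : 1 ≤ n + 1)]
    have hcongr : ∑ m ∈ Finset.Icc 1 n,
        (if m < n + 1 then π m * (F (phi N x m) - F (phi N x (m + 1)))
          else if m = n + 1 then π (n + 1) * F (phi N x (n + 1)) else 0)
        = ∑ m ∈ Finset.Icc 1 n, π m * (F (phi N x m) - F (phi N x (m + 1))) :=
      Finset.sum_congr rfl (fun m hm => by
        have hlt : m < n + 1 := by simp only [Finset.mem_Icc] at hm; omega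
        rw [if_pos hlt])
    rw [hcongr, if_neg (lt_irrefl (n + 1)), if_pos rfl]
    ring
  rw [← hDeq]
  simpa only [Vform, Finset.sum_fn] using hsum
end
end

section
/- (Theorem 1, first-stage part.) The allocation x* defined by x*_i = F⁻¹(ρ_i) − F⁻¹(ρ_{i+1}) for 1 ≤ i ≤ N − 1 and x*_N = F⁻¹(ρ_N) is nonnegative and maximizes expected social welfare: for every x ∈ ℝ^N with x ≥ 0, Σ_{i=1}^N c_i x_i − V(x) ≤ Σ_{i=1}^N c_i x*_i − V(x*), where V(x) = ∫_0^∞ min{ Σ_{i=1}^N π_i y_i : 0 ≤ y_i ≤ x_i for all i, Σ_{i=1}^N y_i = max(Σ_{i=1}^N x_i − w, 0) } f(w) dw. -/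
open MeasureTheory Finset

noncomputable section

/-- Telescoping sum over `Icc`. -/
lemma tele_aux (g : ℕ → ℝ) (k N : ℕ) (h : k ≤ N + 1) :
    ∑ i ∈ Finset.Icc k N, (g i - g (i+1)) = g k - g (N+1) := by
  rw [show Finset.Icc k N = Finset.Ico k (N+1) by rw [Finset.Ico_add_one_right_eq_Icc],
    Finset.sum_Ico_eq_sum_range]
  have := Finset.sum_range_sub' (fun j => g (k + j)) (N + 1 - k)
  simpa [Nat.add_sub_cancel' h, ← add_assoc] using this

lemma tele_aux' (g : ℕ → ℝ) (k N : ℕ) (h : k ≤ N + 1) :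
    ∑ i ∈ Finset.Icc k N, (g (i+1) - g i) = g (N+1) - g k := by
  have := tele_aux (fun j => -g j) k N h
  simp only [neg_sub_neg] at this
  linarith [this]

/-- Abel summation. -/
lemma abel_aux (N : ℕ) (c y : ℕ → ℝ) (hc0 : c 0 = 0) :
    ∑ i ∈ Finset.Icc 1 N, c i * y i
      = ∑ k ∈ Finset.Icc 1 N, (c k - c (k-1)) * ∑ i ∈ Finset.Icc k N, y i := by
  have key : ∀ k ∈ Finset.Icc 1 N, (c k - c (k-1)) * ∑ i ∈ Finset.Icc k N, y i
      = ∑ i ∈ Finset.Icc 1 N, (if k ≤ i then (c k - c (k-1)) * y i else 0) := by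
    intro k hk
    simp only [Finset.mem_Icc] at hk
    rw [Finset.mul_sum, ← Finset.sum_filter]
    congr 1
    ext i
    simp only [Finset.mem_filter, Finset.mem_Icc]
    omega
  rw [Finset.sum_congr rfl key, Finset.sum_comm]
  refine (Finset.sum_congr rfl fun i hi => ?_)
  simp only [Finset.mem_Icc] at hi
  rw [← Finset.sum_filter,
    show (Finset.Icc 1 N).filter (fun k => k ≤ i) = Finset.Icc 1 i by
      ext k; simp only [Finset.mem_filter, Finset.mem_Icc]; omega,
    ← Finset.sum_mul]
  have h1 : ∑ k ∈ Finset.Icc 1 i, (c k - c (k-1)) = c i := by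
    calc ∑ k ∈ Finset.Icc 1 i, (c k - c (k-1))
        = ∑ k ∈ Finset.Icc 1 i, ((fun j => c (j-1)) (k+1) - (fun j => c (j-1)) k) := by
          refine Finset.sum_congr rfl fun k hk => ?_
          simp only [Nat.add_sub_cancel]
      _ = c ((i+1)-1) - c (1-1) := tele_aux' (fun j => c (j-1)) 1 i (by omega)
      _ = c i := by simp [hc0]
  rw [h1]

lemma split_aux (N k : ℕ) (hk : 1 ≤ k) (hkN : k ≤ N) (z : ℕ → ℝ) :
    ∑ i ∈ Finset.Icc 1 N, z i
      = ∑ i ∈ Finset.Icc 1 (k-1), z i + ∑ i ∈ Finset.Icc k N, z i := by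
  have h := Finset.sum_Ioc_consecutive (f := z) (Nat.zero_le (k-1)) (by omega : k - 1 ≤ N)
  rw [show Finset.Icc 1 N = Finset.Ioc 0 N from Finset.Icc_add_one_left_eq_Ioc 0 N,
      show Finset.Icc 1 (k-1) = Finset.Ioc 0 (k-1) from Finset.Icc_add_one_left_eq_Ioc 0 (k-1),
      show Finset.Icc k N = Finset.Ioc (k-1) N by
        rw [← Finset.Icc_add_one_left_eq_Ioc]; congr 1; omega, h]

/-- `ρ_i = (c_i - c_{i-1})/(π_i - π_{i-1})` for `1 ≤ i ≤ N`, and `ρ_{N+1} = 0`. -/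
def rho (N : ℕ) (c π : ℕ → ℝ) (i : ℕ) : ℝ :=
  if i ≤ N then (c i - c (i - 1)) / (π i - π (i - 1)) else 0

/-- The efficient allocation: `x*_i = F⁻¹(ρ_i) - F⁻¹(ρ_{i+1})` for `1 ≤ i ≤ N-1`
and `x*_N = F⁻¹(ρ_N)`. -/
def xstar (N : ℕ) (c π : ℕ → ℝ) (Finv : ℝ → ℝ) (i : ℕ) : ℝ :=
  if i = N then Finv (rho N c π N)
  else Finv (rho N c π i) - Finv (rho N c π (i + 1))

/-- The second-stage value function
`Q(x;w) = min { Σ_i π_i y_i : 0 ≤ y_i ≤ x_i, Σ_i y_i = max(Σ_i x_i - w, 0) }`. -/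
def Q (N : ℕ) (π : ℕ → ℝ) (x : ℕ → ℝ) (w : ℝ) : ℝ :=
  sInf ((fun y : ℕ → ℝ => ∑ i ∈ Finset.Icc 1 N, π i * y i) ''
    {y : ℕ → ℝ | (∀ i ∈ Finset.Icc 1 N, 0 ≤ y i ∧ y i ≤ x i) ∧
      ∑ i ∈ Finset.Icc 1 N, y i = max (∑ i ∈ Finset.Icc 1 N, x i - w) 0})

lemma Qformula (N : ℕ) (π : ℕ → ℝ) (hπ0 : π 0 = 0)
    (hπ : ∀ i, i < N → π i < π (i + 1)) (x : ℕ → ℝ)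
    (hx : ∀ i ∈ Finset.Icc 1 N, 0 ≤ x i) (w : ℝ) (hw : 0 ≤ w) :
    Q N π x w = ∑ k ∈ Finset.Icc 1 N,
      (π k - π (k-1)) * max ((∑ i ∈ Finset.Icc k N, x i) - w) 0 := by
  set T : ℕ → ℝ := fun k => ∑ i ∈ Finset.Icc k N, x i with hT
  set g : ℕ → ℝ := fun k => max (T k - w) 0 with hg
  set y : ℕ → ℝ := fun i => g i - g (i+1) with hy
  have hTsucc : ∀ k, 1 ≤ k → k ≤ N → T k = x k + T (k+1) := by
    intro k hk1 hkN
    have : Finset.Icc k N = insert k (Finset.Icc (k+1) N) := by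
      rw [Finset.Icc_add_one_left_eq_Ioc, Finset.Ioc_insert_left hkN]
    rw [hT]; simp only
    rw [this, Finset.sum_insert (by simp)]
  have hTN1 : T (N+1) = 0 := by
    simp only [hT]; rw [Finset.Icc_eq_empty (by omega), Finset.sum_empty]
  have hgN1 : g (N+1) = 0 := by
    simp only [hg, hTN1]; simp [hw]
  have hΔ : ∀ k ∈ Finset.Icc 1 N, 0 < π k - π (k-1) := by
    intro k hk
    simp only [Finset.mem_Icc] at hk
    have := hπ (k-1) (by omega)
    rw [show k - 1 + 1 = k by omega] at this
    linarith
  have hgmem : y ∈ {y : ℕ → ℝ | (∀ i ∈ Finset.Icc 1 N, 0 ≤ y i ∧ y i ≤ x i) ∧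
      ∑ i ∈ Finset.Icc 1 N, y i = max (∑ i ∈ Finset.Icc 1 N, x i - w) 0} := by
    constructor
    · intro i hi
      simp only [Finset.mem_Icc] at hi
      have hts := hTsucc i hi.1 hi.2
      have hxi : 0 ≤ x i := hx i (by simp [Finset.mem_Icc]; omega)
      constructor
      · simp only [hy, hg, sub_nonneg]
        apply max_le_max _ le_rfl
        linarith
      · simp only [hy, hg]
        rcases le_or_gt (T i - w) 0 with h | h
        · have h2 : T (i+1) - w ≤ 0 := by linarith
          rw [max_eq_right h, max_eq_right h2]; linarith
        · rw [max_eq_left h.le]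
          rcases le_or_gt (T (i+1) - w) 0 with h2 | h2
          · rw [max_eq_right h2]; linarith
          · rw [max_eq_left h2.le]; linarith
    · have := tele_aux g 1 N (by omega)
      simp only [hy]
      rw [this, hgN1, sub_zero]
  have habel : ∀ z : ℕ → ℝ, ∑ i ∈ Finset.Icc 1 N, π i * z i
      = ∑ k ∈ Finset.Icc 1 N, (π k - π (k-1)) * ∑ i ∈ Finset.Icc k N, z i :=
    fun z => abel_aux N π z hπ0
  have hgval : ∑ i ∈ Finset.Icc 1 N, π i * y i
      = ∑ k ∈ Finset.Icc 1 N, (π k - π (k-1)) * g k := by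
    rw [habel y]
    refine Finset.sum_congr rfl fun k hk => ?_
    simp only [Finset.mem_Icc] at hk
    congr 1
    have := tele_aux g k N (by omega)
    simp only [hy]
    rw [this, hgN1, sub_zero]
  have hlb : ∀ v ∈ ((fun y : ℕ → ℝ => ∑ i ∈ Finset.Icc 1 N, π i * y i) ''
      {y : ℕ → ℝ | (∀ i ∈ Finset.Icc 1 N, 0 ≤ y i ∧ y i ≤ x i) ∧
        ∑ i ∈ Finset.Icc 1 N, y i = max (∑ i ∈ Finset.Icc 1 N, x i - w) 0}),
      ∑ k ∈ Finset.Icc 1 N, (π k - π (k-1)) * g k ≤ v := by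
    rintro v ⟨z, ⟨hz1, hz2⟩, rfl⟩
    dsimp only
    rw [habel z]
    refine Finset.sum_le_sum fun k hk => ?_
    refine mul_le_mul_of_nonneg_left ?_ (hΔ k hk).le
    simp only [Finset.mem_Icc] at hk
    have hS0 : 0 ≤ ∑ i ∈ Finset.Icc k N, z i :=
      Finset.sum_nonneg fun i hi => by
        simp only [Finset.mem_Icc] at hi
        exact (hz1 i (by simp [Finset.mem_Icc]; omega)).1
    refine max_le ?_ hS0
    have hsplz := split_aux N k hk.1 hk.2 z
    have hsplx := split_aux N k hk.1 hk.2 x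
    have hzx : ∑ i ∈ Finset.Icc 1 (k-1), z i ≤ ∑ i ∈ Finset.Icc 1 (k-1), x i :=
      Finset.sum_le_sum fun i hi => by
        simp only [Finset.mem_Icc] at hi
        exact (hz1 i (by simp [Finset.mem_Icc]; omega)).2
    have hle : ∑ i ∈ Finset.Icc 1 N, x i - w ≤ ∑ i ∈ Finset.Icc 1 N, z i :=
      le_trans (le_max_left _ _) hz2.ge
    simp only [hT]
    linarith [hle]
  have hne : ((fun y : ℕ → ℝ => ∑ i ∈ Finset.Icc 1 N, π i * y i) ''
      {y : ℕ → ℝ | (∀ i ∈ Finset.Icc 1 N, 0 ≤ y i ∧ y i ≤ x i) ∧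
        ∑ i ∈ Finset.Icc 1 N, y i = max (∑ i ∈ Finset.Icc 1 N, x i - w) 0}).Nonempty :=
    ⟨_, Set.mem_image_of_mem _ hgmem⟩
  have hbdd : BddBelow ((fun y : ℕ → ℝ => ∑ i ∈ Finset.Icc 1 N, π i * y i) ''
      {y : ℕ → ℝ | (∀ i ∈ Finset.Icc 1 N, 0 ≤ y i ∧ y i ≤ x i) ∧
        ∑ i ∈ Finset.Icc 1 N, y i = max (∑ i ∈ Finset.Icc 1 N, x i - w) 0}) :=
    ⟨_, hlb⟩
  refine le_antisymm ?_ (le_csInf hne hlb)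
  calc Q N π x w ≤ ∑ i ∈ Finset.Icc 1 N, π i * y i :=
        csInf_le hbdd (Set.mem_image_of_mem _ hgmem)
    _ = _ := hgval

def Gfun (f : ℝ → ℝ) (t : ℝ) : ℝ := ∫ w in Set.Ioi (0:ℝ), max (t - w) 0 * f w

lemma term_integrable (f : ℝ → ℝ) (hf_cont : Continuous f)
    (hf_nonneg : ∀ z, 0 ≤ f z) (hf_int : Integrable f) (t : ℝ) :
    IntegrableOn (fun w => max (t - w) 0 * f w) (Set.Ioi (0:ℝ)) := by
  refine Integrable.mono' (g := fun w => max t 0 * f w)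
    ((hf_int.integrableOn).const_mul _) ?_ ?_
  · exact (Continuous.max (by continuity) continuous_const).mul hf_cont
      |>.aestronglyMeasurable.restrict
  · refine (ae_restrict_iff' measurableSet_Ioi).2 (.of_forall fun w hw => ?_)
    simp only [Set.mem_Ioi] at hw
    rw [Real.norm_eq_abs, abs_of_nonneg (mul_nonneg (le_max_right _ _) (hf_nonneg w))]
    exact mul_le_mul_of_nonneg_right
      (max_le_max (by linarith) le_rfl) (hf_nonneg w)

lemma G_key (f : ℝ → ℝ) (hf_cont : Continuous f)
    (hf_nonneg : ∀ z, 0 ≤ f z) (hf_int : Integrable f)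
    (ρ t ts : ℝ) (hρ : (∫ w in Set.Ioo (0:ℝ) ts, f w) = ρ) :
    ρ * t - Gfun f t ≤ ρ * ts - Gfun f ts := by
  have h1 := term_integrable f hf_cont hf_nonneg hf_int t
  have h2 := term_integrable f hf_cont hf_nonneg hf_int ts
  have key : ρ * (t - ts) ≤ Gfun f t - Gfun f ts := by
    have hsub : Gfun f t - Gfun f ts
        = ∫ w in Set.Ioi (0:ℝ), (max (t - w) 0 - max (ts - w) 0) * f w := by
      rw [Gfun, Gfun, ← integral_sub h1 h2]
      congr 1; ext w; ring
    have hind : IntegrableOn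
        (fun w => Set.indicator (Set.Iio ts) (fun w => (t - ts) * f w) w)
        (Set.Ioi (0:ℝ)) :=
      ((hf_int.integrableOn).const_mul _).indicator measurableSet_Iio
    have hmono : ∫ w in Set.Ioi (0:ℝ),
          Set.indicator (Set.Iio ts) (fun w => (t - ts) * f w) w
        ≤ ∫ w in Set.Ioi (0:ℝ), (max (t - w) 0 - max (ts - w) 0) * f w := by
      refine setIntegral_mono_on hind (h1.sub h2 |>.congr ?_) measurableSet_Ioi
        fun w hw => ?_
      · exact .of_forall fun w => by simp only [Pi.sub_apply]; ring
      · by_cases hcase : w < ts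
        · rw [Set.indicator_of_mem (Set.mem_Iio.2 hcase)]
          have hmax : max (ts - w) 0 = ts - w := max_eq_left (by linarith)
          rw [hmax]
          nlinarith [hf_nonneg w, le_max_left (t-w) (0:ℝ), le_max_right (t-w) (0:ℝ)]
        · rw [Set.indicator_of_notMem (by simpa using hcase)]
          push_neg at hcase
          have hmax : max (ts - w) 0 = 0 := max_eq_right (by linarith)
          rw [hmax, sub_zero]
          exact mul_nonneg (le_max_right _ _) (hf_nonneg w)
    have hval : ∫ w in Set.Ioi (0:ℝ),
          Set.indicator (Set.Iio ts) (fun w => (t - ts) * f w) w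
        = (t - ts) * ρ := by
      rw [setIntegral_indicator measurableSet_Iio, Set.Ioi_inter_Iio,
        integral_const_mul, hρ]
    rw [hsub] at *
    linarith [hmono, hval.le]
  linarith

lemma Vformula (N : ℕ) (π : ℕ → ℝ) (hπ0 : π 0 = 0)
    (hπ : ∀ i, i < N → π i < π (i + 1)) (x : ℕ → ℝ)
    (hx : ∀ i ∈ Finset.Icc 1 N, 0 ≤ x i)
    (f : ℝ → ℝ) (hf_cont : Continuous f)
    (hf_nonneg : ∀ z, 0 ≤ f z) (hf_int : Integrable f) :
    ∫ w in Set.Ioi (0:ℝ), Q N π x w * f w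
      = ∑ k ∈ Finset.Icc 1 N, (π k - π (k-1)) * Gfun f (∑ i ∈ Finset.Icc k N, x i) := by
  rw [setIntegral_congr_fun measurableSet_Ioi
    (g := fun w => ∑ k ∈ Finset.Icc 1 N,
      (π k - π (k-1)) * (max ((∑ i ∈ Finset.Icc k N, x i) - w) 0 * f w))
    (fun w hw => by
      rw [Qformula N π hπ0 hπ x hx w (le_of_lt hw), Finset.sum_mul]
      exact Finset.sum_congr rfl fun k _ => by ring)]
  rw [integral_finset_sum _ (fun k _ =>
    ((term_integrable f hf_cont hf_nonneg hf_int _)).const_mul _)]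
  exact Finset.sum_congr rfl fun k _ => integral_const_mul _ _

/-- Theorem 1, first-stage part: `x*` is nonnegative and maximizes
expected social welfare `Σ_i c_i x_i - V(x)` over the nonnegative orthant, where
`V(x) = ∫_0^∞ Q(x;w) f(w) dw`. -/
theorem xstar_maximizes_welfare
    (N : ℕ) (hN : 2 ≤ N) (c π : ℕ → ℝ)
    (hc0 : c 0 = 0) (hπ0 : π 0 = 0)
    (hπ : ∀ i, i < N → π i < π (i + 1))
    (f F Finv : ℝ → ℝ)
    (hf_cont : Continuous f)
    (hf_zero : ∀ z : ℝ, z ≤ 0 → f z = 0)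
    (hf_pos : ∀ z : ℝ, 0 < z → 0 < f z)
    (hf_int : MeasureTheory.Integrable f)
    (hf_tot : (∫ z : ℝ, f z) = 1)
    (hF : ∀ z : ℝ, F z = ∫ w in Set.Iic z, f w)
    (hFinvF : ∀ z : ℝ, 0 ≤ z → Finv (F z) = z)
    (hFFinv : ∀ r : ℝ, 0 ≤ r → r < 1 → F (Finv r) = r)
    (hFinv_nonneg : ∀ r : ℝ, 0 ≤ r → r < 1 → 0 ≤ Finv r)
    (hρ1 : rho N c π 1 < 1)
    (hρdec : ∀ i, 1 ≤ i → i < N → rho N c π (i + 1) < rho N c π i)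
    (hρN : 0 < rho N c π N) :
    (∀ i ∈ Finset.Icc 1 N, 0 ≤ xstar N c π Finv i) ∧
    (∀ x : ℕ → ℝ, (∀ i ∈ Finset.Icc 1 N, 0 ≤ x i) →
      (∑ i ∈ Finset.Icc 1 N, c i * x i)
          - (∫ w in Set.Ioi (0:ℝ), Q N π x w * f w)
        ≤ (∑ i ∈ Finset.Icc 1 N, c i * xstar N c π Finv i)
          - (∫ w in Set.Ioi (0:ℝ), Q N π (xstar N c π Finv) w * f w)) := by
  have hf_nonneg : ∀ z, 0 ≤ f z := fun z => by
    rcases le_or_gt z 0 with h | h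
    · exact (hf_zero z h).ge
    · exact (hf_pos z h).le
  -- monotonicity of rho
  have hρmono : ∀ j k, 1 ≤ j → j ≤ k → k ≤ N → rho N c π k ≤ rho N c π j := by
    intro j k hj hjk hkN
    induction k with
    | zero => omega
    | succ k ih =>
      rcases Nat.eq_or_lt_of_le hjk with h | h
      · rw [h]
      · have hk1 : j ≤ k := by omega
        have hkN' : k ≤ N := by omega
        exact le_trans (hρdec k (by omega) (by omega)).le (ih hk1 hkN')
  have hρbound : ∀ k, 1 ≤ k → k ≤ N → 0 < rho N c π k ∧ rho N c π k < 1 := by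
    intro k h1 h2
    exact ⟨lt_of_lt_of_le hρN (hρmono k N h1 h2 le_rfl),
      lt_of_le_of_lt (hρmono 1 k le_rfl h1 h2) hρ1⟩
  have hFmono : ∀ a b : ℝ, a ≤ b → F a ≤ F b := by
    intro a b hab
    rw [hF a, hF b]
    exact setIntegral_mono_set hf_int.integrableOn
      (Filter.Eventually.of_forall fun w => hf_nonneg w)
      (HasSubset.Subset.eventuallyLE (Set.Iic_subset_Iic.2 hab))
  -- nonnegativity of xstar
  have hxstar_nonneg : ∀ i ∈ Finset.Icc 1 N, 0 ≤ xstar N c π Finv i := by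
    intro i hi
    simp only [Finset.mem_Icc] at hi
    by_cases hiN : i = N
    · rw [xstar, if_pos hiN]
      exact hFinv_nonneg _ hρN.le (hρbound N (by omega) le_rfl).2
    · rw [xstar, if_neg hiN, sub_nonneg]
      have hb1 := hρbound i hi.1 hi.2
      have hb2 := hρbound (i+1) (by omega) (by omega)
      by_contra hcon
      push_neg at hcon
      have := hFmono _ _ hcon.le
      rw [hFFinv _ hb1.1.le hb1.2, hFFinv _ hb2.1.le hb2.2] at this
      exact absurd this (not_le.2 (hρdec i hi.1 (by omega)))
  refine ⟨hxstar_nonneg, fun x hx => ?_⟩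
  -- the integral of f over Ioo 0 (Finv ρ) is ρ
  have hIoo : ∀ ts : ℝ, 0 ≤ ts → (∫ w in Set.Ioo (0:ℝ) ts, f w) = F ts := by
    intro ts hts
    rw [hF ts, ← Set.Iic_union_Ioc_eq_Iic hts,
      setIntegral_union (Set.Iic_disjoint_Ioc le_rfl) measurableSet_Ioc
        hf_int.integrableOn hf_int.integrableOn,
      setIntegral_congr_fun measurableSet_Iic
        (fun w (hw : w ∈ Set.Iic (0:ℝ)) => hf_zero w hw),
      integral_zero, zero_add, integral_Ioc_eq_integral_Ioo]
  -- key: sum over Icc k N of xstar equals Finv (rho k)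
  have hTstar : ∀ d k, 1 ≤ k → k + d = N →
      ∑ i ∈ Finset.Icc k N, xstar N c π Finv i = Finv (rho N c π k) := by
    intro d
    induction d with
    | zero =>
      intro k hk hkN
      have : k = N := by omega
      subst this
      rw [Finset.Icc_self, Finset.sum_singleton, xstar, if_pos rfl]
    | succ d ih =>
      intro k hk hkN
      have hkN' : k < N := by omega
      rw [show Finset.Icc k N = insert k (Finset.Icc (k+1) N) by
        rw [Finset.Icc_add_one_left_eq_Ioc, Finset.Ioc_insert_left hkN'.le],
        Finset.sum_insert (by simp), ih (k+1) (by omega) (by omega),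
        xstar, if_neg (by omega)]
      ring
  have hΔ : ∀ k ∈ Finset.Icc 1 N, 0 < π k - π (k-1) := by
    intro k hk
    simp only [Finset.mem_Icc] at hk
    have := hπ (k-1) (by omega)
    rw [show k - 1 + 1 = k by omega] at this
    linarith
  -- rewrite both integrals and sums
  rw [Vformula N π hπ0 hπ x hx f hf_cont hf_nonneg hf_int,
    Vformula N π hπ0 hπ _ hxstar_nonneg f hf_cont hf_nonneg hf_int,
    abel_aux N c x hc0, abel_aux N c _ hc0,
    ← Finset.sum_sub_distrib, ← Finset.sum_sub_distrib]
  refine Finset.sum_le_sum fun k hk => ?_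
  simp only [Finset.mem_Icc] at hk
  have hTs := hTstar (N - k) k hk.1 (by omega)
  rw [hTs]
  have hb := hρbound k hk.1 hk.2
  have hΔk : 0 < π k - π (k-1) := hΔ k (by simp [Finset.mem_Icc]; omega)
  have hρk : rho N c π k = (c k - c (k-1)) / (π k - π (k-1)) := by
    rw [rho, if_pos hk.2]
  have hck : c k - c (k-1) = rho N c π k * (π k - π (k-1)) := by
    rw [hρk]; field_simp
  have hts0 : 0 ≤ Finv (rho N c π k) := hFinv_nonneg _ hb.1.le hb.2
  have hρint : (∫ w in Set.Ioo (0:ℝ) (Finv (rho N c π k)), f w) = rho N c π k := by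
    rw [hIoo _ hts0, hFFinv _ hb.1.le hb.2]
  have hkey := G_key f hf_cont hf_nonneg hf_int (rho N c π k)
    (∑ i ∈ Finset.Icc k N, x i) (Finv (rho N c π k)) hρint
  rw [hck]
  nlinarith [hkey, hΔk]
end
end

section
/- (Lemma 2.) Suppose 0 = π_0 < π_1 < ⋯ < π_N, each ratio ρ_i = (c_i − c_{i−1})/(π_i − π_{i−1}) lies in (0,1), c_{N−1} < c_N, and for every 1 ≤ i ≤ N − 1 one has α_i < c_i where α_i = (c_{i+1}(π_i − π_{i−1}) + c_{i−1}(π_{i+1} − π_i))/(π_{i+1} − π_{i−1}). Then the allocation x*_i = F⁻¹(ρ_i) − F⁻¹(ρ_{i+1}) (1 ≤ i ≤ N − 1) and x*_N = F⁻¹(ρ_N) is strictly positive: x*_i > 0 for every 1 ≤ i ≤ N. -/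
open MeasureTheory Finset

noncomputable section

/-- `α_i = (c_{i+1}(π_i − π_{i−1}) + c_{i−1}(π_{i+1} − π_i))/(π_{i+1} − π_{i−1})`. -/
def alphaB (c π : ℕ → ℝ) (i : ℕ) : ℝ :=
  (c (i + 1) * (π i - π (i - 1)) + c (i - 1) * (π (i + 1) - π i))
    / (π (i + 1) - π (i - 1))

/-- Lemma 2: under the bid assumptions the efficient allocation is
strictly positive. -/
theorem xstar_pos
    (N : ℕ) (hN : 2 ≤ N) (c π : ℕ → ℝ)
    (hc0 : c 0 = 0) (hπ0 : π 0 = 0)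
    (hπ : ∀ i, i < N → π i < π (i + 1))
    (f F Finv : ℝ → ℝ)
    (hf_cont : Continuous f)
    (hf_zero : ∀ z : ℝ, z ≤ 0 → f z = 0)
    (hf_pos : ∀ z : ℝ, 0 < z → 0 < f z)
    (hf_int : MeasureTheory.Integrable f)
    (hf_tot : (∫ z : ℝ, f z) = 1)
    (hF : ∀ z : ℝ, F z = ∫ w in Set.Iic z, f w)
    (hFinvF : ∀ z : ℝ, 0 ≤ z → Finv (F z) = z)
    (hFFinv : ∀ r : ℝ, 0 ≤ r → r < 1 → F (Finv r) = r)
    (hFinv_nonneg : ∀ r : ℝ, 0 ≤ r → r < 1 → 0 ≤ Finv r)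
    (hρ : ∀ i, 1 ≤ i → i ≤ N → 0 < rho N c π i ∧ rho N c π i < 1)
    (hcN : c (N - 1) < c N)
    (hα : ∀ i, 1 ≤ i → i ≤ N - 1 → alphaB c π i < c i) :
    ∀ i ∈ Finset.Icc 1 N, 0 < xstar N c π Finv i := by
  -- f is nonnegative, hence F is monotone
  have hf_nonneg : ∀ z : ℝ, 0 ≤ f z := by
    intro z
    rcases le_or_gt z 0 with h | h
    · exact le_of_eq (hf_zero z h).symm
    · exact le_of_lt (hf_pos z h)
  have hFmono : ∀ a b : ℝ, a ≤ b → F a ≤ F b := by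
    intro a b hab
    rw [hF a, hF b]
    apply MeasureTheory.setIntegral_mono_set hf_int.integrableOn
    · exact Filter.Eventually.of_forall fun z => hf_nonneg z
    · exact Filter.Eventually.of_forall (Set.Iic_subset_Iic.mpr hab)
  have hF0 : F 0 = 0 := by
    rw [hF 0, MeasureTheory.setIntegral_congr_fun measurableSet_Iic
      (fun z hz => hf_zero z hz)]
    simp
  -- Finv is strictly monotone on [0,1)
  have hFinv_mono : ∀ r s : ℝ, 0 ≤ r → r < s → s < 1 → Finv r < Finv s := by
    intro r s hr hrs hs
    by_contra h
    push_neg at h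
    have := hFmono _ _ h
    rw [hFFinv r hr (hrs.trans hs), hFFinv s (hr.trans hrs.le) hs] at this
    linarith
  -- Finv of a positive rho is positive
  have hFinv_pos : ∀ r : ℝ, 0 < r → r < 1 → 0 < Finv r := by
    intro r hr hr1
    rcases (hFinv_nonneg r hr.le hr1).eq_or_lt with h | h
    · exfalso
      have := hFFinv r hr.le hr1
      rw [← h, hF0] at this
      linarith
    · exact h
  -- rho is strictly decreasing on 1..N
  have hρdec : ∀ i, 1 ≤ i → i ≤ N - 1 → rho N c π (i + 1) < rho N c π i := by
    intro i hi1 hiN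
    have hiN' : i ≤ N := by omega
    have hi1N : i + 1 ≤ N := by omega
    have e : i - 1 + 1 = i := by omega
    have h01 : π (i - 1) < π i := by
      have := hπ (i - 1) (by omega); rwa [e] at this
    have h12 : π i < π (i + 1) := hπ i (by omega)
    have hαi := hα i hi1 hiN
    unfold alphaB at hαi
    rw [div_lt_iff₀ (by linarith : (0:ℝ) < π (i + 1) - π (i - 1))] at hαi
    unfold rho
    rw [if_pos hi1N, if_pos hiN']
    have e2 : i + 1 - 1 = i := by omega
    rw [e2]
    rw [div_lt_div_iff₀ (by linarith) (by linarith)]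
    nlinarith
  intro i hi
  rw [Finset.mem_Icc] at hi
  obtain ⟨hi1, hiN⟩ := hi
  rcases eq_or_lt_of_le hiN with rfl | hilt
  · -- i = N : Finv (rho N) > 0
    unfold xstar
    rw [if_pos rfl]
    obtain ⟨h1, h2⟩ := hρ i hi1 le_rfl
    exact hFinv_pos _ h1 h2
  · unfold xstar
    rw [if_neg (by omega)]
    obtain ⟨hp1, hp2⟩ := hρ (i + 1) (by omega) (by omega)
    obtain ⟨hq1, hq2⟩ := hρ i hi1 hiN
    have := hρdec i hi1 (by omega)
    linarith [hFinv_mono _ _ hp1.le this hq2]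
end
end

section
/- (Evaluation of the Myerson payment integral, Theorem 2.) Under the stated bid assumptions, for each 1 ≤ i ≤ N − 1, ∫_{α_i}^{c_i} [ F⁻¹((s − c_{i−1})/(π_i − π_{i−1})) − F⁻¹((c_{i+1} − s)/(π_{i+1} − π_i)) ] ds = (π_{i+1} − π_i) G(F⁻¹(ρ_{i+1})) + (π_i − π_{i−1}) G(F⁻¹(ρ_i)) − (π_{i+1} − π_{i−1}) G(F⁻¹(ρ^cvx_i)), where α_i = (c_{i+1}(π_i − π_{i−1}) + c_{i−1}(π_{i+1} − π_i))/(π_{i+1} − π_{i−1}) and ρ^cvx_i = (c_{i+1} − c_{i−1})/(π_{i+1} − π_{i−1}); and ∫_{c_{N−1}}^{c_N} F⁻¹((s − c_{N−1})/(π_N − π_{N−1})) ds = (π_N − π_{N−1}) G(F⁻¹(ρ_N)). Consequently the Myerson payment c_i x*_i − ∫_{α_i}^{c_i} x*_i(s, c_{−i}) ds equals p*_i, and c_N x*_N − ∫_{c_{N−1}}^{c_N} x*_N(s, c_{−N}) ds equals p*_N. -/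
open MeasureTheory Finset

noncomputable section

/-- `ρ^cvx_i = (c_{i+1} - c_{i-1})/(π_{i+1} - π_{i-1})`. -/
def rhocvx (c π : ℕ → ℝ) (i : ℕ) : ℝ :=
  (c (i + 1) - c (i - 1)) / (π (i + 1) - π (i - 1))

/-- The Myerson payments `p*_i`. -/
def pstar (N : ℕ) (c π : ℕ → ℝ) (Finv G : ℝ → ℝ) (i : ℕ) : ℝ :=
  if i = N then
    c N * xstar N c π Finv N - (π N - π (N - 1)) * G (Finv (rho N c π N))
  else
    c i * xstar N c π Finv i
      + (π (i + 1) - π (i - 1)) * G (Finv (rhocvx c π i))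
      - (π (i + 1) - π i) * G (Finv (rho N c π (i + 1)))
      - (π i - π (i - 1)) * G (Finv (rho N c π i))

section MyersonAux

set_option linter.unusedVariables false

lemma myersonAux_F_prim {f F : ℝ → ℝ} (hf_int : Integrable f)
    (hf_zero : ∀ z : ℝ, z ≤ 0 → f z = 0)
    (hF : ∀ z : ℝ, F z = ∫ w in Set.Iic z, f w) :
    ∀ z, F z = ∫ w in (0:ℝ)..z, f w := by
  intro z
  have h0 : (∫ w in Set.Iic (0:ℝ), f w) = 0 := by
    rw [MeasureTheory.setIntegral_congr_fun measurableSet_Iic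
      (fun x hx => hf_zero x hx)]
    simp
  have h := intervalIntegral.integral_Iic_sub_Iic (μ := volume)
    (hf_int.integrableOn) (hf_int.integrableOn) (a := (0:ℝ)) (b := z)
  rw [hF z, ← h, h0, sub_zero]

lemma myersonAux_F_deriv {f F : ℝ → ℝ} (hf_cont : Continuous f) (hf_int : Integrable f)
    (hf_zero : ∀ z : ℝ, z ≤ 0 → f z = 0)
    (hF : ∀ z : ℝ, F z = ∫ w in Set.Iic z, f w) :
    ∀ x, HasDerivAt F (f x) x := by
  intro x
  have h := (hf_cont.integral_hasStrictDerivAt 0 x).hasDerivAt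
  have he : F = fun z => ∫ w in (0:ℝ)..z, f w :=
    funext (myersonAux_F_prim hf_int hf_zero hF)
  rw [he]; exact h

lemma myersonAux_f_nonneg {f : ℝ → ℝ} (hf_zero : ∀ z : ℝ, z ≤ 0 → f z = 0)
    (hf_pos : ∀ z : ℝ, 0 < z → 0 < f z) : ∀ z, 0 ≤ f z := by
  intro z
  rcases le_or_gt z 0 with h | h
  · simp [hf_zero z h]
  · exact (hf_pos z h).le

lemma myersonAux_F_strictMono {f F : ℝ → ℝ} (hf_cont : Continuous f) (hf_int : Integrable f)
    (hf_zero : ∀ z : ℝ, z ≤ 0 → f z = 0) (hf_pos : ∀ z : ℝ, 0 < z → 0 < f z)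
    (hF : ∀ z : ℝ, F z = ∫ w in Set.Iic z, f w) :
    StrictMonoOn F (Set.Ici 0) := by
  intro x hx y _ hxy
  have hprim := myersonAux_F_prim hf_int hf_zero hF
  have hadd := intervalIntegral.integral_add_adjacent_intervals
    (hf_int.intervalIntegrable (a := 0) (b := x)) (hf_int.intervalIntegrable (a := x) (b := y))
  have hpos : 0 < ∫ w in x..y, f w :=
    intervalIntegral.intervalIntegral_pos_of_pos_on (hf_int.intervalIntegrable)
      (fun t ht => hf_pos t (lt_of_le_of_lt hx ht.1)) hxy
  rw [hprim x, hprim y, ← hadd]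
  linarith

lemma myersonAux_F_zero {f F : ℝ → ℝ} (hf_zero : ∀ z : ℝ, z ≤ 0 → f z = 0)
    (hF : ∀ z : ℝ, F z = ∫ w in Set.Iic z, f w) : F 0 = 0 := by
  rw [hF, MeasureTheory.setIntegral_congr_fun measurableSet_Iic
      (fun x hx => hf_zero x hx)]
  simp

lemma myersonAux_F_lt_one {f F : ℝ → ℝ} (hf_cont : Continuous f) (hf_int : Integrable f)
    (hf_zero : ∀ z : ℝ, z ≤ 0 → f z = 0) (hf_pos : ∀ z : ℝ, 0 < z → 0 < f z)
    (hf_tot : (∫ z : ℝ, f z) = 1)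
    (hF : ∀ z : ℝ, F z = ∫ w in Set.Iic z, f w) :
    ∀ z : ℝ, 0 ≤ z → F z < 1 := by
  intro z hz
  have h1 : F z < F (z + 1) :=
    myersonAux_F_strictMono hf_cont hf_int hf_zero hf_pos hF hz
      (by simp; linarith) (by linarith)
  have h2 : F (z + 1) ≤ 1 := by
    rw [hF, ← hf_tot]
    exact setIntegral_le_integral hf_int
      (Filter.Eventually.of_forall (myersonAux_f_nonneg hf_zero hf_pos))
  linarith

lemma myersonAux_F_nonneg {f F : ℝ → ℝ} (hf_zero : ∀ z : ℝ, z ≤ 0 → f z = 0)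
    (hf_pos : ∀ z : ℝ, 0 < z → 0 < f z)
    (hF : ∀ z : ℝ, F z = ∫ w in Set.Iic z, f w) :
    ∀ z : ℝ, 0 ≤ F z := by
  intro z
  rw [hF]
  exact setIntegral_nonneg measurableSet_Iic
    (fun x _ => myersonAux_f_nonneg hf_zero hf_pos x)

variable {F Finv : ℝ → ℝ}
  (hFmono : StrictMonoOn F (Set.Ici 0))
  (hF0 : F 0 = 0)
  (hFnn : ∀ z : ℝ, 0 ≤ F z)
  (hFlt : ∀ z : ℝ, 0 ≤ z → F z < 1)
  (hFinvF : ∀ z : ℝ, 0 ≤ z → Finv (F z) = z)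
  (hFFinv : ∀ r : ℝ, 0 ≤ r → r < 1 → F (Finv r) = r)
  (hFinv_nonneg : ∀ r : ℝ, 0 ≤ r → r < 1 → 0 ≤ Finv r)
include hFmono hF0 hFnn hFlt hFinvF hFFinv hFinv_nonneg

lemma myersonAux_Finv_strictMono : StrictMonoOn Finv (Set.Ico 0 1) := by
  intro r hr s hs hrs
  by_contra hle
  push_neg at hle
  have h1 : F (Finv s) ≤ F (Finv r) := by
    rcases eq_or_lt_of_le hle with h | h
    · rw [h]
    · exact (hFmono (Set.mem_Ici.2 (hFinv_nonneg s hs.1 hs.2))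
        (Set.mem_Ici.2 (hFinv_nonneg r hr.1 hr.2)) h).le
  rw [hFFinv r hr.1 hr.2, hFFinv s hs.1 hs.2] at h1
  linarith

lemma myersonAux_Finv_image_superset : Set.Ici (0:ℝ) ⊆ Finv '' Set.Ico 0 1 := by
  intro z hz
  exact ⟨F z, ⟨hFnn z, hFlt z hz⟩, hFinvF z hz⟩

lemma myersonAux_Finv_zero : Finv 0 = 0 := by
  have := hFinvF 0 le_rfl
  rwa [hF0] at this

lemma myersonAux_Finv_pos : ∀ r : ℝ, 0 < r → r < 1 → 0 < Finv r := by
  intro r hr0 hr1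
  rcases eq_or_lt_of_le (hFinv_nonneg r hr0.le hr1) with h | h
  · exfalso
    have := hFFinv r hr0.le hr1
    rw [← h, hF0] at this
    linarith
  · exact h

lemma myersonAux_Finv_contOn : ∀ b : ℝ, b < 1 → ContinuousOn Finv (Set.Icc 0 b) := by
  intro b hb r hr
  have hsm := myersonAux_Finv_strictMono hFmono hF0 hFnn hFlt hFinvF hFFinv hFinv_nonneg
  have himg := myersonAux_Finv_image_superset (F := F) hFmono hF0 hFnn hFlt hFinvF hFFinv
    hFinv_nonneg
  rcases eq_or_lt_of_le hr.1 with h0 | h0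
  · have hcw : ContinuousWithinAt Finv (Set.Ici 0) 0 := by
      apply hsm.continuousWithinAt_right_of_image_mem_nhdsWithin
      · exact Ico_mem_nhdsGE_of_mem ⟨le_rfl, zero_lt_one⟩
      · rw [myersonAux_Finv_zero hFmono hF0 hFnn hFlt hFinvF hFFinv hFinv_nonneg]
        exact Filter.mem_of_superset self_mem_nhdsWithin himg
    rw [← h0]
    exact hcw.mono (Set.Icc_subset_Ici_self)
  · have hca : ContinuousAt Finv r := by
      apply hsm.continuousAt_of_image_mem_nhds
      · exact Filter.mem_of_superset (Ioo_mem_nhds h0 (lt_of_le_of_lt hr.2 hb))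
          Set.Ioo_subset_Ico_self
      · exact Filter.mem_of_superset
          (Ici_mem_nhds (myersonAux_Finv_pos hFmono hF0 hFnn hFlt hFinvF hFFinv hFinv_nonneg
            r h0 (lt_of_le_of_lt hr.2 hb))) himg
    exact hca.continuousWithinAt

end MyersonAux

lemma myersonAux_key_int {f F Finv G : ℝ → ℝ}
    (hf_cont : Continuous f) (hf_int : Integrable f)
    (hf_zero : ∀ z : ℝ, z ≤ 0 → f z = 0) (hf_pos : ∀ z : ℝ, 0 < z → 0 < f z)
    (hf_tot : (∫ z : ℝ, f z) = 1)
    (hF : ∀ z : ℝ, F z = ∫ w in Set.Iic z, f w)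
    (hG : ∀ z : ℝ, G z = ∫ w in (0:ℝ)..z, w * f w)
    (hFinvF : ∀ z : ℝ, 0 ≤ z → Finv (F z) = z)
    (hFFinv : ∀ r : ℝ, 0 ≤ r → r < 1 → F (Finv r) = r)
    (hFinv_nonneg : ∀ r : ℝ, 0 ≤ r → r < 1 → 0 ≤ Finv r) :
    ∀ r : ℝ, 0 ≤ r → r < 1 → (∫ u in (0:ℝ)..r, Finv u) = G (Finv r) := by
  have hFmono := myersonAux_F_strictMono hf_cont hf_int hf_zero hf_pos hF
  have hF0 := myersonAux_F_zero hf_zero hF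
  have hFnn := myersonAux_F_nonneg hf_zero hf_pos hF
  have hFlt := myersonAux_F_lt_one hf_cont hf_int hf_zero hf_pos hf_tot hF
  have hcont := myersonAux_Finv_contOn hFmono hF0 hFnn hFlt hFinvF hFFinv hFinv_nonneg
  intro r hr0 hr1
  set z := Finv r with hzdef
  have hz : 0 ≤ z := hFinv_nonneg r hr0 hr1
  have himg : F '' Set.uIcc 0 z ⊆ Set.Icc 0 r := by
    rw [Set.uIcc_of_le hz]
    rintro _ ⟨x, hx, rfl⟩
    refine ⟨hFnn x, ?_⟩
    rcases eq_or_lt_of_le hx.2 with h | h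
    · rw [h, hFFinv r hr0 hr1]
    · rw [← hFFinv r hr0 hr1]
      exact (hFmono (Set.mem_Ici.2 hx.1) (Set.mem_Ici.2 hz) h).le
  have hsub := intervalIntegral.integral_comp_smul_deriv' (a := (0:ℝ)) (b := z)
      (f := F) (f' := f) (g := Finv)
      (fun x _ => myersonAux_F_deriv hf_cont hf_int hf_zero hF x)
      hf_cont.continuousOn ((hcont r hr1).mono himg)
  have hL : (∫ x in (0:ℝ)..z, f x • (Finv ∘ F) x) = ∫ x in (0:ℝ)..z, x * f x := by
    apply intervalIntegral.integral_congr
    intro x hx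
    rw [Set.uIcc_of_le hz] at hx
    simp [Function.comp, hFinvF x hx.1, smul_eq_mul, mul_comm]
  rw [hL, hF0, hFFinv r hr0 hr1, ← hG z] at hsub
  exact hsub.symm

lemma myersonAux_key_int' {f F Finv G : ℝ → ℝ}
    (hf_cont : Continuous f) (hf_int : Integrable f)
    (hf_zero : ∀ z : ℝ, z ≤ 0 → f z = 0) (hf_pos : ∀ z : ℝ, 0 < z → 0 < f z)
    (hf_tot : (∫ z : ℝ, f z) = 1)
    (hF : ∀ z : ℝ, F z = ∫ w in Set.Iic z, f w)
    (hG : ∀ z : ℝ, G z = ∫ w in (0:ℝ)..z, w * f w)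
    (hFinvF : ∀ z : ℝ, 0 ≤ z → Finv (F z) = z)
    (hFFinv : ∀ r : ℝ, 0 ≤ r → r < 1 → F (Finv r) = r)
    (hFinv_nonneg : ∀ r : ℝ, 0 ≤ r → r < 1 → 0 ≤ Finv r) :
    ∀ x y : ℝ, 0 ≤ x → x < 1 → 0 ≤ y → y < 1 →
      (∫ u in x..y, Finv u) = G (Finv y) - G (Finv x) := by
  have hFmono := myersonAux_F_strictMono hf_cont hf_int hf_zero hf_pos hF
  have hF0 := myersonAux_F_zero hf_zero hF
  have hFnn := myersonAux_F_nonneg hf_zero hf_pos hF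
  have hFlt := myersonAux_F_lt_one hf_cont hf_int hf_zero hf_pos hf_tot hF
  have hcont := myersonAux_Finv_contOn hFmono hF0 hFnn hFlt hFinvF hFFinv hFinv_nonneg
  have hII : ∀ p q : ℝ, 0 ≤ p → p < 1 → 0 ≤ q → q < 1 →
      IntervalIntegrable Finv volume p q := by
    intro p q hp0 hp1 hq0 hq1
    apply ContinuousOn.intervalIntegrable
    refine (hcont (max p q) (max_lt hp1 hq1)).mono ?_
    exact Set.uIcc_subset_Icc ⟨hp0, le_max_left _ _⟩ ⟨hq0, le_max_right _ _⟩
  intro x y hx0 hx1 hy0 hy1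
  have hadd := intervalIntegral.integral_add_adjacent_intervals
    (hII 0 x le_rfl zero_lt_one hx0 hx1) (hII x y hx0 hx1 hy0 hy1)
  have h1 := myersonAux_key_int hf_cont hf_int hf_zero hf_pos hf_tot hF hG hFinvF hFFinv
    hFinv_nonneg x hx0 hx1
  have h2 := myersonAux_key_int hf_cont hf_int hf_zero hf_pos hf_tot hF hG hFinvF hFFinv
    hFinv_nonneg y hy0 hy1
  linarith

set_option maxHeartbeats 1600000 in
/-- evaluation of the Myerson payment integrals (Theorem 2). -/
theorem myerson_payment_integral
    (N : ℕ) (hN : 2 ≤ N) (c π : ℕ → ℝ)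
    (hc0 : c 0 = 0) (hπ0 : π 0 = 0)
    (hπ : ∀ j, j < N → π j < π (j + 1))
    (f F Finv G : ℝ → ℝ)
    (hf_cont : Continuous f)
    (hf_zero : ∀ z : ℝ, z ≤ 0 → f z = 0)
    (hf_pos : ∀ z : ℝ, 0 < z → 0 < f z)
    (hf_int : MeasureTheory.Integrable f)
    (hf_tot : (∫ z : ℝ, f z) = 1)
    (hF : ∀ z : ℝ, F z = ∫ w in Set.Iic z, f w)
    (hG : ∀ z : ℝ, G z = ∫ w in (0:ℝ)..z, w * f w)
    (hFinvF : ∀ z : ℝ, 0 ≤ z → Finv (F z) = z)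
    (hFFinv : ∀ r : ℝ, 0 ≤ r → r < 1 → F (Finv r) = r)
    (hFinv_nonneg : ∀ r : ℝ, 0 ≤ r → r < 1 → 0 ≤ Finv r)
    (hρ1 : rho N c π 1 < 1)
    (hρdec : ∀ i, 1 ≤ i → i < N → rho N c π (i + 1) < rho N c π i)
    (hρN : 0 < rho N c π N) :
    (∀ i, 1 ≤ i → i + 1 ≤ N →
      ((∫ s in (alphaB c π i)..(c i),
          (Finv ((s - c (i - 1)) / (π i - π (i - 1)))
            - Finv ((c (i + 1) - s) / (π (i + 1) - π i))))
        = (π (i + 1) - π i) * G (Finv (rho N c π (i + 1)))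
          + (π i - π (i - 1)) * G (Finv (rho N c π i))
          - (π (i + 1) - π (i - 1)) * G (Finv (rhocvx c π i))) ∧
      c i * xstar N c π Finv i
          - (∫ s in (alphaB c π i)..(c i),
              (Finv ((s - c (i - 1)) / (π i - π (i - 1)))
                - Finv ((c (i + 1) - s) / (π (i + 1) - π i))))
        = pstar N c π Finv G i) ∧
    ((∫ s in (c (N - 1))..(c N), Finv ((s - c (N - 1)) / (π N - π (N - 1))))
        = (π N - π (N - 1)) * G (Finv (rho N c π N))) ∧
    c N * xstar N c π Finv N
        - (∫ s in (c (N - 1))..(c N), Finv ((s - c (N - 1)) / (π N - π (N - 1))))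
      = pstar N c π Finv G N := by
  have hmono : ∀ k : ℕ, k ≤ N → ∀ j : ℕ, 1 ≤ j → j ≤ k → rho N c π k ≤ rho N c π j := by
    intro k
    induction k with
    | zero => intro _ j hj hjk; omega
    | succ k ih =>
      intro hk j hj hjk
      rcases Nat.lt_or_ge j (k + 1) with h | h
      · have h1 : rho N c π (k + 1) < rho N c π k := hρdec k (by omega) (by omega)
        exact le_trans h1.le (ih (by omega) j hj (by omega))
      · have hjeq : j = k + 1 := by omega
        rw [hjeq]
  have hpos : ∀ j : ℕ, 1 ≤ j → j ≤ N → 0 < rho N c π j := fun j hj hjN =>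
    lt_of_lt_of_le hρN (hmono N le_rfl j hj hjN)
  have hlt1 : ∀ j : ℕ, 1 ≤ j → j ≤ N → rho N c π j < 1 := fun j hj hjN =>
    lt_of_le_of_lt (hmono j hjN 1 le_rfl hj) hρ1
  have hkey := myersonAux_key_int hf_cont hf_int hf_zero hf_pos hf_tot hF hG hFinvF hFFinv
    hFinv_nonneg
  have hdiff := myersonAux_key_int' hf_cont hf_int hf_zero hf_pos hf_tot hF hG hFinvF hFFinv
    hFinv_nonneg
  have hcont := myersonAux_Finv_contOn
    (myersonAux_F_strictMono hf_cont hf_int hf_zero hf_pos hF)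
    (myersonAux_F_zero hf_zero hF)
    (myersonAux_F_nonneg hf_zero hf_pos hF)
    (myersonAux_F_lt_one hf_cont hf_int hf_zero hf_pos hf_tot hF)
    hFinvF hFFinv hFinv_nonneg
  -- the `N` integral
  have hπN : π (N - 1) < π N := by
    have h := hπ (N - 1) (by omega)
    rwa [Nat.sub_add_cancel (by omega : 1 ≤ N)] at h
  have hΔN : (0:ℝ) < π N - π (N - 1) := sub_pos.2 hπN
  have hρNdef : rho N c π N = (c N - c (N - 1)) / (π N - π (N - 1)) := if_pos le_rfl
  have hBint : (∫ s in (c (N - 1))..(c N), Finv ((s - c (N - 1)) / (π N - π (N - 1))))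
      = (π N - π (N - 1)) * G (Finv (rho N c π N)) := by
    have h : (∫ s in (c (N - 1))..(c N), Finv ((s - c (N - 1)) / (π N - π (N - 1))))
        = ∫ s in (c (N - 1))..(c N),
            Finv (s / (π N - π (N - 1)) - c (N - 1) / (π N - π (N - 1))) := by
      simp only [sub_div]
    rw [h, intervalIntegral.integral_comp_div_sub Finv hΔN.ne' _]
    have e1 : c (N - 1) / (π N - π (N - 1)) - c (N - 1) / (π N - π (N - 1)) = 0 := by ring
    have e2 : c N / (π N - π (N - 1)) - c (N - 1) / (π N - π (N - 1)) = rho N c π N := by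
      rw [hρNdef]; ring
    rw [e1, e2, hkey _ (hpos N (by omega) le_rfl).le (hlt1 N (by omega) le_rfl), smul_eq_mul]
  refine ⟨?_, hBint, ?_⟩
  · -- the `1 ≤ i ≤ N - 1` cases
    intro i hi hiN
    have hiN' : i < N := by omega
    have hπ1 : π (i - 1) < π i := by
      have h := hπ (i - 1) (by omega)
      rwa [Nat.sub_add_cancel hi] at h
    have hπ2 : π i < π (i + 1) := hπ i hiN'
    have hΔ1 : (0:ℝ) < π i - π (i - 1) := sub_pos.2 hπ1
    have hΔ2 : (0:ℝ) < π (i + 1) - π i := sub_pos.2 hπ2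
    have hΔ12 : (0:ℝ) < π (i + 1) - π (i - 1) := by linarith
    have hne12 : π (i + 1) - π (i - 1) ≠ 0 := hΔ12.ne'
    set r1 := rho N c π i with hr1def
    set r2 := rho N c π (i + 1) with hr2def
    set rc := rhocvx c π i with hrcdef
    have hρi : r1 = (c i - c (i - 1)) / (π i - π (i - 1)) := if_pos (by omega)
    have hρi1 : r2 = (c (i + 1) - c i) / (π (i + 1) - π i) := by
      rw [hr2def]
      simp only [rho, if_pos (show i + 1 ≤ N by omega), Nat.add_sub_cancel]
    have h21 : r2 < r1 := hρdec i hi hiN'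
    have h1lt : r1 < 1 := hlt1 i hi (by omega)
    have h2pos : 0 < r2 := hpos (i + 1) (by omega) hiN
    have h1pos : 0 < r1 := lt_trans h2pos h21
    have h2lt : r2 < 1 := hlt1 (i + 1) (by omega) hiN
    have hci : c i = c (i - 1) + (π i - π (i - 1)) * r1 := by
      rw [hρi]; field_simp; ring
    have hci' : c i = c (i + 1) - (π (i + 1) - π i) * r2 := by
      rw [hρi1]; field_simp; ring
    have hnum : c (i + 1) - c (i - 1) = (π i - π (i - 1)) * r1 + (π (i + 1) - π i) * r2 := by
      linarith
    have hrc : rc = ((π i - π (i - 1)) * r1 + (π (i + 1) - π i) * r2)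
        / (π (i + 1) - π (i - 1)) := by
      rw [hrcdef]
      simp only [rhocvx]
      rw [hnum]
    have hc2 : r2 < rc := by
      rw [hrc, lt_div_iff₀ hΔ12]
      have h := mul_lt_mul_of_pos_left h21 hΔ1
      linarith only [h]
    have hc1 : rc < r1 := by
      rw [hrc, div_lt_iff₀ hΔ12]
      have h := mul_lt_mul_of_pos_left h21 hΔ2
      linarith only [h]
    have hrcpos : 0 < rc := lt_trans h2pos hc2
    have hrclt1 : rc < 1 := lt_trans hc1 h1lt
    have hα : alphaB c π i = c (i - 1) + (π i - π (i - 1)) * rc := by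
      rw [hrcdef]
      simp only [alphaB, rhocvx]
      field_simp
      ring
    have hα' : alphaB c π i = c (i + 1) - (π (i + 1) - π i) * rc := by
      rw [hrcdef]
      simp only [alphaB, rhocvx]
      field_simp
      ring
    have hαci : alphaB c π i < c i := by
      have h := mul_lt_mul_of_pos_left hc1 hΔ1
      linarith only [hα, hci, h]
    -- integrability of the two pieces
    have hcg1 : ContinuousOn (fun s => Finv ((s - c (i - 1)) / (π i - π (i - 1))))
        (Set.uIcc (alphaB c π i) (c i)) := by
      apply (hcont r1 h1lt).comp
        (((continuous_id.sub continuous_const).div_const _).continuousOn)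
      rw [Set.uIcc_of_le hαci.le]
      intro s hs
      simp only [Set.mem_Icc, id_eq, Pi.sub_apply] at hs ⊢
      constructor
      · apply div_nonneg _ hΔ1.le
        have h := mul_nonneg hΔ1.le hrcpos.le
        linarith only [hs.1, hα, h]
      · rw [div_le_iff₀ hΔ1]
        linarith only [hs.2, hci]
    have hcg2 : ContinuousOn (fun s => Finv ((c (i + 1) - s) / (π (i + 1) - π i)))
        (Set.uIcc (alphaB c π i) (c i)) := by
      apply (hcont rc hrclt1).comp
        (((continuous_const.sub continuous_id).div_const _).continuousOn)
      rw [Set.uIcc_of_le hαci.le]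
      intro s hs
      simp only [Set.mem_Icc, id_eq, Pi.sub_apply] at hs ⊢
      constructor
      · apply div_nonneg _ hΔ2.le
        have h := mul_nonneg hΔ2.le h2pos.le
        linarith only [hs.2, hci', h]
      · rw [div_le_iff₀ hΔ2]
        linarith only [hs.1, hα']
    have hII1 : IntervalIntegrable (fun s => Finv ((s - c (i - 1)) / (π i - π (i - 1))))
        volume (alphaB c π i) (c i) := hcg1.intervalIntegrable
    have hII2 : IntervalIntegrable (fun s => Finv ((c (i + 1) - s) / (π (i + 1) - π i)))
        volume (alphaB c π i) (c i) := hcg2.intervalIntegrable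
    have hsplit := intervalIntegral.integral_sub hII1 hII2
    have hI1 : (∫ s in (alphaB c π i)..(c i), Finv ((s - c (i - 1)) / (π i - π (i - 1))))
        = (π i - π (i - 1)) * (G (Finv r1) - G (Finv rc)) := by
      have h : (∫ s in (alphaB c π i)..(c i), Finv ((s - c (i - 1)) / (π i - π (i - 1))))
          = ∫ s in (alphaB c π i)..(c i),
              Finv (s / (π i - π (i - 1)) - c (i - 1) / (π i - π (i - 1))) := by
        simp only [sub_div]
      rw [h, intervalIntegral.integral_comp_div_sub Finv hΔ1.ne' _]
      have e1 : alphaB c π i / (π i - π (i - 1)) - c (i - 1) / (π i - π (i - 1)) = rc := by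
        rw [hα]; field_simp; ring
      have e2 : c i / (π i - π (i - 1)) - c (i - 1) / (π i - π (i - 1)) = r1 := by
        rw [hρi]; ring
      rw [e1, e2, hdiff rc r1 hrcpos.le hrclt1 h1pos.le h1lt, smul_eq_mul]
    have hI2 : (∫ s in (alphaB c π i)..(c i), Finv ((c (i + 1) - s) / (π (i + 1) - π i)))
        = (π (i + 1) - π i) * (G (Finv rc) - G (Finv r2)) := by
      have h : (∫ s in (alphaB c π i)..(c i), Finv ((c (i + 1) - s) / (π (i + 1) - π i)))
          = ∫ s in (alphaB c π i)..(c i),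
              Finv (c (i + 1) / (π (i + 1) - π i) - s / (π (i + 1) - π i)) := by
        simp only [sub_div]
      rw [h, intervalIntegral.integral_comp_sub_div Finv hΔ2.ne' _]
      have e1 : c (i + 1) / (π (i + 1) - π i) - c i / (π (i + 1) - π i) = r2 := by
        rw [hρi1]; ring
      have e2 : c (i + 1) / (π (i + 1) - π i) - alphaB c π i / (π (i + 1) - π i) = rc := by
        rw [hα']; field_simp; ring
      rw [e1, e2, hdiff r2 rc h2pos.le h2lt hrcpos.le hrclt1, smul_eq_mul]
    have hIfull : (∫ s in (alphaB c π i)..(c i),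
        (Finv ((s - c (i - 1)) / (π i - π (i - 1)))
          - Finv ((c (i + 1) - s) / (π (i + 1) - π i))))
        = (π (i + 1) - π i) * G (Finv r2)
          + (π i - π (i - 1)) * G (Finv r1)
          - (π (i + 1) - π (i - 1)) * G (Finv rc) := by
      rw [hsplit, hI1, hI2]
      ring
    refine ⟨hIfull, ?_⟩
    have hxne : i ≠ N := by omega
    rw [hIfull]
    simp only [pstar, xstar, if_neg hxne]
    ring
  · -- the `N` payment
    rw [hBint]
    simp only [pstar, xstar, eq_self_iff_true, if_true]
end
end

section
/- (Theorem 2, incentive compatibility.) Fix 1 ≤ i ≤ N − 1 and the other bids, with 0 = π_0 < π_1 < ⋯ < π_N. For s in the admissible set I_i = { s : 0 < (c_{i+1} − s)/(π_{i+1} − π_i) < (s − c_{i−1})/(π_i − π_{i−1}) < 1 }, define x̂_i(s) = F⁻¹((s − c_{i−1})/(π_i − π_{i−1})) − F⁻¹((c_{i+1} − s)/(π_{i+1} − π_i)) and p̂_i(s) = s·x̂_i(s) + (π_{i+1} − π_{i−1})G(F⁻¹(ρ^cvx_i)) − (π_{i+1} − π_i)G(F⁻¹((c_{i+1} − s)/(π_{i+1}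 − π_i))) − (π_i − π_{i−1})G(F⁻¹((s − c_{i−1})/(π_i − π_{i−1}))), where ρ^cvx_i = (c_{i+1} − c_{i−1})/(π_{i+1} − π_{i−1}). If the true value c_i lies in I_i, then for every s ∈ I_i the LSE's utility satisfies c_i·x̂_i(s) − p̂_i(s) ≤ c_i·x̂_i(c_i) − p̂_i(c_i); i.e., truthful bidding maximizes LSE i's utility regardless of the other bids. The analogous statement holds for i = N with x̂_N(s) = F⁻¹((s − c_{N−1})/(π_N − π_{N−1})) and p̂_N(s) = s·x̂_N(s) − (π_N − π_{N−1})G(F⁻¹((s − c_{N−1})/(π_N − π_{N−1}))) on {s : 0 < (s − c_{N−1})/(π_N − π_{N−1}) < 1}. -/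
open MeasureTheory Finset

noncomputable section

private lemma key_ineq (f F G : ℝ → ℝ) (hf_nonneg : ∀ z, 0 ≤ f z)
    (hf_cont : Continuous f) (hf_int : MeasureTheory.Integrable f)
    (hF : ∀ z : ℝ, F z = ∫ w in Set.Iic z, f w)
    (hG : ∀ z : ℝ, G z = ∫ w in (0:ℝ)..z, w * f w)
    (a b : ℝ) : a * (F b - F a) ≤ G b - G a := by
  have hwf : Continuous fun w : ℝ => w * f w := continuous_id.mul hf_cont
  have haf : Continuous fun w : ℝ => a * f w := continuous_const.mul hf_cont
  have hGd : G b - G a = ∫ w in a..b, w * f w := by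
    rw [hG, hG, intervalIntegral.integral_interval_sub_left
      (hwf.intervalIntegrable 0 b) (hwf.intervalIntegrable 0 a)]
  have hFd : F b - F a = ∫ w in a..b, f w := by
    rw [hF, hF, intervalIntegral.integral_Iic_sub_Iic hf_int.integrableOn hf_int.integrableOn]
  rw [hGd, hFd, ← intervalIntegral.integral_const_mul]
  rcases le_total a b with h | h
  · exact intervalIntegral.integral_mono_on h (haf.intervalIntegrable a b)
      (hwf.intervalIntegrable a b)
      (fun w hw => mul_le_mul_of_nonneg_right hw.1 (hf_nonneg w))
  · rw [intervalIntegral.integral_symm, intervalIntegral.integral_symm b a]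
    exact neg_le_neg (intervalIntegral.integral_mono_on h (hwf.intervalIntegrable b a)
      (haf.intervalIntegrable b a)
      (fun w hw => mul_le_mul_of_nonneg_right hw.2 (hf_nonneg w)))

/-- Allocation of LSE `i < N` as a function of its own bid `s`. -/
def xhat (c π : ℕ → ℝ) (Finv : ℝ → ℝ) (i : ℕ) (s : ℝ) : ℝ :=
  Finv ((s - c (i - 1)) / (π i - π (i - 1)))
    - Finv ((c (i + 1) - s) / (π (i + 1) - π i))

/-- Payment of LSE `i < N` as a function of its own bid `s`. -/
def phat (c π : ℕ → ℝ) (Finv G : ℝ → ℝ) (i : ℕ) (s : ℝ) : ℝ :=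
  s * xhat c π Finv i s
    + (π (i + 1) - π (i - 1)) * G (Finv (rhocvx c π i))
    - (π (i + 1) - π i) * G (Finv ((c (i + 1) - s) / (π (i + 1) - π i)))
    - (π i - π (i - 1)) * G (Finv ((s - c (i - 1)) / (π i - π (i - 1))))

/-- The admissible bid set `I_i` for LSE `i < N`. -/
def Iadm (c π : ℕ → ℝ) (i : ℕ) : Set ℝ :=
  {s : ℝ | 0 < (c (i + 1) - s) / (π (i + 1) - π i) ∧
    (c (i + 1) - s) / (π (i + 1) - π i) < (s - c (i - 1)) / (π i - π (i - 1)) ∧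
    (s - c (i - 1)) / (π i - π (i - 1)) < 1}

/-- Allocation of LSE `N` as a function of its own bid `s`. -/
def xhatN (c π : ℕ → ℝ) (Finv : ℝ → ℝ) (N : ℕ) (s : ℝ) : ℝ :=
  Finv ((s - c (N - 1)) / (π N - π (N - 1)))

/-- Payment of LSE `N` as a function of its own bid `s`. -/
def phatN (c π : ℕ → ℝ) (Finv G : ℝ → ℝ) (N : ℕ) (s : ℝ) : ℝ :=
  s * xhatN c π Finv N s
    - (π N - π (N - 1)) * G (Finv ((s - c (N - 1)) / (π N - π (N - 1))))

/-- The admissible bid set for LSE `N`. -/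
def IadmN (c π : ℕ → ℝ) (N : ℕ) : Set ℝ :=
  {s : ℝ | 0 < (s - c (N - 1)) / (π N - π (N - 1)) ∧
    (s - c (N - 1)) / (π N - π (N - 1)) < 1}

/-- Theorem 2, incentive compatibility: truthful bidding maximizes
each LSE's utility, regardless of the other bids. -/
theorem truthful_bidding_optimal
    (N : ℕ) (hN : 2 ≤ N) (c π : ℕ → ℝ)
    (hc0 : c 0 = 0) (hπ0 : π 0 = 0)
    (hπ : ∀ j, j < N → π j < π (j + 1))
    (f F Finv G : ℝ → ℝ)
    (hf_cont : Continuous f)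
    (hf_zero : ∀ z : ℝ, z ≤ 0 → f z = 0)
    (hf_pos : ∀ z : ℝ, 0 < z → 0 < f z)
    (hf_int : MeasureTheory.Integrable f)
    (hf_tot : (∫ z : ℝ, f z) = 1)
    (hF : ∀ z : ℝ, F z = ∫ w in Set.Iic z, f w)
    (hG : ∀ z : ℝ, G z = ∫ w in (0:ℝ)..z, w * f w)
    (hFinvF : ∀ z : ℝ, 0 ≤ z → Finv (F z) = z)
    (hFFinv : ∀ r : ℝ, 0 ≤ r → r < 1 → F (Finv r) = r)
    (hFinv_nonneg : ∀ r : ℝ, 0 ≤ r → r < 1 → 0 ≤ Finv r) :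
    (∀ i, 1 ≤ i → i + 1 ≤ N → c i ∈ Iadm c π i →
      ∀ s ∈ Iadm c π i,
        c i * xhat c π Finv i s - phat c π Finv G i s
          ≤ c i * xhat c π Finv i (c i) - phat c π Finv G i (c i)) ∧
    (c N ∈ IadmN c π N →
      ∀ s ∈ IadmN c π N,
        c N * xhatN c π Finv N s - phatN c π Finv G N s
          ≤ c N * xhatN c π Finv N (c N) - phatN c π Finv G N (c N)) := by
  
  have hf_nonneg : ∀ z, 0 ≤ f z := fun z => by
    rcases le_or_gt z 0 with h | h
    · simp [hf_zero z h]
    · exact (hf_pos z h).le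
  have key : ∀ r r' : ℝ, 0 ≤ r → r < 1 → 0 ≤ r' → r' < 1 →
      (r' - r) * Finv r ≤ G (Finv r') - G (Finv r) := by
    intro r r' hr0 hr1 hr0' hr1'
    have h := key_ineq f F G hf_nonneg hf_cont hf_int hF hG (Finv r) (Finv r')
    rw [hFFinv r hr0 hr1, hFFinv r' hr0' hr1'] at h
    linarith [h]
  constructor
  · intro i hi1 hiN hci s hs
    obtain ⟨hqs, hqrs, hrs1⟩ := hs
    obtain ⟨hqc, hqrc, hrc1⟩ := hci
    have hi' : i - 1 + 1 = i := by omega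
    have hd1 : 0 < π i - π (i - 1) := by
      have := hπ (i - 1) (by omega); rw [hi'] at this; linarith
    have hd2 : 0 < π (i + 1) - π i := by have := hπ i (by omega); linarith
    set d1 := π i - π (i - 1) with hd1def
    set d2 := π (i + 1) - π i with hd2def
    set rs := (s - c (i - 1)) / d1 with hrsdef
    set rc := (c i - c (i - 1)) / d1 with hrcdef
    set qs := (c (i + 1) - s) / d2 with hqsdef
    set qc := (c (i + 1) - c i) / d2 with hqcdef
    have k1 : (rc - rs) * Finv rs ≤ G (Finv rc) - G (Finv rs) :=
      key rs rc (le_trans hqs.le hqrs.le) hrs1 (le_trans hqc.le hqrc.le) hrc1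
    have k2 : (qc - qs) * Finv qs ≤ G (Finv qc) - G (Finv qs) :=
      key qs qc hqs.le (lt_trans hqrs hrs1) hqc.le (lt_trans hqrc hrc1)
    have e1 : d1 * (rc - rs) = c i - s := by
      rw [hrcdef, hrsdef]; field_simp; ring
    have e2 : d2 * (qc - qs) = s - c i := by
      rw [hqcdef, hqsdef]; field_simp; ring
    have m1 : (c i - s) * Finv rs ≤ d1 * (G (Finv rc) - G (Finv rs)) := by
      calc (c i - s) * Finv rs = d1 * ((rc - rs) * Finv rs) := by rw [← e1]; ring
        _ ≤ d1 * (G (Finv rc) - G (Finv rs)) := mul_le_mul_of_nonneg_left k1 hd1.le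
    have m2 : (s - c i) * Finv qs ≤ d2 * (G (Finv qc) - G (Finv qs)) := by
      calc (s - c i) * Finv qs = d2 * ((qc - qs) * Finv qs) := by rw [← e2]; ring
        _ ≤ d2 * (G (Finv qc) - G (Finv qs)) := mul_le_mul_of_nonneg_left k2 hd2.le
    simp only [xhat, phat, ← hd1def, ← hd2def, ← hrsdef, ← hrcdef, ← hqsdef, ← hqcdef]
    linarith [m1, m2]
  · intro hci s hs
    obtain ⟨hrs0, hrs1⟩ := hs
    obtain ⟨hrc0, hrc1⟩ := hci
    have hN' : N - 1 + 1 = N := by omega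
    have hd : 0 < π N - π (N - 1) := by
      have := hπ (N - 1) (by omega); rw [hN'] at this; linarith
    set d := π N - π (N - 1) with hddef
    set rs := (s - c (N - 1)) / d with hrsdef
    set rc := (c N - c (N - 1)) / d with hrcdef
    have k1 : (rc - rs) * Finv rs ≤ G (Finv rc) - G (Finv rs) :=
      key rs rc hrs0.le hrs1 hrc0.le hrc1
    have e1 : d * (rc - rs) = c N - s := by
      rw [hrcdef, hrsdef]; field_simp; ring
    have m1 : (c N - s) * Finv rs ≤ d * (G (Finv rc) - G (Finv rs)) := by
      calc (c N - s) * Finv rs = d * ((rc - rs) * Finv rs) := by rw [← e1]; ring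
        _ ≤ d * (G (Finv rc) - G (Finv rs)) := mul_le_mul_of_nonneg_left k1 hd.le
    simp only [xhatN, phatN, ← hddef, ← hrsdef, ← hrcdef]
    linarith [m1]
end
end

section
/- (Lemma: convexity of G∘F⁻¹.) The function H : [0,1) → [0,∞) defined by H(ρ) = G(F⁻¹(ρ)) is convex and monotonically increasing on [0,1). -/
open MeasureTheory Finset

noncomputable section

/-- `H = G ∘ F⁻¹` is convex, monotonically increasing, and
nonnegative on `[0,1)`. -/
theorem GFinv_convex_monotone
    (f F Finv G : ℝ → ℝ)
    (hf_cont : Continuous f)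
    (hf_zero : ∀ z : ℝ, z ≤ 0 → f z = 0)
    (hf_pos : ∀ z : ℝ, 0 < z → 0 < f z)
    (hf_int : MeasureTheory.Integrable f)
    (hf_tot : (∫ z : ℝ, f z) = 1)
    (hF : ∀ z : ℝ, F z = ∫ w in Set.Iic z, f w)
    (hG : ∀ z : ℝ, G z = ∫ w in (0:ℝ)..z, w * f w)
    (hFinvF : ∀ z : ℝ, 0 ≤ z → Finv (F z) = z)
    (hFFinv : ∀ r : ℝ, 0 ≤ r → r < 1 → F (Finv r) = r)
    (hFinv_nonneg : ∀ r : ℝ, 0 ≤ r → r < 1 → 0 ≤ Finv r) :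
    ConvexOn ℝ (Set.Ico (0:ℝ) 1) (fun r => G (Finv r)) ∧
    MonotoneOn (fun r => G (Finv r)) (Set.Ico (0:ℝ) 1) ∧
    (∀ r ∈ Set.Ico (0:ℝ) 1, 0 ≤ G (Finv r)) := by
  have hf_nonneg : ∀ z : ℝ, 0 ≤ f z := by
    intro z
    rcases le_or_gt z 0 with h | h
    · rw [hf_zero z h]
    · exact (hf_pos z h).le
  have hcont_wf : Continuous fun w => w * f w := continuous_id.mul hf_cont
  have hFdiff : ∀ a b : ℝ, F b - F a = ∫ w in a..b, f w := by
    intro a b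
    rw [hF, hF, intervalIntegral.integral_Iic_sub_Iic hf_int.integrableOn hf_int.integrableOn]
  have hFmono : Monotone F := by
    intro a b hab
    have h1 := hFdiff a b
    have h2 : 0 ≤ ∫ w in a..b, f w :=
      intervalIntegral.integral_nonneg hab (fun u _ => hf_nonneg u)
    linarith
  have hFinv_mono : ∀ x y : ℝ, 0 ≤ x → y < 1 → x ≤ y → Finv x ≤ Finv y := by
    intro x y hx hy hxy
    by_contra h
    push_neg at h
    have h2 := hFmono h.le
    rw [hFFinv x hx (lt_of_le_of_lt hxy hy), hFFinv y (hx.trans hxy) hy] at h2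
    have hxy' : x = y := le_antisymm hxy h2
    rw [hxy'] at h
    exact lt_irrefl _ h
  have hGdiff : ∀ a b : ℝ, G b - G a = ∫ w in a..b, w * f w := by
    intro a b
    rw [hG, hG, ← intervalIntegral.integral_add_adjacent_intervals
      (hcont_wf.intervalIntegrable 0 a) (hcont_wf.intervalIntegrable a b)]
    ring
  have key : ∀ x y : ℝ, x ∈ Set.Ico (0:ℝ) 1 → y ∈ Set.Ico (0:ℝ) 1 → x ≤ y →
      Finv x * (y - x) ≤ G (Finv y) - G (Finv x) ∧
      G (Finv y) - G (Finv x) ≤ Finv y * (y - x) := by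
    intro x y hx hy hxy
    have hab : Finv x ≤ Finv y := hFinv_mono x y hx.1 hy.2 hxy
    have hFi : (∫ w in Finv x..Finv y, f w) = y - x := by
      rw [← hFdiff, hFFinv x hx.1 hx.2, hFFinv y hy.1 hy.2]
    have hGint : G (Finv y) - G (Finv x) = ∫ w in Finv x..Finv y, w * f w := hGdiff _ _
    constructor
    · rw [hGint]
      calc Finv x * (y - x) = ∫ w in Finv x..Finv y, Finv x * f w := by
            rw [intervalIntegral.integral_const_mul, hFi]
        _ ≤ ∫ w in Finv x..Finv y, w * f w := by
            apply intervalIntegral.integral_mono_on hab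
              ((continuous_const.mul hf_cont).intervalIntegrable _ _)
              (hcont_wf.intervalIntegrable _ _)
            intro u hu
            exact mul_le_mul_of_nonneg_right hu.1 (hf_nonneg u)
    · rw [hGint]
      calc (∫ w in Finv x..Finv y, w * f w)
          ≤ ∫ w in Finv x..Finv y, Finv y * f w := by
            apply intervalIntegral.integral_mono_on hab
              (hcont_wf.intervalIntegrable _ _)
              ((continuous_const.mul hf_cont).intervalIntegrable _ _)
            intro u hu
            exact mul_le_mul_of_nonneg_right hu.2 (hf_nonneg u)
        _ = Finv y * (y - x) := by
            rw [intervalIntegral.integral_const_mul, hFi]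
  have hmono : MonotoneOn (fun r => G (Finv r)) (Set.Ico (0:ℝ) 1) := by
    intro x hx y hy hxy
    have h1 := (key x y hx hy hxy).1
    have h2 : 0 ≤ Finv x * (y - x) :=
      mul_nonneg (hFinv_nonneg x hx.1 hx.2) (by linarith)
    simp only
    linarith
  refine ⟨?_, hmono, ?_⟩
  · apply convexOn_of_slope_mono_adjacent (convex_Ico 0 1)
    intro x y z hx hz hxy hyz
    have hy : y ∈ Set.Ico (0:ℝ) 1 := ⟨hx.1.trans hxy.le, lt_trans hyz hz.2⟩
    have h1 := (key x y hx hy hxy.le).2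
    have h2 := (key y z hy hz hyz.le).1
    rw [div_le_div_iff₀ (by linarith) (by linarith)]
    nlinarith [mul_le_mul_of_nonneg_right h1 (by linarith : (0:ℝ) ≤ z - y),
      mul_le_mul_of_nonneg_right h2 (by linarith : (0:ℝ) ≤ y - x)]
  · intro r hr
    rw [hG]
    apply intervalIntegral.integral_nonneg (hFinv_nonneg r hr.1 hr.2)
    intro u hu
    exact mul_nonneg hu.1 (hf_nonneg u)
end
end

section
/- (Lemma 4 and Theorem 3: individual rationality.) Under the stated bid assumptions, for every 1 ≤ i ≤ N the payment does not exceed the valuation: p*_i ≤ c_i x*_i; equivalently, each LSE's utility U_i = c_i x*_i − p*_i is nonnegative, so the mechanism is individually rational. -/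
open MeasureTheory Finset

noncomputable section

/-- Lemma 4 and Theorem 3: the mechanism is individually rational,
i.e. `p*_i ≤ c_i x*_i` for every LSE `i`. -/
theorem individual_rationality
    (N : ℕ) (hN : 2 ≤ N) (c π : ℕ → ℝ)
    (hc0 : c 0 = 0) (hπ0 : π 0 = 0)
    (hπ : ∀ j, j < N → π j < π (j + 1))
    (f F Finv G : ℝ → ℝ)
    (hf_cont : Continuous f)
    (hf_zero : ∀ z : ℝ, z ≤ 0 → f z = 0)
    (hf_pos : ∀ z : ℝ, 0 < z → 0 < f z)
    (hf_int : MeasureTheory.Integrable f)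
    (hf_tot : (∫ z : ℝ, f z) = 1)
    (hF : ∀ z : ℝ, F z = ∫ w in Set.Iic z, f w)
    (hG : ∀ z : ℝ, G z = ∫ w in (0:ℝ)..z, w * f w)
    (hFinvF : ∀ z : ℝ, 0 ≤ z → Finv (F z) = z)
    (hFFinv : ∀ r : ℝ, 0 ≤ r → r < 1 → F (Finv r) = r)
    (hFinv_nonneg : ∀ r : ℝ, 0 ≤ r → r < 1 → 0 ≤ Finv r)
    (hρ1 : rho N c π 1 < 1)
    (hρdec : ∀ i, 1 ≤ i → i < N → rho N c π (i + 1) < rho N c π i)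
    (hρN : 0 < rho N c π N) :
    ∀ i ∈ Finset.Icc 1 N, pstar N c π Finv G i ≤ c i * xstar N c π Finv i := by
  have hwf_cont : Continuous fun w : ℝ => w * f w := continuous_id.mul hf_cont
  have hwf_int : ∀ a b : ℝ, IntervalIntegrable (fun w => w * f w) volume a b :=
    fun a b => hwf_cont.intervalIntegrable a b
  have hf0 : ∀ w : ℝ, 0 ≤ f w := by
    intro w
    rcases le_or_gt w 0 with h | h
    · rw [hf_zero w h]
    · exact (hf_pos w h).le
  have hGdiff : ∀ z z' : ℝ, G z' - G z = ∫ w in z..z', w * f w := by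
    intro z z'
    rw [hG, hG]
    exact intervalIntegral.integral_interval_sub_left (hwf_int 0 z') (hwf_int 0 z)
  have hFdiff : ∀ z z' : ℝ, F z' - F z = ∫ w in z..z', f w := by
    intro z z'
    rw [hF, hF]
    exact intervalIntegral.integral_Iic_sub_Iic hf_int.integrableOn hf_int.integrableOn
  have keyA : ∀ z z' : ℝ, z ≤ z' → z * (F z' - F z) ≤ G z' - G z := by
    intro z z' hzz
    rw [hGdiff, hFdiff, ← intervalIntegral.integral_const_mul]
    exact intervalIntegral.integral_mono_on hzz
      ((continuous_const.mul hf_cont).intervalIntegrable _ _) (hwf_int _ _)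
      (fun x hx => mul_le_mul_of_nonneg_right hx.1 (hf0 x))
  have keyB : ∀ z z' : ℝ, z ≤ z' → G z' - G z ≤ z' * (F z' - F z) := by
    intro z z' hzz
    rw [hGdiff, hFdiff, ← intervalIntegral.integral_const_mul]
    exact intervalIntegral.integral_mono_on hzz (hwf_int _ _)
      ((continuous_const.mul hf_cont).intervalIntegrable _ _)
      (fun x hx => mul_le_mul_of_nonneg_right hx.2 (hf0 x))
  have hFmono : ∀ z z' : ℝ, z ≤ z' → F z ≤ F z' := by
    intro z z' hzz
    have hnn : 0 ≤ ∫ w in z..z', f w :=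
      intervalIntegral.integral_nonneg hzz (fun x _ => hf0 x)
    linarith [hFdiff z z']
  have hFinvmono : ∀ r r' : ℝ, 0 ≤ r → r' < 1 → r ≤ r' → Finv r ≤ Finv r' := by
    intro r r' hr hr' hrr
    by_contra h
    push_neg at h
    have h1 : F (Finv r') ≤ F (Finv r) := hFmono _ _ h.le
    rw [hFFinv r hr (lt_of_le_of_lt hrr hr'), hFFinv r' (hr.trans hrr) hr'] at h1
    have heq : r = r' := le_antisymm hrr h1
    rw [heq] at h
    exact lt_irrefl _ h
  have hG0 : ∀ z : ℝ, 0 ≤ z → 0 ≤ G z := by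
    intro z hz
    rw [hG]
    exact intervalIntegral.integral_nonneg hz (fun x hx => mul_nonneg hx.1 (hf0 x))
  have hρmono : ∀ i j, 1 ≤ i → i ≤ j → j ≤ N → rho N c π j ≤ rho N c π i := by
    intro i j hi hij
    induction j, hij using Nat.le_induction with
    | base => intro _; exact le_rfl
    | succ n hn ih =>
      intro hjN
      exact ((hρdec n (hi.trans hn) (by omega)).le).trans (ih (by omega))
  have hρpos : ∀ i, 1 ≤ i → i ≤ N → 0 < rho N c π i := fun i h1 h2 =>
    lt_of_lt_of_le hρN (hρmono i N h1 h2 le_rfl)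
  have hρlt1 : ∀ i, 1 ≤ i → i ≤ N → rho N c π i < 1 := fun i h1 h2 =>
    lt_of_le_of_lt (hρmono 1 i le_rfl h1 h2) hρ1
  intro i hi
  simp only [Finset.mem_Icc] at hi
  obtain ⟨hi1, hiN⟩ := hi
  by_cases hEq : i = N
  · rw [hEq]
    rw [pstar, if_pos rfl]
    have h' : N - 1 + 1 = N := by omega
    have hπN : π (N - 1) < π N := by
      have := hπ (N - 1) (by omega)
      rwa [h'] at this
    have hz : 0 ≤ Finv (rho N c π N) :=
      hFinv_nonneg _ (hρpos N (by omega) le_rfl).le (hρlt1 N (by omega) le_rfl)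
    have := mul_nonneg (by linarith : (0:ℝ) ≤ π N - π (N-1)) (hG0 _ hz)
    linarith
  · have hiN' : i < N := lt_of_le_of_ne hiN hEq
    rw [pstar, if_neg hEq]
    set ri := rho N c π i with hri
    set ri1 := rho N c π (i + 1) with hri1
    set rc := rhocvx c π i with hrc0
    set a := π i - π (i - 1) with ha
    set b := π (i + 1) - π i with hb
    have h' : i - 1 + 1 = i := by omega
    have hπa : π (i - 1) < π i := by
      have := hπ (i - 1) (by omega)
      rwa [h'] at this
    have hπb : π i < π (i + 1) := hπ i hiN'
    have hapos : 0 < a := by rw [ha]; linarith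
    have hbpos : 0 < b := by rw [hb]; linarith
    have habpos : 0 < a + b := by linarith
    have hci : c i - c (i - 1) = ri * a := by
      rw [hri, rho, if_pos hiN, ← ha]
      field_simp
    have hci1 : c (i + 1) - c i = ri1 * b := by
      rw [hri1, rho, if_pos (by omega : i + 1 ≤ N)]
      simp only [Nat.add_sub_cancel, ← hb]
      field_simp
    have hden : π (i + 1) - π (i - 1) = a + b := by rw [ha, hb]; ring
    have hrc : rc = (ri * a + ri1 * b) / (a + b) := by
      rw [hrc0, rhocvx, hden]
      congr 1
      linarith
    have hdec : ri1 < ri := hρdec i hi1 hiN'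
    have hri1pos : 0 < ri1 := hρpos (i + 1) (by omega) (by omega)
    have hrilt1 : ri < 1 := hρlt1 i hi1 hiN
    have hrc_le : rc ≤ ri := by
      rw [hrc, div_le_iff₀ habpos]
      nlinarith
    have hle_rc : ri1 ≤ rc := by
      rw [hrc, le_div_iff₀ habpos]
      nlinarith
    have hrcpos : 0 < rc := lt_of_lt_of_le hri1pos hle_rc
    have hrclt1 : rc < 1 := lt_of_le_of_lt hrc_le hrilt1
    set zi := Finv ri with hzi
    set zm := Finv rc with hzm
    set z1 := Finv ri1 with hz1
    have hzm_le : zm ≤ zi := hFinvmono rc ri hrcpos.le hrilt1 hrc_le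
    have hz1_le : z1 ≤ zm := hFinvmono ri1 rc hri1pos.le hrclt1 hle_rc
    have hFzi : F zi = ri := hFFinv ri (hρpos i hi1 hiN).le hrilt1
    have hFzm : F zm = rc := hFFinv rc hrcpos.le hrclt1
    have hFz1 : F z1 = ri1 := hFFinv ri1 hri1pos.le (lt_trans hdec hrilt1)
    have H1 : a * (zm * (ri - rc)) ≤ a * (G zi - G zm) := by
      have := keyA zm zi hzm_le
      rw [hFzi, hFzm] at this
      exact mul_le_mul_of_nonneg_left this hapos.le
    have H2 : b * (G zm - G z1) ≤ b * (zm * (rc - ri1)) := by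
      have := keyB z1 zm hz1_le
      rw [hFzm, hFz1] at this
      exact mul_le_mul_of_nonneg_left this hbpos.le
    have hkey : a * (ri - rc) = b * (rc - ri1) := by
      have h3 : rc * (a + b) = ri * a + ri1 * b := by
        rw [hrc]
        field_simp
      linarith
    have H3 : a * (zm * (ri - rc)) = b * (zm * (rc - ri1)) := by
      linear_combination zm * hkey
    have main : (a + b) * G zm ≤ b * G z1 + a * G zi := by linarith [H1, H2, H3]
    rw [hden]
    linarith [main]
end
end

section
/- (Lemma 8: expected shortfall.) For every x ∈ ℝ^N with x ≥ 0 and every 1 ≤ i ≤ N, the expected optimal shortfall of LSE i equals ∫_0^∞ y*_i(x;w) f(w) dw = x_i F(φ_{i+1}(x)) + φ_i(x) F(φ_i(x)) − φ_i(x) F(φ_{i+1}(x)) − G(φ_i(x)) + G(φ_{i+1}(x)). -/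
open MeasureTheory Finset

noncomputable section

/-- Lemma 8: the expected optimal shortfall of LSE `i`. -/
theorem expected_shortfall
    (N : ℕ) (hN : 1 ≤ N)
    (f F G : ℝ → ℝ)
    (hf_cont : Continuous f)
    (hf_zero : ∀ z : ℝ, z ≤ 0 → f z = 0)
    (hf_pos : ∀ z : ℝ, 0 < z → 0 < f z)
    (hf_int : MeasureTheory.Integrable f)
    (hf_tot : (∫ z : ℝ, f z) = 1)
    (hF : ∀ z : ℝ, F z = ∫ w in Set.Iic z, f w)
    (hG : ∀ z : ℝ, G z = ∫ w in (0:ℝ)..z, w * f w)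
    (x : ℕ → ℝ) (hx : ∀ i ∈ Finset.Icc 1 N, 0 ≤ x i)
    (i : ℕ) (hi1 : 1 ≤ i) (hiN : i ≤ N) :
    (∫ w in Set.Ioi (0:ℝ), ystar N x w i * f w)
      = x i * F (phi N x (i + 1)) + phi N x i * F (phi N x i)
        - phi N x i * F (phi N x (i + 1))
        - G (phi N x i) + G (phi N x (i + 1)) := by
  set a := phi N x (i + 1) with ha'
  set b := phi N x i with hb'
  have hxi : 0 ≤ x i := hx i (Finset.mem_Icc.mpr ⟨hi1, hiN⟩)
  have ha : 0 ≤ a := by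
    apply Finset.sum_nonneg
    intro k hk
    rw [Finset.mem_Icc] at hk
    exact hx k (Finset.mem_Icc.mpr ⟨le_trans (le_trans hi1 (Nat.le_succ i)) hk.1, hk.2⟩)
  have hba : b = x i + a := by
    rw [ha', hb', phi, phi, Finset.Icc_add_one_left_eq_Ioc, ← Finset.Ioc_insert_left hiN,
      Finset.sum_insert (by simp)]
  have hab : a ≤ b := by rw [hba]; linarith
  have hb0 : 0 ≤ b := ha.trans hab
  set g : ℝ → ℝ := fun w => ystar N x w i * f w with hg'
  -- pointwise descriptions
  have hy1 : Set.EqOn (fun w => x i * f w) g (Set.Ioc 0 a) := by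
    intro w hw
    simp only [hg', ystar, ← ha', ← hb']
    rcases lt_or_eq_of_le hw.2 with hlt | heq
    · simp [hlt]
    · have : ¬ w < a := by rw [heq]; exact lt_irrefl a
      by_cases h2 : w < b
      · simp only [this, if_false, h2, if_true]
        rw [heq, hba]; ring
      · have : x i = 0 := by
          have := le_of_not_gt h2
          rw [heq] at this
          linarith [hba ▸ this]
        simp [‹¬ w < a›, h2, this]
  have hy2 : Set.EqOn (fun w => (b - w) * f w) g (Set.Ioc a b) := by
    intro w hw
    simp only [hg', ystar, ← ha', ← hb']
    have h1 : ¬ w < a := not_lt.mpr hw.1.le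
    rcases lt_or_eq_of_le hw.2 with hlt | heq
    · simp [h1, hlt]
    · have h2 : ¬ w < b := by rw [heq]; exact lt_irrefl b
      simp [h1, h2, heq, not_lt.mpr hab]
  have hy3 : Set.EqOn (fun _ => (0:ℝ)) g (Set.Ioi b) := by
    intro w hw
    have h1 : ¬ w < a := not_lt.mpr (hab.trans hw.le)
    have h2 : ¬ w < b := not_lt.mpr hw.le
    simp [hg', ystar, ← ha', ← hb', h1, h2]
  -- integrability
  have hint1 : IntegrableOn g (Set.Ioc 0 a) := by
    exact ((hf_int.const_mul (x i)).integrableOn).congr_fun hy1 measurableSet_Ioc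
  have hint2 : IntegrableOn g (Set.Ioc a b) := by
    exact (((continuous_const.sub continuous_id).mul hf_cont).integrableOn_Ioc).congr_fun
      hy2 measurableSet_Ioc
  have hint3 : IntegrableOn g (Set.Ioi b) := by
    exact (integrableOn_zero).congr_fun hy3 measurableSet_Ioi
  have hdisj1 : Disjoint (Set.Ioc (0:ℝ) a) (Set.Ioc a b) := by
    rw [Set.disjoint_left]
    intro w h1 h2
    exact absurd h2.1 (not_lt.mpr h1.2)
  have hdisj2 : Disjoint (Set.Ioc (0:ℝ) b) (Set.Ioi b) := by
    rw [Set.disjoint_left]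
    intro w h1 h2
    exact absurd h2 (not_lt.mpr h1.2)
  have hunion1 : Set.Ioc (0:ℝ) a ∪ Set.Ioc a b = Set.Ioc 0 b := Set.Ioc_union_Ioc_eq_Ioc ha hab
  have hint12 : IntegrableOn g (Set.Ioc 0 b) := by
    rw [← hunion1]; exact hint1.union hint2
  have hsplit : (∫ w in Set.Ioi (0:ℝ), g w)
      = (∫ w in Set.Ioc 0 a, g w) + (∫ w in Set.Ioc a b, g w) + (∫ w in Set.Ioi b, g w) := by
    rw [← Set.Ioc_union_Ioi_eq_Ioi hb0,
      setIntegral_union hdisj2 measurableSet_Ioi hint12 hint3, ← hunion1,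
      setIntegral_union hdisj1 measurableSet_Ioc hint1 hint2]
  -- evaluate F on Ioc
  have hF0 : ∀ c : ℝ, 0 ≤ c → F c = ∫ w in Set.Ioc 0 c, f w := by
    intro c hc
    rw [hF, ← Set.Iic_union_Ioc_eq_Iic hc,
      setIntegral_union (by rw [Set.disjoint_left]; intro w h1 h2; exact absurd h2.1 (not_lt.mpr h1))
        measurableSet_Ioc hf_int.integrableOn hf_int.integrableOn,
      show (∫ w in Set.Iic (0:ℝ), f w) = 0 from
        setIntegral_eq_zero_of_forall_eq_zero (fun w hw => hf_zero w hw), zero_add]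
  have hFab : (∫ w in Set.Ioc a b, f w) = F b - F a := by
    rw [hF0 a ha, hF0 b hb0, ← hunion1,
      setIntegral_union hdisj1 measurableSet_Ioc hf_int.integrableOn hf_int.integrableOn]
    ring
  have hGab : (∫ w in Set.Ioc a b, w * f w) = G b - G a := by
    have hii : ∀ u v : ℝ, IntervalIntegrable (fun w => w * f w) volume u v :=
      fun u v => (continuous_id.mul hf_cont).intervalIntegrable u v
    rw [← intervalIntegral.integral_of_le hab, hG, hG,
      ← intervalIntegral.integral_interval_sub_left (hii 0 b) (hii 0 a)]
  -- evaluate each piece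
  have hp1 : (∫ w in Set.Ioc (0:ℝ) a, g w) = x i * F a := by
    rw [← setIntegral_congr_fun measurableSet_Ioc hy1, integral_const_mul, hF0 a ha]
  have hp2 : (∫ w in Set.Ioc a b, g w) = b * (F b - F a) - (G b - G a) := by
    rw [← setIntegral_congr_fun measurableSet_Ioc hy2]
    have : ∀ w : ℝ, (b - w) * f w = b * f w - w * f w := fun w => by ring
    simp only [this]
    have hwf : IntegrableOn (fun w : ℝ => w * f w) (Set.Ioc a b) volume := by
      have : Continuous (fun w : ℝ => w * f w) := continuous_id.mul hf_cont
      exact this.integrableOn_Ioc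
    rw [integral_sub ((hf_int.const_mul b).integrableOn) hwf,
      integral_const_mul, hFab, hGab]
  have hp3 : (∫ w in Set.Ioi b, g w) = 0 := by
    rw [← setIntegral_congr_fun measurableSet_Ioi hy3, integral_zero]
  calc (∫ w in Set.Ioi (0:ℝ), g w)
      = x i * F a + (b * (F b - F a) - (G b - G a)) + 0 := by rw [hsplit, hp1, hp2, hp3]
    _ = x i * F a + b * F b - b * F a - G b + G a := by ring
end
end

section
/- (Lemma 5, first part.) Under the stated bid assumptions, for every 1 ≤ i ≤ N − 1 the generator's expected payoff from LSE i is bounded below: p*_i − π_i ∫_0^∞ y*_i(x*;w) f(w) dw ≥ (c_i − π_i ρ_i) x*_i + [π_{i−1}(c_i − α_i)/(π_i − π_{i−1})]·( F⁻¹(ρ^cvx_i) − F⁻¹(ρ_{i+1}) ), where α_i = (c_{i+1}(π_i − π_{i−1}) + c_{i−1}(π_{i+1} − π_i))/(π_{i+1} − π_{i−1}) and ρ^cvx_i = (c_{i+1} − c_{i−1})/(π_{i+1} − π_{i−1}). (Here ρ_i = F(φ_i(x*)).) -/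
open MeasureTheory Finset

noncomputable section

/-- Lemma 5, first part: lower bound on the generator's expected
payoff from LSE `i`, `1 ≤ i ≤ N-1`. -/
theorem generator_payoff_lower_bound_i
    (N : ℕ) (hN : 2 ≤ N) (c π : ℕ → ℝ)
    (hc0 : c 0 = 0) (hπ0 : π 0 = 0)
    (hπ : ∀ j, j < N → π j < π (j + 1))
    (f F Finv G : ℝ → ℝ)
    (hf_cont : Continuous f)
    (hf_zero : ∀ z : ℝ, z ≤ 0 → f z = 0)
    (hf_pos : ∀ z : ℝ, 0 < z → 0 < f z)
    (hf_int : MeasureTheory.Integrable f)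
    (hf_tot : (∫ z : ℝ, f z) = 1)
    (hF : ∀ z : ℝ, F z = ∫ w in Set.Iic z, f w)
    (hG : ∀ z : ℝ, G z = ∫ w in (0:ℝ)..z, w * f w)
    (hFinvF : ∀ z : ℝ, 0 ≤ z → Finv (F z) = z)
    (hFFinv : ∀ r : ℝ, 0 ≤ r → r < 1 → F (Finv r) = r)
    (hFinv_nonneg : ∀ r : ℝ, 0 ≤ r → r < 1 → 0 ≤ Finv r)
    (hρ1 : rho N c π 1 < 1)
    (hρdec : ∀ i, 1 ≤ i → i < N → rho N c π (i + 1) < rho N c π i)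
    (hρN : 0 < rho N c π N)
    (i : ℕ) (hi1 : 1 ≤ i) (hiN : i + 1 ≤ N) :
    pstar N c π Finv G i
        - π i * (∫ w in Set.Ioi (0:ℝ), ystar N (xstar N c π Finv) w i * f w)
      ≥ (c i - π i * rho N c π i) * xstar N c π Finv i
        + (π (i - 1) * (c i - alphaB c π i) / (π i - π (i - 1)))
          * (Finv (rhocvx c π i) - Finv (rho N c π (i + 1))) := by

  -- basic positivity facts
  have hf_nonneg : ∀ w : ℝ, 0 ≤ f w := by
    intro w
    rcases le_or_gt w 0 with h | h
    · rw [hf_zero w h]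
    · exact (hf_pos w h).le
  have hiN' : i ≤ N := by omega
  have hiNe : i ≠ N := by omega
  have hd1 : 0 < π i - π (i - 1) := by
    have h := hπ (i - 1) (by omega)
    have he : i - 1 + 1 = i := by omega
    rw [he] at h
    linarith
  have hd2 : 0 < π (i + 1) - π i := by
    have h := hπ i (by omega); linarith
  have hD : 0 < π (i + 1) - π (i - 1) := by linarith
  have hπmono : ∀ k : ℕ, k ≤ N → ∀ j : ℕ, j ≤ k → π j ≤ π k := by
    intro k
    induction k with
    | zero =>
      intro _ j hj
      have : j = 0 := Nat.le_zero.mp hj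
      rw [this]
    | succ k ih =>
      intro hkN j hj
      rcases Nat.eq_or_lt_of_le hj with h | h
      · rw [h]
      · exact le_trans (ih (by omega) j (by omega)) (le_of_lt (hπ k (by omega)))
  have hπim : 0 ≤ π (i - 1) := by
    have := hπmono (i - 1) (by omega) 0 (by omega)
    rw [hπ0] at this; exact this
  have hπip : 0 ≤ π (i + 1) := by linarith
  -- chain of rho inequalities
  have hρanti : ∀ k : ℕ, k ≤ N → ∀ j : ℕ, 1 ≤ j → j ≤ k → rho N c π k ≤ rho N c π j := by
    intro k
    induction k with
    | zero =>
      intro _ j hj hjk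
      exact absurd (hj.trans hjk) (by norm_num)
    | succ k ih =>
      intro hkN j hj hjk
      rcases Nat.eq_or_lt_of_le hjk with h | h
      · rw [h]
      · exact le_trans (le_of_lt (hρdec k (by omega) (by omega))) (ih (by omega) j hj (by omega))
  have hρi1_pos : 0 < rho N c π (i + 1) :=
    lt_of_lt_of_le hρN (hρanti N le_rfl (i + 1) (by omega) hiN)
  have hρlt : rho N c π (i + 1) < rho N c π i := hρdec i hi1 (by omega)
  have hρi_lt1 : rho N c π i < 1 := lt_of_le_of_lt (hρanti i hiN' 1 le_rfl hi1) hρ1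
  have hρi_pos : 0 < rho N c π i := lt_trans hρi1_pos hρlt
  have hρi1_lt1 : rho N c π (i + 1) < 1 := lt_trans hρlt hρi_lt1
  -- abbreviations
  set ρi := rho N c π i with hρidef
  set ρi1 := rho N c π (i + 1) with hρi1def
  set ρq := rhocvx c π i with hρqdef
  -- product identities
  have hρi_mul : ρi * (π i - π (i - 1)) = c i - c (i - 1) := by
    rw [hρidef, rho, if_pos hiN']
    exact div_mul_cancel₀ _ (ne_of_gt hd1)
  have hρi1_mul : ρi1 * (π (i + 1) - π i) = c (i + 1) - c i := by
    rw [hρi1def, rho, if_pos hiN, Nat.add_sub_cancel]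
    exact div_mul_cancel₀ _ (ne_of_gt hd2)
  have hρq_mul : ρq * (π (i + 1) - π (i - 1)) = c (i + 1) - c (i - 1) := by
    rw [hρqdef, rhocvx]
    exact div_mul_cancel₀ _ (ne_of_gt hD)
  have hα_mul : alphaB c π i * (π (i + 1) - π (i - 1))
      = c (i + 1) * (π i - π (i - 1)) + c (i - 1) * (π (i + 1) - π i) := by
    rw [alphaB]
    exact div_mul_cancel₀ _ (ne_of_gt hD)
  -- rhocvx lies between the two rho values
  have hq_lb : ρi1 ≤ ρq := by
    have hid : (ρq - ρi1) * (π (i + 1) - π (i - 1)) = (ρi - ρi1) * (π i - π (i - 1)) := by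
      linear_combination hρq_mul - hρi1_mul - hρi_mul
    nlinarith [mul_pos (sub_pos.mpr hρlt) hd1]
  have hq_ub : ρq ≤ ρi := by
    have hid : (ρi - ρq) * (π (i + 1) - π (i - 1)) = (ρi - ρi1) * (π (i + 1) - π i) := by
      linear_combination hρi_mul + hρi1_mul - hρq_mul
    nlinarith [mul_pos (sub_pos.mpr hρlt) hd2]
  have hρq_pos : 0 < ρq := lt_of_lt_of_le hρi1_pos hq_lb
  have hρq_lt1 : ρq < 1 := lt_of_le_of_lt hq_ub hρi_lt1
  -- monotonicity of F and Finv
  have hFmono : ∀ u v : ℝ, u ≤ v → F u ≤ F v := by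
    intro u v huv
    rw [hF u, hF v]
    exact MeasureTheory.setIntegral_mono_set hf_int.integrableOn
      (Filter.Eventually.of_forall hf_nonneg)
      (HasSubset.Subset.eventuallyLE (Set.Iic_subset_Iic.mpr huv))
  have hFinv_mono : ∀ r s : ℝ, 0 ≤ r → r ≤ s → s < 1 → Finv r ≤ Finv s := by
    intro r s hr hrs hs
    by_contra hcon
    push_neg at hcon
    have h1 : F (Finv s) ≤ F (Finv r) := hFmono _ _ hcon.le
    rw [hFFinv s (hr.trans hrs) hs, hFFinv r hr (lt_of_le_of_lt hrs hs)] at h1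
    have : r = s := le_antisymm hrs h1
    rw [this] at hcon
    exact lt_irrefl _ hcon
  -- the points a, b, q
  set a := Finv ρi with hadef
  set b := Finv ρi1 with hbdef
  set q := Finv ρq with hqdef
  have hb0 : 0 ≤ b := hFinv_nonneg _ hρi1_pos.le hρi1_lt1
  have hq0 : 0 ≤ q := hFinv_nonneg _ hρq_pos.le hρq_lt1
  have hba : b ≤ a := hFinv_mono _ _ hρi1_pos.le hρlt.le hρi_lt1
  have hbq : b ≤ q := hFinv_mono _ _ hρi1_pos.le hq_lb hρq_lt1
  have hqa : q ≤ a := hFinv_mono _ _ hρq_pos.le hq_ub hρi_lt1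
  have ha0 : 0 ≤ a := hb0.trans hba
  have hFa : F a = ρi := hFFinv _ hρi_pos.le hρi_lt1
  have hFb : F b = ρi1 := hFFinv _ hρi1_pos.le hρi1_lt1
  have hFq : F q = ρq := hFFinv _ hρq_pos.le hρq_lt1
  -- F 0 = 0 and increment formulas for F and G
  have hF0 : F 0 = 0 := by
    rw [hF]
    rw [MeasureTheory.setIntegral_congr_fun measurableSet_Iic
      (fun w hw => hf_zero w hw : Set.EqOn f (fun _ => (0:ℝ)) (Set.Iic 0))]
    simp
  have hFdiff : ∀ v u : ℝ, v ≤ u → (∫ w in Set.Ioc v u, f w) = F u - F v := by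
    intro v u hvu
    have hu : Set.Iic v ∪ Set.Ioc v u = Set.Iic u := Set.Iic_union_Ioc_eq_Iic hvu
    have hdisj : Disjoint (Set.Iic v) (Set.Ioc v u) := by
      rw [Set.disjoint_left]
      intro x hx hx2
      exact absurd hx (not_le.mpr hx2.1)
    have h2 := MeasureTheory.setIntegral_union (f := f) (μ := MeasureTheory.volume)
      hdisj measurableSet_Ioc hf_int.integrableOn hf_int.integrableOn
    rw [hu] at h2
    rw [hF u, hF v]
    linarith [h2]
  have hwf_cont : Continuous fun w : ℝ => w * f w := continuous_id.mul hf_cont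
  have hGdiff : ∀ v u : ℝ, v ≤ u → (∫ w in Set.Ioc v u, w * f w) = G u - G v := by
    intro v u hvu
    have h1 := intervalIntegral.integral_interval_sub_left
      (hwf_cont.intervalIntegrable (μ := MeasureTheory.volume) 0 u)
      (hwf_cont.intervalIntegrable (μ := MeasureTheory.volume) 0 v)
    rw [intervalIntegral.integral_of_le hvu] at h1
    rw [hG u, hG v, ← h1]
  -- key inequality for G
  have hK : ∀ v u : ℝ, 0 ≤ v → v ≤ u → v * (F u - F v) ≤ G u - G v := by
    intro v u hv0 hvu
    rw [← hFdiff v u hvu, ← hGdiff v u hvu, ← MeasureTheory.integral_const_mul]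
    refine MeasureTheory.setIntegral_mono_on ((hf_int.const_mul v).integrableOn)
      (hwf_cont.integrableOn_Ioc) measurableSet_Ioc ?_
    intro w hw
    exact mul_le_mul_of_nonneg_right hw.1.le (hf_nonneg w)
  -- the allocation and phi
  set xs := xstar N c π Finv with hxs
  have hphi : ∀ d j : ℕ, 1 ≤ j → j + d = N → phi N xs j = Finv (rho N c π j) := by
    intro d
    induction d with
    | zero =>
      intro j hj hjN
      have hjN' : j = N := by omega
      subst hjN'
      rw [phi, Finset.Icc_self, Finset.sum_singleton, hxs, xstar, if_pos rfl]
    | succ d ih =>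
      intro j hj hjN
      have hjN' : j < N := by omega
      have hstep : Finset.Icc j N = insert j (Finset.Icc (j + 1) N) := by
        rw [Finset.Icc_add_one_left_eq_Ioc, Finset.Ioc_insert_left (le_of_lt hjN')]
      rw [phi, hstep, Finset.sum_insert (by simp)]
      have h2 : (∑ k ∈ Finset.Icc (j + 1) N, xs k) = Finv (rho N c π (j + 1)) :=
        ih (j + 1) (by omega) (by omega)
      rw [h2, hxs, xstar, if_neg (by omega : j ≠ N)]
      ring
  have hphii : phi N xs i = a := by
    rw [hphi (N - i) i hi1 (by omega), ← hρidef]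
  have hphii1 : phi N xs (i + 1) = b := by
    rw [hphi (N - (i + 1)) (i + 1) (by omega) (by omega), ← hρi1def]
  have hxsi : xs i = a - b := by
    rw [hxs, xstar, if_neg hiNe, ← hρidef, ← hρi1def]
  have hysimp : ∀ w : ℝ, ystar N xs w i
      = if w < b then a - b else if w < a then a - w else 0 := by
    intro w
    rw [ystar, hphii1, hphii, hxsi]
  -- pointwise values of ystar
  have hyval1 : ∀ w : ℝ, w ≤ b → ystar N xs w i = a - b := by
    intro w hwb
    rw [hysimp]
    rcases lt_or_eq_of_le hwb with h | h
    · rw [if_pos h]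
    · rw [if_neg (by rw [h]; exact lt_irrefl b)]
      rcases lt_or_eq_of_le hba with h2 | h2
      · rw [if_pos (by rw [h]; exact h2), h]
      · rw [if_neg (by rw [h, h2]; exact lt_irrefl a), ← h2, sub_self]
  have hyval2 : ∀ w : ℝ, b < w → w ≤ a → ystar N xs w i = a - w := by
    intro w hbw hwa
    rw [hysimp, if_neg (not_lt.mpr hbw.le)]
    rcases lt_or_eq_of_le hwa with h | h
    · rw [if_pos h]
    · rw [if_neg (by rw [h]; exact lt_irrefl a), h, sub_self]
  have hyval3 : ∀ w : ℝ, a < w → ystar N xs w i = 0 := by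
    intro w haw
    rw [hysimp, if_neg (not_lt.mpr (le_of_lt (lt_of_le_of_lt hba haw))),
      if_neg (not_lt.mpr haw.le)]
  -- integrability on the pieces
  have hint1 : MeasureTheory.IntegrableOn (fun w => ystar N xs w i * f w)
      (Set.Ioc (0:ℝ) b) :=
    ((hf_int.const_mul (a - b)).integrableOn).congr_fun
      (fun w hw => by simp only [hyval1 w hw.2]) measurableSet_Ioc
  have hint2 : MeasureTheory.IntegrableOn (fun w => ystar N xs w i * f w)
      (Set.Ioc b a) := by
    have hc : Continuous fun w : ℝ => (a - w) * f w :=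
      (continuous_const.sub continuous_id).mul hf_cont
    exact (hc.integrableOn_Ioc).congr_fun
      (fun w hw => by simp only [hyval2 w hw.1 hw.2]) measurableSet_Ioc
  have hint3 : MeasureTheory.IntegrableOn (fun w => ystar N xs w i * f w)
      (Set.Ioi a) :=
    (MeasureTheory.integrableOn_zero).congr_fun
      (fun w hw => by simp [hyval3 w hw]) measurableSet_Ioi
  have hun1 : Set.Ioc (0:ℝ) b ∪ Set.Ioc b a = Set.Ioc 0 a :=
    Set.Ioc_union_Ioc_eq_Ioc hb0 hba
  have hun2 : Set.Ioc (0:ℝ) a ∪ Set.Ioi a = Set.Ioi 0 :=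
    Set.Ioc_union_Ioi_eq_Ioi ha0
  have hdisj1 : Disjoint (Set.Ioc (0:ℝ) b) (Set.Ioc b a) := by
    rw [Set.disjoint_left]
    intro x h1 h2
    exact absurd h2.1 (not_lt.mpr h1.2)
  have hdisj2 : Disjoint (Set.Ioc (0:ℝ) a) (Set.Ioi a) := by
    rw [Set.disjoint_left]
    intro x h1 h2
    exact absurd h2 (not_lt.mpr h1.2)
  have hint12 : MeasureTheory.IntegrableOn (fun w => ystar N xs w i * f w)
      (Set.Ioc (0:ℝ) a) := by
    rw [← hun1]; exact hint1.union hint2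
  have hIsplit : (∫ w in Set.Ioi (0:ℝ), ystar N xs w i * f w)
      = (∫ w in Set.Ioc (0:ℝ) b, ystar N xs w i * f w)
        + (∫ w in Set.Ioc b a, ystar N xs w i * f w)
        + (∫ w in Set.Ioi a, ystar N xs w i * f w) := by
    rw [← hun2, MeasureTheory.setIntegral_union hdisj2 measurableSet_Ioi hint12 hint3,
      ← hun1, MeasureTheory.setIntegral_union hdisj1 measurableSet_Ioc hint1 hint2]
  have hv1 : (∫ w in Set.Ioc (0:ℝ) b, ystar N xs w i * f w) = (a - b) * ρi1 := by
    rw [MeasureTheory.setIntegral_congr_fun measurableSet_Ioc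
      (fun w hw => by simp only [hyval1 w hw.2] :
        Set.EqOn (fun w => ystar N xs w i * f w) (fun w => (a - b) * f w) (Set.Ioc 0 b))]
    rw [MeasureTheory.integral_const_mul, hFdiff 0 b hb0, hF0, hFb]
    ring
  have hv2 : (∫ w in Set.Ioc b a, ystar N xs w i * f w)
      = a * (ρi - ρi1) - (G a - G b) := by
    rw [MeasureTheory.setIntegral_congr_fun measurableSet_Ioc
      (fun w hw => by simp only [hyval2 w hw.1 hw.2] :
        Set.EqOn (fun w => ystar N xs w i * f w) (fun w => (a - w) * f w) (Set.Ioc b a))]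
    have hre : (∫ w in Set.Ioc b a, (a - w) * f w)
        = ∫ w in Set.Ioc b a, (a * f w - w * f w) := by
      congr 1
      ext w
      ring
    rw [hre, MeasureTheory.integral_sub ((hf_int.const_mul a).integrableOn)
      (hwf_cont.integrableOn_Ioc), MeasureTheory.integral_const_mul,
      hFdiff b a hba, hGdiff b a hba, hFa, hFb]
  have hv3 : (∫ w in Set.Ioi a, ystar N xs w i * f w) = 0 := by
    rw [MeasureTheory.setIntegral_congr_fun measurableSet_Ioi
      (fun w hw => by simp [hyval3 w hw] :
        Set.EqOn (fun w => ystar N xs w i * f w) (fun _ => (0:ℝ)) (Set.Ioi a))]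
    simp
  have hI : (∫ w in Set.Ioi (0:ℝ), ystar N xs w i * f w)
      = (a - b) * ρi1 + (a * (ρi - ρi1) - (G a - G b)) := by
    rw [hIsplit, hv1, hv2, hv3]
    ring
  -- the two key G-inequalities
  have hK1 : q * (ρi - ρq) ≤ G a - G q := by
    have h := hK q a hq0 hqa
    rwa [hFa, hFq] at h
  have hK2 : b * (ρq - ρi1) ≤ G q - G b := by
    have h := hK b q hb0 hbq
    rwa [hFq, hFb] at h
  have hnn1 : 0 ≤ π (i - 1) * ((G a - G q) - q * (ρi - ρq)) :=
    mul_nonneg hπim (by linarith)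
  have hnn2 : 0 ≤ π (i + 1) * ((G q - G b) - b * (ρq - ρi1)) :=
    mul_nonneg hπip (by linarith)
  -- rewrite the goal
  have hxsi' : xstar N c π Finv i = a - b := by rw [← hxs]; exact hxsi
  rw [hI, pstar, if_neg hiNe, hxsi', hxsi, ← hρqdef, ← hρi1def, ← hρidef, ← hadef, ← hbdef, ← hqdef]
  -- the exact algebraic identity
  have hd1' : π i - π (i - 1) ≠ 0 := ne_of_gt hd1
  have hd2' : π (i + 1) - π i ≠ 0 := ne_of_gt hd2
  have hD' : π (i + 1) - π (i - 1) ≠ 0 := ne_of_gt hD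
  have hfinal :
      (c i * (a - b) + (π (i + 1) - π (i - 1)) * G q - (π (i + 1) - π i) * G b
          - (π i - π (i - 1)) * G a)
        - π i * ((a - b) * ρi1 + (a * (ρi - ρi1) - (G a - G b)))
        - ((c i - π i * ρi) * (a - b)
            + π (i - 1) * (c i - alphaB c π i) / (π i - π (i - 1)) * (q - b))
      = π (i - 1) * ((G a - G q) - q * (ρi - ρq))
        + π (i + 1) * ((G q - G b) - b * (ρq - ρi1)) := by
    rw [hρidef, hρi1def, hρqdef, rho, rho, if_pos hiN', if_pos hiN, Nat.add_sub_cancel,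
      rhocvx, alphaB]
    field_simp
    ring
  linarith [hnn1, hnn2, hfinal]
end
end

section
/- (Lemma 5, second part.) Under the stated bid assumptions, if in addition F is convex on the interval (0, x*_N), then the generator's expected payoff from LSE N satisfies p*_N − π_N ∫_0^∞ y*_N(x*;w) f(w) dw ≥ [ π_N c_{N−1}/(π_N − π_{N−1}) − ((c_N + c_{N−1})/2)·π_{N−1}/(π_N − π_{N−1}) ] x*_N. -/
open MeasureTheory Finset

noncomputable section

section Aux
open Filter Topology

lemma convexOn_Ioo_chord (F : ℝ → ℝ) (x : ℝ) (hx : 0 < x) (hFc : Continuous F)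
    (hconv : ConvexOn ℝ (Set.Ioo 0 x) F) (w : ℝ) (hw : w ∈ Set.Ioo (0:ℝ) x) :
    F w ≤ (1 - w / x) * F 0 + (w / x) * F x := by
  obtain ⟨hw0, hwx⟩ := hw
  set e : ℕ → ℝ := fun n => 1 / ((n : ℝ) + 2) with he_def
  have he_pos : ∀ n, 0 < e n := fun n => by positivity
  have he_le : ∀ n, e n ≤ 1 / 2 := by
    intro n
    rw [he_def]
    apply div_le_div_of_nonneg_left one_pos.le two_pos
    linarith [Nat.cast_nonneg (α := ℝ) n]
  have he_lim : Tendsto e atTop (nhds 0) := by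
    rw [he_def]
    apply Tendsto.div_atTop tendsto_const_nhds
    exact tendsto_atTop_add_const_right _ 2 tendsto_natCast_atTop_atTop
  set a : ℕ → ℝ := fun n => w * e n with ha_def
  set b : ℕ → ℝ := fun n => x - (x - w) * e n with hb_def
  have ha_lt : ∀ n, a n < w := by
    intro n
    have h1 : w * e n ≤ w * (1/2) := mul_le_mul_of_nonneg_left (he_le n) hw0.le
    show w * e n < w
    nlinarith
  have hb_gt : ∀ n, w < b n := by
    intro n
    have h1 : (x - w) * e n ≤ (x - w) * (1/2) :=
      mul_le_mul_of_nonneg_left (he_le n) (by linarith)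
    show w < x - (x - w) * e n
    nlinarith
  have ha_mem : ∀ n, a n ∈ Set.Ioo (0:ℝ) x :=
    fun n => ⟨mul_pos hw0 (he_pos n), lt_trans (ha_lt n) hwx⟩
  have hb_mem : ∀ n, b n ∈ Set.Ioo (0:ℝ) x := by
    intro n
    refine ⟨lt_trans hw0 (hb_gt n), ?_⟩
    have := mul_pos (show (0:ℝ) < x - w by linarith) (he_pos n)
    show x - (x - w) * e n < x
    linarith
  set t : ℕ → ℝ := fun n => (w - a n) / (b n - a n) with ht_def
  have hba : ∀ n, 0 < b n - a n := fun n => by linarith [ha_lt n, hb_gt n]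
  have ht01 : ∀ n, 0 ≤ t n ∧ t n ≤ 1 := by
    intro n
    constructor
    · exact div_nonneg (by linarith [ha_lt n]) (hba n).le
    · rw [ht_def, div_le_one (hba n)]
      linarith [hb_gt n]
  have interp : ∀ p q : ℝ, p < w → w < q →
      (1 - (w - p) / (q - p)) * p + ((w - p) / (q - p)) * q = w := by
    intro p q hp hq
    have h : q - p ≠ 0 := (by linarith : (0:ℝ) < q - p).ne'
    field_simp
    ring
  have key : ∀ n, F w ≤ (1 - t n) * F (a n) + t n * F (b n) := by
    intro n
    have h := hconv.2 (ha_mem n) (hb_mem n)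
      (by linarith [(ht01 n).2]) (ht01 n).1 (by ring : (1 - t n) + t n = 1)
    simp only [smul_eq_mul] at h
    have harg : (1 - t n) * a n + t n * b n = w := interp _ _ (ha_lt n) (hb_gt n)
    rwa [harg] at h
  have hta : Tendsto a atTop (nhds 0) := by
    have h := he_lim.const_mul w
    rw [mul_zero] at h
    exact h
  have htb : Tendsto b atTop (nhds x) := by
    have h := (he_lim.const_mul (x - w)).const_sub x
    rw [mul_zero, sub_zero] at h
    exact h
  have htt : Tendsto t atTop (nhds (w / x)) := by
    have h := (Tendsto.sub (tendsto_const_nhds (x := w)) hta).div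
      ((htb).sub hta) (by rw [sub_zero]; exact hx.ne')
    rw [sub_zero, sub_zero] at h
    exact h
  have hlim : Tendsto (fun n => (1 - t n) * F (a n) + t n * F (b n)) atTop
      (nhds ((1 - w / x) * F 0 + (w / x) * F x)) := by
    have hFa : Tendsto (fun n => F (a n)) atTop (nhds (F 0)) :=
      (hFc.tendsto 0).comp hta
    have hFb : Tendsto (fun n => F (b n)) atTop (nhds (F x)) :=
      (hFc.tendsto x).comp htb
    exact ((tendsto_const_nhds.sub htt).mul hFa).add (htt.mul hFb)
  exact ge_of_tendsto' hlim key

end Aux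

/-- Lemma 5, second part: lower bound on the generator's expected
payoff from LSE `N`, assuming `F` is convex on `(0, x*_N)`. -/
theorem generator_payoff_lower_bound_N
    (N : ℕ) (hN : 2 ≤ N) (c π : ℕ → ℝ)
    (hc0 : c 0 = 0) (hπ0 : π 0 = 0)
    (hπ : ∀ j, j < N → π j < π (j + 1))
    (f F Finv G : ℝ → ℝ)
    (hf_cont : Continuous f)
    (hf_zero : ∀ z : ℝ, z ≤ 0 → f z = 0)
    (hf_pos : ∀ z : ℝ, 0 < z → 0 < f z)
    (hf_int : MeasureTheory.Integrable f)
    (hf_tot : (∫ z : ℝ, f z) = 1)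
    (hF : ∀ z : ℝ, F z = ∫ w in Set.Iic z, f w)
    (hG : ∀ z : ℝ, G z = ∫ w in (0:ℝ)..z, w * f w)
    (hFinvF : ∀ z : ℝ, 0 ≤ z → Finv (F z) = z)
    (hFFinv : ∀ r : ℝ, 0 ≤ r → r < 1 → F (Finv r) = r)
    (hFinv_nonneg : ∀ r : ℝ, 0 ≤ r → r < 1 → 0 ≤ Finv r)
    (hρ1 : rho N c π 1 < 1)
    (hρdec : ∀ i, 1 ≤ i → i < N → rho N c π (i + 1) < rho N c π i)
    (hρN : 0 < rho N c π N)
    (hFconv : ConvexOn ℝ (Set.Ioo (0:ℝ) (xstar N c π Finv N)) F) :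
    pstar N c π Finv G N
        - π N * (∫ w in Set.Ioi (0:ℝ), ystar N (xstar N c π Finv) w N * f w)
      ≥ (π N * c (N - 1) / (π N - π (N - 1))
          - ((c N + c (N - 1)) / 2) * (π (N - 1) / (π N - π (N - 1))))
        * xstar N c π Finv N := by
  -- Notation
  set ρ : ℝ := rho N c π N with hρdef
  set x : ℝ := Finv ρ with hxdef
  have hxs : xstar N c π Finv N = x := by rw [xstar, if_pos rfl]
  -- π facts
  have hd : 0 < π N - π (N - 1) := by
    have h := hπ (N - 1) (by omega)
    rw [show N - 1 + 1 = N by omega] at h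
    linarith
  have hπnn : ∀ k, k ≤ N → 0 ≤ π k := by
    intro k
    induction k with
    | zero => intro _; rw [hπ0]
    | succ m ih =>
      intro h
      have h1 := hπ m (by omega)
      have h2 := ih (by omega)
      linarith
  have hπN1 : 0 ≤ π (N - 1) := hπnn (N - 1) (by omega)
  -- ρ facts
  have hchain : ∀ k, 1 ≤ k → k ≤ N → rho N c π k ≤ rho N c π 1 := by
    intro k
    induction k with
    | zero => omega
    | succ m ih =>
      intro h1 h2
      rcases Nat.eq_or_lt_of_le h1 with h | h
      · rw [← h]
      · have hm1 : 1 ≤ m := by omega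
        exact le_trans (hρdec m hm1 (by omega)).le (ih hm1 (by omega))
  have hρlt1 : ρ < 1 := lt_of_le_of_lt (hchain N (by omega) le_rfl) hρ1
  have hρval : ρ = (c N - c (N - 1)) / (π N - π (N - 1)) := by
    rw [hρdef, rho, if_pos le_rfl]
  have hρd : ρ * (π N - π (N - 1)) = c N - c (N - 1) := by
    rw [hρval]; field_simp
  -- x facts
  have hxnn : 0 ≤ x := hFinv_nonneg ρ hρN.le hρlt1
  have hFx : F x = ρ := hFFinv ρ hρN.le hρlt1
  have hF0 : F 0 = 0 := by
    rw [hF 0,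
      setIntegral_congr_fun measurableSet_Iic
        (fun w hw => hf_zero w hw : Set.EqOn f 0 (Set.Iic 0)),
      integral_zero]
  have hxpos : 0 < x := by
    rcases hxnn.lt_or_eq with h | h
    · exact h
    · exfalso; rw [← h, hF0] at hFx; linarith
  -- F is a primitive of f
  have hprim : ∀ z : ℝ, F z = F 0 + ∫ w in (0:ℝ)..z, f w := by
    intro z
    have h := intervalIntegral.integral_Iic_sub_Iic (a := (0:ℝ)) (b := z)
      (hf_int.integrableOn) (hf_int.integrableOn)
    rw [hF z, hF 0]
    linarith
  have hFderiv : ∀ z : ℝ, HasDerivAt F (f z) z := by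
    intro z
    have h1 : HasDerivAt (fun u => ∫ w in (0:ℝ)..u, f w) (f z) z :=
      intervalIntegral.integral_hasDerivAt_right (hf_int.intervalIntegrable)
        (hf_cont.stronglyMeasurableAtFilter _ _) hf_cont.continuousAt
    have h2 := h1.const_add (F 0)
    have heq : F = fun u => F 0 + ∫ w in (0:ℝ)..u, f w := funext hprim
    rw [heq]
    exact h2
  have hFcont : Continuous F :=
    continuous_iff_continuousAt.mpr fun z => (hFderiv z).continuousAt
  have hwf_cont : Continuous (fun w : ℝ => w * f w) := continuous_id.mul hf_cont
  have hxf_cont : Continuous (fun w : ℝ => x * f w) := continuous_const.mul hf_cont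
  -- Integration by parts: ∫_0^x w f(w) dw = x F(x) - ∫_0^x F(w) dw
  have hibp : (∫ w in (0:ℝ)..x, (F w + w * f w)) = x * F x - 0 * F 0 := by
    apply intervalIntegral.integral_eq_sub_of_hasDerivAt
      (f := fun w => w * F w) (f' := fun w => F w + w * f w)
    · intro w _
      have h := (hasDerivAt_id' w).mul (hFderiv w)
      simp only [one_mul] at h
      exact h
    · exact (hFcont.add hwf_cont).intervalIntegrable _ _
  have hsplit : (∫ w in (0:ℝ)..x, (F w + w * f w))
      = (∫ w in (0:ℝ)..x, F w) + ∫ w in (0:ℝ)..x, w * f w :=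
    intervalIntegral.integral_add (hFcont.intervalIntegrable _ _)
      (hwf_cont.intervalIntegrable _ _)
  -- Convexity chord bound
  have hFconv' : ConvexOn ℝ (Set.Ioo (0:ℝ) x) F := by rwa [hxs] at hFconv
  have hFle : ∀ w ∈ Set.Icc (0:ℝ) x, F w ≤ w * ρ / x := by
    intro w hw
    rcases eq_or_lt_of_le hw.1 with h0 | h0
    · rw [← h0, hF0]
      positivity
    rcases eq_or_lt_of_le hw.2 with h1 | h1
    · have hxx : x * ρ / x = ρ := by field_simp
      rw [h1, hFx, hxx]
    · have := convexOn_Ioo_chord F x hxpos hFcont hFconv' w ⟨h0, h1⟩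
      rw [hF0, hFx] at this
      calc F w ≤ (1 - w / x) * 0 + (w / x) * ρ := this
        _ = w * ρ / x := by ring
  have hintle : (∫ w in (0:ℝ)..x, F w) ≤ ρ * x / 2 := by
    have h1 : (∫ w in (0:ℝ)..x, F w) ≤ ∫ w in (0:ℝ)..x, w * ρ / x :=
      intervalIntegral.integral_mono_on hxpos.le (hFcont.intervalIntegrable _ _)
        (((continuous_id.mul continuous_const).div_const x).intervalIntegrable _ _)
        hFle
    have h2 : (∫ w in (0:ℝ)..x, w * ρ / x) = ρ * x / 2 := by
      rw [intervalIntegral.integral_div, intervalIntegral.integral_mul_const,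
        integral_id]
      field_simp
      ring
    linarith
  have hGx : ρ * x / 2 ≤ G x := by
    have hGint : G x = ∫ w in (0:ℝ)..x, w * f w := hG x
    rw [hFx] at hibp
    -- ∫ w f = x ρ - ∫ F ≥ x ρ - ρ x / 2
    have : (∫ w in (0:ℝ)..x, w * f w) = x * ρ - ∫ w in (0:ℝ)..x, F w := by
      linarith [hibp, hsplit]
    rw [hGint, this]
    linarith
  -- The shortfall integral
  have hphiN1 : phi N (xstar N c π Finv) (N + 1) = 0 := by
    rw [phi, Finset.Icc_eq_empty (by omega), Finset.sum_empty]
  have hphiN : phi N (xstar N c π Finv) N = x := by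
    rw [phi, Finset.Icc_self, Finset.sum_singleton, hxs]
  have hE : (∫ w in Set.Ioi (0:ℝ), ystar N (xstar N c π Finv) w N * f w)
      = x * ρ - G x := by
    have hcong : Set.EqOn (fun w => ystar N (xstar N c π Finv) w N * f w)
        (fun w => if w < x then (x - w) * f w else 0) (Set.Ioi (0:ℝ)) := by
      intro w hw
      simp only [ystar, hphiN1, hphiN]
      rw [if_neg (by simp at hw ⊢; linarith)]
      by_cases h : w < x
      · simp [h]
      · simp [h]
    rw [setIntegral_congr_fun measurableSet_Ioi hcong]
    have hunion : Set.Ioi (0:ℝ) = Set.Ioc 0 x ∪ Set.Ioi x :=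
      (Set.Ioc_union_Ioi_eq_Ioi hxpos.le).symm
    have hInt1 : IntegrableOn (fun w => if w < x then (x - w) * f w else 0)
        (Set.Ioc (0:ℝ) x) := by
      have hcont1 : Continuous (fun w : ℝ => (x - w) * f w) :=
        (continuous_const.sub continuous_id).mul hf_cont
      apply IntegrableOn.congr_fun hcont1.integrableOn_Ioc ?_ measurableSet_Ioc
      intro w hw
      rcases lt_or_eq_of_le hw.2 with h | h
      · simp [h]
      · simp [h]
    have hInt2 : IntegrableOn (fun w => if w < x then (x - w) * f w else 0)
        (Set.Ioi x) := by
      apply IntegrableOn.congr_fun (integrableOn_zero) ?_ measurableSet_Ioi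
      intro w hw
      simp only [Set.mem_Ioi] at hw
      show (0:ℝ) = if w < x then (x - w) * f w else 0
      rw [if_neg (not_lt.mpr hw.le)]
    rw [hunion, setIntegral_union (Set.Ioc_disjoint_Ioi le_rfl) measurableSet_Ioi
      hInt1 hInt2]
    have hzero : (∫ w in Set.Ioi x, (if w < x then (x - w) * f w else 0)) = 0 := by
      have hz : Set.EqOn (fun w => if w < x then (x - w) * f w else 0)
          (fun _ => (0:ℝ)) (Set.Ioi x) := by
        intro w hw
        simp only [Set.mem_Ioi] at hw
        show (if w < x then (x - w) * f w else 0) = 0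
        rw [if_neg (not_lt.mpr hw.le)]
      rw [setIntegral_congr_fun measurableSet_Ioi hz, integral_const]
      simp
    rw [hzero, add_zero]
    have hIoc : (∫ w in Set.Ioc (0:ℝ) x, (if w < x then (x - w) * f w else 0))
        = ∫ w in (0:ℝ)..x, (x - w) * f w := by
      rw [intervalIntegral.integral_of_le hxpos.le]
      apply setIntegral_congr_fun measurableSet_Ioc
      intro w hw
      rcases lt_or_eq_of_le hw.2 with h | h
      · simp [h]
      · simp [h]
    rw [hIoc]
    have hsub : (∫ w in (0:ℝ)..x, (x - w) * f w)
        = x * (∫ w in (0:ℝ)..x, f w) - ∫ w in (0:ℝ)..x, w * f w := by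
      rw [← intervalIntegral.integral_const_mul,
        ← intervalIntegral.integral_sub (hxf_cont.intervalIntegrable _ _)
          (hwf_cont.intervalIntegrable _ _)]
      exact intervalIntegral.integral_congr (fun w _ => by ring)
    have hFint : (∫ w in (0:ℝ)..x, f w) = ρ := by
      have := hprim x
      rw [hFx, hF0] at this
      linarith
    rw [hsub, hFint, ← hG x]
  -- Put everything together
  have hps : pstar N c π Finv G N = c N * x - (π N - π (N - 1)) * G x := by
    rw [pstar, if_pos rfl, hxs, ← hρdef, ← hxdef]
  rw [hps, hE, hxs, ge_iff_le, ← sub_nonneg]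
  have hP : 0 ≤ π (N - 1) * ((π N - π (N - 1)) * G x - (c N - c (N - 1)) * x / 2) := by
    have h1 : 0 ≤ (π N - π (N - 1)) * (G x - ρ * x / 2) :=
      mul_nonneg hd.le (by linarith)
    have h2 : (π N - π (N - 1)) * (G x - ρ * x / 2)
        = (π N - π (N - 1)) * G x - (c N - c (N - 1)) * x / 2 := by
      linear_combination (-(x / 2)) * hρd
    exact mul_nonneg hπN1 (by linarith [h2 ▸ h1])
  refine le_trans (div_nonneg hP hd.le) (le_of_eq ?_)
  rw [hρval]
  field_simp
  ring
end
end

section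
/- (Theorem 4: lower bound on the generator's expected profit.) Under the stated bid assumptions, suppose F is convex on (0, x*_N). Then the generator's expected profit U*_0 := Σ_{i=1}^N p*_i − Σ_{i=1}^N π_i ∫_0^∞ y*_i(x*;w) f(w) dw satisfies U*_0 ≥ Σ_{i=1}^{N−1} [ (c_i − π_i ρ_i) x*_i + (π_{i−1}(c_i − α_i)/(π_i − π_{i−1}))·( F⁻¹(ρ^cvx_i) − F⁻¹(ρ_{i+1}) ) ] + [ π_N c_{N−1}/(π_N − π_{N−1}) − ((c_N + c_{N−1})/2)·π_{N−1}/(π_N − π_{N−1}) ] x*_N, where α_i = (c_{i+1}(π_i − π_{i−1}) + c_{i−1}(π_{i+1} − π_i))/(π_{i+1} − π_{i−1}). -/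
open MeasureTheory Finset

noncomputable section

section AuxLemmas
open Set intervalIntegral

lemma abel_sum_s17 (n : ℕ) (P D : ℕ → ℝ) :
    ∑ i ∈ Finset.Icc 1 n, P i * (D i - D (i+1))
      = (∑ i ∈ Finset.Icc 1 n, (P i - P (i-1)) * D i) + P 0 * D 1 - P n * D (n+1) := by
  induction n with
  | zero => simp
  | succ m ih =>
      rw [Finset.sum_Icc_succ_top (by omega), Finset.sum_Icc_succ_top (by omega), ih]
      simp only [Nat.add_sub_cancel]
      ring

lemma telescope_sum (B : ℕ → ℝ) (n : ℕ) : ∀ j, j ≤ n + 1 →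
    ∑ i ∈ Finset.Icc j n, (B i - B (i+1)) = B j - B (n+1) := by
  induction n with
  | zero =>
      intro j hj
      interval_cases j
      · simp
      · simp
  | succ m ih =>
      intro j hj
      rcases Nat.lt_or_ge j (m+2) with h | h
      · rw [Finset.sum_Icc_succ_top (by omega), ih j (by omega)]
        ring
      · have hj2 : j = m + 2 := by omega
        subst hj2
        rw [Finset.Icc_eq_empty (by omega)]
        simp

lemma core_identity (m : ℕ) (P c r rc b g Gb Gg : ℕ → ℝ)
    (hP0 : P 0 = 0) (hc0 : c 0 = 0)
    (hcr : ∀ i, 1 ≤ i → i ≤ m + 1 → c i - c (i-1) = r i * (P i - P (i-1)))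
    (hrc : ∀ k, 1 ≤ k → k ≤ m → rc k * (P (k+1) - P (k-1)) = c (k+1) - c (k-1)) :
    ((∑ i ∈ Finset.Icc 1 m, (c i * (b i - b (i+1)) + (P (i+1) - P (i-1)) * Gg i
        - (P (i+1) - P i) * Gb (i+1) - (P i - P (i-1)) * Gb i))
      + (c (m+1) * b (m+1) - (P (m+1) - P m) * Gb (m+1)))
    - (∑ i ∈ Finset.Icc 1 (m+1), (P i - P (i-1)) * (r i * b i - Gb i))
    = (∑ i ∈ Finset.Icc 1 m, ((c i - P i * r i) * (b i - b (i+1))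
          + P (i-1) * (r i - rc i) * (g i - b (i+1))))
      + (c m - P m * r (m+1) / 2) * b (m+1)
      + P m * (Gb (m+1) - r (m+1) * b (m+1) / 2)
      + ∑ k ∈ Finset.Icc 1 m, (P (k+1) * ((Gg k - Gb (k+1)) - (rc k - r (k+1)) * b (k+1))
          + P (k-1) * ((Gb k - Gg k) - (r k - rc k) * g k)) := by
  induction m with
  | zero =>
      simp only [Finset.Icc_eq_empty (by omega : ¬ (1:ℕ) ≤ 0), Finset.sum_empty, Finset.Icc_self,
        Finset.sum_singleton]
      have h := hcr 1 le_rfl le_rfl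
      simp only [hc0, hP0] at h ⊢
      linear_combination b 1 * h
  | succ n ih =>
      have ih' := ih (fun i h1 h2 => hcr i h1 (by omega)) (fun k h1 h2 => hrc k h1 (by omega))
      rw [Finset.sum_Icc_succ_top (by omega : 1 ≤ n + 1),
          Finset.sum_Icc_succ_top (by omega : 1 ≤ n + 1),
          Finset.sum_Icc_succ_top (by omega : 1 ≤ n + 1),
          Finset.sum_Icc_succ_top (by omega : 1 ≤ n + 2)]
      simp only [Nat.add_sub_cancel, show (n:ℕ)+2-1 = n+1 from rfl]
      have h1 := hcr (n+1) (by omega) (by omega)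
      have h2 := hcr (n+2) (by omega) (by omega)
      have h3 := hrc (n+1) (by omega) (by omega)
      simp only [Nat.add_sub_cancel, show (n:ℕ)+2-1 = n+1 from rfl] at h1 h2 h3
      linear_combination ih' + (b (n+2) - b (n+1)) * h1 + (2 * b (n+2)) * h2 + b (n+2) * h3

variable {f F G : ℝ → ℝ}

lemma F_primitive (hf_int : Integrable f) (hF : ∀ z, F z = ∫ w in Set.Iic z, f w) :
    ∀ u v : ℝ, F v - F u = ∫ w in u..v, f w := by
  intro u v
  rw [hF, hF]
  exact intervalIntegral.integral_Iic_sub_Iic hf_int.integrableOn hf_int.integrableOn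

lemma F_cont (hf_cont : Continuous f) (hf_int : Integrable f)
    (hF : ∀ z, F z = ∫ w in Set.Iic z, f w) : Continuous F := by
  have h : ∀ z : ℝ, F z = (∫ w in (0:ℝ)..z, f w) + F 0 := by
    intro z
    have := F_primitive hf_int hF 0 z
    linarith
  have hc : Continuous fun z : ℝ => (∫ w in (0:ℝ)..z, f w) + F 0 := by
    apply Continuous.add _ continuous_const
    exact continuous_iff_continuousAt.2 fun z =>
      ((hf_cont.integral_hasStrictDerivAt 0 z).hasDerivAt.continuousAt)
  exact (funext h : F = _) ▸ hc

lemma F_hasDeriv (hf_cont : Continuous f) (hf_int : Integrable f)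
    (hF : ∀ z, F z = ∫ w in Set.Iic z, f w) : ∀ z : ℝ, HasDerivAt F (f z) z := by
  intro z
  have h : ∀ y : ℝ, F y = (∫ w in (0:ℝ)..y, f w) + F 0 := by
    intro y; have := F_primitive hf_int hF 0 y; linarith
  have : HasDerivAt (fun y : ℝ => (∫ w in (0:ℝ)..y, f w) + F 0) (f z) z :=
    ((hf_cont.integral_hasStrictDerivAt 0 z).hasDerivAt).add_const _
  exact (funext h : F = _) ▸ this

lemma G_parts (hf_cont : Continuous f) (hf_int : Integrable f)
    (hF : ∀ z, F z = ∫ w in Set.Iic z, f w)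
    (hG : ∀ z, G z = ∫ w in (0:ℝ)..z, w * f w) (b : ℝ) (hF0 : F 0 = 0) :
    G b = b * F b - ∫ w in (0:ℝ)..b, F w := by
  rw [hG]
  have h := intervalIntegral.integral_mul_deriv_eq_deriv_mul
    (u := fun w : ℝ => w) (u' := fun _ : ℝ => (1:ℝ)) (v := F) (v' := f)
    (fun x _ => hasDerivAt_id x) (fun x _ => F_hasDeriv hf_cont hf_int hF x)
    (continuous_const.intervalIntegrable 0 b)
    (hf_cont.intervalIntegrable 0 b)
  simp only [one_mul, hF0, mul_zero, zero_mul, sub_zero] at h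
  rw [h]

lemma chord_bound {b : ℝ} (hb : 0 < b) (hF0 : F 0 = 0)
    (hFcont : Continuous F) (hconv : ConvexOn ℝ (Set.Ioo 0 b) F) :
    ∀ w ∈ Set.Icc (0:ℝ) b, F w ≤ w * F b / b := by
  intro w hw
  rcases eq_or_lt_of_le hw.1 with h0 | h0
  · rw [← h0, hF0]; simp
  rcases eq_or_lt_of_le hw.2 with hb' | hb'
  · rw [hb']; exact le_of_eq (by field_simp)
  have key : ∀ uu vv : ℝ, 0 < uu → uu < w → w < vv → vv < b →
      F w ≤ (vv - w) / (vv - uu) * F uu + (1 - (vv - w) / (vv - uu)) * F vv := by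
    intro uu vv h1 h2 h3 h4
    have hd : (0:ℝ) < vv - uu := by linarith
    obtain ⟨lamv, hlv⟩ : ∃ l : ℝ, l = (vv - w) / (vv - uu) := ⟨_, rfl⟩
    rw [← hlv]
    have h5 : lamv * (vv - uu) = vv - w := by rw [hlv]; exact div_mul_cancel₀ _ hd.ne'
    have hl0 : 0 ≤ lamv := hlv ▸ div_nonneg (by linarith) hd.le
    have hl1 : 0 ≤ 1 - lamv := by
      have : lamv ≤ 1 := by rw [hlv, div_le_one hd]; linarith
      linarith
    have hcomb := hconv.2 (x := uu) (y := vv) ⟨h1, by linarith⟩ ⟨by linarith, h4⟩ hl0 hl1 (by ring)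
    have harg : lamv • uu + (1 - lamv) • vv = w := by
      rw [smul_eq_mul, smul_eq_mul]; linear_combination (-1:ℝ) * h5
    rw [harg] at hcomb
    simpa using hcomb
  set t : ℕ → ℝ := fun n => 1 / (n + 2) with ht
  have htpos : ∀ n : ℕ, 0 < t n := fun n => by positivity
  have htlt : ∀ n : ℕ, t n < 1 := by
    intro n
    rw [ht]
    rw [div_lt_one (by positivity)]
    have : (0:ℝ) ≤ (n:ℝ) := Nat.cast_nonneg n
    linarith
  have htend : Filter.Tendsto t Filter.atTop (nhds 0) := by
    have h2 : Filter.Tendsto (fun n : ℕ => ((n:ℝ) + 2)) Filter.atTop Filter.atTop :=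
      Filter.tendsto_atTop_add_const_right _ 2 tendsto_natCast_atTop_atTop
    have := h2.inv_tendsto_atTop
    rw [ht]; simp only [one_div]; exact this
  set u : ℕ → ℝ := fun n => t n * w with hu
  set v : ℕ → ℝ := fun n => b - t n * (b - w) with hv
  have huw : ∀ n, u n < w := by
    intro n; show t n * w < w; nlinarith [htpos n, htlt n]
  have hwv : ∀ n, w < v n := by
    intro n; show w < b - t n * (b - w); nlinarith [htpos n, htlt n]
  have hu0 : ∀ n, 0 < u n := by
    intro n; have := htpos n; show 0 < t n * w; positivity
  have hvb : ∀ n, v n < b := by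
    intro n; show b - t n * (b - w) < b; nlinarith [htpos n, htlt n]
  set lam : ℕ → ℝ := fun n => (v n - w) / (v n - u n) with hlam
  have hineq : ∀ n, F w ≤ lam n * F (u n) + (1 - lam n) * F (v n) :=
    fun n => key (u n) (v n) (hu0 n) (huw n) (hwv n) (hvb n)
  have hulim : Filter.Tendsto u Filter.atTop (nhds 0) := by
    have := htend.mul_const w
    rw [hu]; simpa [ht, one_div] using this
  have hvlim : Filter.Tendsto v Filter.atTop (nhds b) := by
    have := (htend.mul_const (b - w)).const_sub b
    rw [hv]; simpa [ht, one_div] using this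
  have hlamlim : Filter.Tendsto lam Filter.atTop (nhds ((b - w) / b)) := by
    have h1 : Filter.Tendsto (fun n => v n - w) Filter.atTop (nhds (b - w)) :=
      hvlim.sub_const w
    have h2 : Filter.Tendsto (fun n => v n - u n) Filter.atTop (nhds b) := by
      have := hvlim.sub hulim; simpa using this
    rw [hlam]
    exact h1.div h2 (ne_of_gt hb)
  have hFulim : Filter.Tendsto (fun n => F (u n)) Filter.atTop (nhds 0) := by
    have := (hFcont.tendsto 0).comp hulim
    rw [hF0] at this
    exact this
  have hFvlim : Filter.Tendsto (fun n => F (v n)) Filter.atTop (nhds (F b)) :=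
    (hFcont.tendsto b).comp hvlim
  have hlim : Filter.Tendsto (fun n => lam n * F (u n) + (1 - lam n) * F (v n))
      Filter.atTop (nhds ((b - w) / b * 0 + (1 - (b - w) / b) * F b)) :=
    ((hlamlim.mul hFulim).add (((hlamlim.const_sub 1)).mul hFvlim))
  have hfin : (b - w) / b * 0 + (1 - (b - w) / b) * F b = w * F b / b := by
    field_simp
    ring
  rw [hfin] at hlim
  exact ge_of_tendsto hlim (Filter.Eventually.of_forall hineq)

lemma G_lower (hf_cont : Continuous f) (hf_int : Integrable f)
    (hF : ∀ z, F z = ∫ w in Set.Iic z, f w)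
    (hG : ∀ z, G z = ∫ w in (0:ℝ)..z, w * f w) {b : ℝ} (hb : 0 < b) (hF0 : F 0 = 0)
    (hconv : ConvexOn ℝ (Set.Ioo 0 b) F) :
    G b ≥ F b * b / 2 := by
  have hFcont := F_cont hf_cont hf_int hF
  have hchord := chord_bound hb hF0 hFcont hconv
  have hint : (∫ w in (0:ℝ)..b, F w) ≤ ∫ w in (0:ℝ)..b, w * F b / b := by
    apply intervalIntegral.integral_mono_on hb.le
      (hFcont.intervalIntegrable 0 b)
      ((continuous_id.mul continuous_const).div_const b |>.intervalIntegrable 0 b)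
    exact hchord
  have hlin : (∫ w in (0:ℝ)..b, w * F b / b) = F b * b / 2 := by
    have : (fun w : ℝ => w * F b / b) = fun w : ℝ => (F b / b) * w := by
      funext w; ring
    rw [this, intervalIntegral.integral_const_mul, integral_id]
    field_simp
    ring
  have hparts := G_parts hf_cont hf_int hF hG b hF0
  rw [hparts]
  rw [hlin] at hint
  nlinarith [hint]

lemma G_diff_ge (hf_cont : Continuous f) (hf_int : Integrable f)
    (hfnn : ∀ z, 0 ≤ f z)
    (hF : ∀ z, F z = ∫ w in Set.Iic z, f w)
    (hG : ∀ z, G z = ∫ w in (0:ℝ)..z, w * f w) {u v : ℝ} (hu : 0 ≤ u) (huv : u ≤ v) :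
    G v - G u ≥ u * (F v - F u) := by
  have hGd : G v - G u = ∫ w in u..v, w * f w := by
    rw [hG, hG]
    exact intervalIntegral.integral_interval_sub_left
      ((continuous_id.mul hf_cont).intervalIntegrable 0 v)
      ((continuous_id.mul hf_cont).intervalIntegrable 0 u)
  have hFd := F_primitive hf_int hF u v
  rw [hGd, hFd, ← intervalIntegral.integral_const_mul]
  apply intervalIntegral.integral_mono_on huv
    ((continuous_const.mul hf_cont).intervalIntegrable u v)
    ((continuous_id.mul hf_cont).intervalIntegrable u v)
  intro w hw
  exact mul_le_mul_of_nonneg_right hw.1 (hfnn w)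

lemma integral_piece (hf_cont : Continuous f) (hf_int : Integrable f)
    (hF : ∀ z, F z = ∫ w in Set.Iic z, f w)
    (hG : ∀ z, G z = ∫ w in (0:ℝ)..z, w * f w)
    (hF0 : F 0 = 0)
    {a b : ℝ} (ha : 0 ≤ a) (hab : a ≤ b) :
    ∫ w in Set.Ioi (0:ℝ), (if w < a then b - a else if w < b then b - w else 0) * f w
      = (b - a) * F a + (b * (F b - F a) - (G b - G a)) := by
  set h : ℝ → ℝ := fun w => (if w < a then b - a else if w < b then b - w else 0) * f w with hh
  have hcwf : Continuous fun w : ℝ => w * f w := continuous_id.mul hf_cont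
  have e1 : Set.EqOn h (fun w => (b - a) * f w) (Set.Ioc 0 a) := by
    intro w hw
    rcases lt_or_eq_of_le hw.2 with hlt | heq
    · simp only [hh, if_pos hlt]
    · rcases lt_or_eq_of_le hab with h2 | h2
      · simp only [hh, heq, lt_irrefl, if_false, if_pos h2]
      · simp only [hh, heq, ← h2, lt_irrefl, if_false, sub_self, zero_mul, mul_comm]
  have e2 : Set.EqOn h (fun w => (b - w) * f w) (Set.Ioc a b) := by
    intro w hw
    have h1 : ¬ (w < a) := not_lt.2 hw.1.le
    rcases lt_or_eq_of_le hw.2 with hlt | heq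
    · simp only [hh, if_neg h1, if_pos hlt]
    · simp only [hh]
      rw [if_neg h1, heq, if_neg (lt_irrefl b)]
      ring
  have e3 : Set.EqOn h (fun _ => (0:ℝ)) (Set.Ioi b) := by
    intro w hw
    have h1 : ¬ (w < a) := not_lt.2 (le_trans hab (le_of_lt hw))
    have h2 : ¬ (w < b) := not_lt.2 (le_of_lt hw)
    simp only [hh, if_neg h1, if_neg h2, zero_mul]
  have i1 : MeasureTheory.IntegrableOn h (Set.Ioc 0 a) :=
    ((hf_int.const_mul (b - a)).integrableOn).congr_fun e1.symm measurableSet_Ioc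
  have i2 : MeasureTheory.IntegrableOn h (Set.Ioc a b) :=
    (((continuous_const.sub continuous_id).mul hf_cont).integrableOn_Ioc).congr_fun
      e2.symm measurableSet_Ioc
  have i3 : MeasureTheory.IntegrableOn h (Set.Ioi b) :=
    ((integrable_zero _ _ _).integrableOn).congr_fun e3.symm measurableSet_Ioi
  rw [← Set.Ioc_union_Ioi_eq_Ioi ha, ← Set.Ioc_union_Ioi_eq_Ioi hab]
  have dis1 : Disjoint (Set.Ioc (0:ℝ) a) (Set.Ioc a b ∪ Set.Ioi b) := by
    rw [Set.Ioc_union_Ioi_eq_Ioi hab]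
    exact Set.Ioc_disjoint_Ioi le_rfl
  rw [MeasureTheory.setIntegral_union dis1
    (measurableSet_Ioc.union measurableSet_Ioi) i1 (i2.union i3)]
  rw [MeasureTheory.setIntegral_union (Set.Ioc_disjoint_Ioi le_rfl) measurableSet_Ioi i2 i3]
  have v1 : ∫ w in Set.Ioc 0 a, h w = (b - a) * F a := by
    rw [MeasureTheory.setIntegral_congr_fun measurableSet_Ioc e1,
      MeasureTheory.integral_const_mul]
    have := F_primitive hf_int hF 0 a
    rw [intervalIntegral.integral_of_le ha] at this
    rw [← this, hF0]
    ring
  have v2 : ∫ w in Set.Ioc a b, h w = b * (F b - F a) - (G b - G a) := by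
    rw [MeasureTheory.setIntegral_congr_fun measurableSet_Ioc e2,
      ← intervalIntegral.integral_of_le hab]
    have hsub : ∀ w : ℝ, (b - w) * f w = b * f w - w * f w := fun w => by ring
    rw [intervalIntegral.integral_congr (fun w _ => hsub w)]
    rw [intervalIntegral.integral_sub (f := fun w => b * f w) ((continuous_const.mul hf_cont).intervalIntegrable a b)
      (hcwf.intervalIntegrable a b)]
    rw [intervalIntegral.integral_const_mul]
    have hGd : G b - G a = ∫ w in a..b, w * f w := by
      rw [hG, hG]
      exact intervalIntegral.integral_interval_sub_left
        (hcwf.intervalIntegrable 0 b)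
        (hcwf.intervalIntegrable 0 a)
    rw [hGd, ← F_primitive hf_int hF a b]
  have v3 : ∫ w in Set.Ioi b, h w = 0 := by
    rw [MeasureTheory.setIntegral_congr_fun measurableSet_Ioi e3]
    simp
  rw [v1, v2, v3]
  ring

end AuxLemmas

/-- Theorem 4: lower bound on the generator's expected profit. -/
theorem generator_expected_profit_lower_bound
    (N : ℕ) (hN : 2 ≤ N) (c π : ℕ → ℝ)
    (hc0 : c 0 = 0) (hπ0 : π 0 = 0)
    (hπ : ∀ j, j < N → π j < π (j + 1))
    (f F Finv G : ℝ → ℝ)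
    (hf_cont : Continuous f)
    (hf_zero : ∀ z : ℝ, z ≤ 0 → f z = 0)
    (hf_pos : ∀ z : ℝ, 0 < z → 0 < f z)
    (hf_int : MeasureTheory.Integrable f)
    (hf_tot : (∫ z : ℝ, f z) = 1)
    (hF : ∀ z : ℝ, F z = ∫ w in Set.Iic z, f w)
    (hG : ∀ z : ℝ, G z = ∫ w in (0:ℝ)..z, w * f w)
    (hFinvF : ∀ z : ℝ, 0 ≤ z → Finv (F z) = z)
    (hFFinv : ∀ r : ℝ, 0 ≤ r → r < 1 → F (Finv r) = r)
    (hFinv_nonneg : ∀ r : ℝ, 0 ≤ r → r < 1 → 0 ≤ Finv r)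
    (hρ1 : rho N c π 1 < 1)
    (hρdec : ∀ i, 1 ≤ i → i < N → rho N c π (i + 1) < rho N c π i)
    (hρN : 0 < rho N c π N)
    (hFconv : ConvexOn ℝ (Set.Ioo (0:ℝ) (xstar N c π Finv N)) F) :
    (∑ i ∈ Finset.Icc 1 N, pstar N c π Finv G i)
        - ∑ i ∈ Finset.Icc 1 N,
            π i * (∫ w in Set.Ioi (0:ℝ), ystar N (xstar N c π Finv) w i * f w)
      ≥ (∑ i ∈ Finset.Icc 1 (N - 1),
          ((c i - π i * rho N c π i) * xstar N c π Finv i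
            + (π (i - 1) * (c i - alphaB c π i) / (π i - π (i - 1)))
              * (Finv (rhocvx c π i) - Finv (rho N c π (i + 1)))))
        + (π N * c (N - 1) / (π N - π (N - 1))
            - ((c N + c (N - 1)) / 2) * (π (N - 1) / (π N - π (N - 1))))
          * xstar N c π Finv N := by
  obtain ⟨m, rfl⟩ : ∃ m, N = m + 1 := ⟨N - 1, by omega⟩
  simp only [Nat.add_sub_cancel] at *
  -- ===== basic order facts =====
  have hΔ : ∀ i, 1 ≤ i → i ≤ m + 1 → 0 < π i - π (i - 1) := by
    intro i h1 h2
    have := hπ (i - 1) (by omega)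
    have hi : i - 1 + 1 = i := by omega
    rw [hi] at this
    linarith
  have hπmono : ∀ i j, i ≤ j → j ≤ m + 1 → π i ≤ π j := by
    intro i j hij hj
    induction j, hij using Nat.le_induction with
    | base => exact le_rfl
    | succ n hn ih => exact le_trans (ih (by omega)) (hπ n (by omega)).le
  have hπnn : ∀ j, j ≤ m + 1 → 0 ≤ π j := by
    intro j hj
    have := hπmono 0 j (by omega) hj
    rwa [hπ0] at this
  have hrmono : ∀ i j, 1 ≤ i → i ≤ j → j ≤ m + 1 → rho (m + 1) c π j ≤ rho (m + 1) c π i := by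
    intro i j h1 hij hj
    induction j, hij using Nat.le_induction with
    | base => exact le_rfl
    | succ n hn ih => exact le_trans (hρdec n (by omega) (by omega)).le (ih (by omega))
  have hrpos : ∀ i, 1 ≤ i → i ≤ m + 1 → 0 < rho (m + 1) c π i := by
    intro i h1 h2
    exact lt_of_lt_of_le hρN (hrmono i (m + 1) h1 h2 le_rfl)
  have hrlt1 : ∀ i, 1 ≤ i → i ≤ m + 1 → rho (m + 1) c π i < 1 := by
    intro i h1 h2
    exact lt_of_le_of_lt (hrmono 1 i le_rfl h1 h2) hρ1
  have hfnn : ∀ z, 0 ≤ f z := by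
    intro z
    rcases le_or_gt z 0 with h | h
    · rw [hf_zero z h]
    · exact (hf_pos z h).le
  have hF0 : F 0 = 0 := by
    rw [hF 0, MeasureTheory.setIntegral_congr_fun measurableSet_Iic
      (fun w hw => hf_zero w hw : Set.EqOn f (fun _ => (0:ℝ)) (Set.Iic 0))]
    simp
  have hG0 : G 0 = 0 := by rw [hG 0, intervalIntegral.integral_same]
  have hFinv0 : Finv 0 = 0 := by
    have := hFinvF 0 le_rfl
    rwa [hF0] at this
  have hFmono : ∀ u v : ℝ, u ≤ v → F u ≤ F v := by
    intro u v h
    have h1 := F_primitive hf_int hF u v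
    have h2 : 0 ≤ ∫ w in u..v, f w := intervalIntegral.integral_nonneg h (fun x _ => hfnn x)
    linarith
  have hFinvmono : ∀ r s : ℝ, 0 ≤ r → r ≤ s → s < 1 → Finv r ≤ Finv s := by
    intro r s hr hrs hs1
    by_contra hcon
    push_neg at hcon
    have h1 := hFmono _ _ hcon.le
    rw [hFFinv r hr (lt_of_le_of_lt hrs hs1), hFFinv s (le_trans hr hrs) hs1] at h1
    have : r = s := le_antisymm hrs h1
    rw [this] at hcon
    exact lt_irrefl _ hcon
  -- ===== structural relations =====
  have hrtop : rho (m + 1) c π (m + 2) = 0 := by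
    rw [rho, if_neg (by omega)]
  have hcrel : ∀ i, 1 ≤ i → i ≤ m + 1 → c i - c (i - 1) = rho (m + 1) c π i * (π i - π (i - 1)) := by
    intro i h1 h2
    rw [rho, if_pos h2]
    exact (div_mul_cancel₀ _ (hΔ i h1 h2).ne').symm
  have hΔc : ∀ k, 1 ≤ k → k ≤ m → 0 < π (k + 1) - π (k - 1) := by
    intro k h1 h2
    have e1 := hΔ k h1 (by omega)
    have e2 := hΔ (k + 1) (by omega) (by omega)
    simp only [Nat.add_sub_cancel] at e2
    linarith
  have hrcrel : ∀ k, 1 ≤ k → k ≤ m → rhocvx c π k * (π (k + 1) - π (k - 1)) = c (k + 1) - c (k - 1) := by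
    intro k h1 h2
    rw [rhocvx]
    exact div_mul_cancel₀ _ (hΔc k h1 h2).ne'
  have hrcb : ∀ k, 1 ≤ k → k ≤ m →
      rho (m + 1) c π (k + 1) ≤ rhocvx c π k ∧ rhocvx c π k ≤ rho (m + 1) c π k := by
    intro k h1 h2
    have e1 := hcrel k h1 (by omega)
    have e2 := hcrel (k + 1) (by omega) (by omega)
    simp only [Nat.add_sub_cancel] at e2
    have e3 := hrcrel k h1 h2
    have d1 := hΔ k h1 (by omega)
    have d2 := hΔ (k + 1) (by omega) (by omega)
    simp only [Nat.add_sub_cancel] at d2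
    have hr21 : rho (m + 1) c π (k + 1) ≤ rho (m + 1) c π k := hrmono k (k + 1) h1 (by omega) (by omega)
    have hsum : rhocvx c π k * ((π k - π (k - 1)) + (π (k + 1) - π k))
        = rho (m + 1) c π k * (π k - π (k - 1)) + rho (m + 1) c π (k + 1) * (π (k + 1) - π k) := by
      have hh : (π k - π (k - 1)) + (π (k + 1) - π k) = π (k + 1) - π (k - 1) := by ring
      rw [hh, e3]
      linarith [e1, e2]
    constructor
    · nlinarith [hsum, d1, d2, hr21]
    · nlinarith [hsum, d1, d2, hr21]
  have hrc01 : ∀ k, 1 ≤ k → k ≤ m → 0 < rhocvx c π k ∧ rhocvx c π k < 1 := by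
    intro k h1 h2
    obtain ⟨ha, hb⟩ := hrcb k h1 h2
    exact ⟨lt_of_lt_of_le (hrpos (k + 1) (by omega) (by omega)) ha,
      lt_of_le_of_lt hb (hrlt1 k h1 (by omega))⟩
  -- ===== B values =====
  have hBnn : ∀ j, 1 ≤ j → j ≤ m + 2 → 0 ≤ Finv (rho (m + 1) c π (j)) := by
    intro j h1 h2
    rcases Nat.lt_or_ge j (m + 2) with h | h
    · exact hFinv_nonneg _ (hrpos j h1 (by omega)).le (hrlt1 j h1 (by omega))
    · have : j = m + 2 := by omega
      rw [this, hrtop, hFinv0]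
  have hFB : ∀ j, 1 ≤ j → j ≤ m + 2 → F (Finv (rho (m + 1) c π (j))) = rho (m + 1) c π j := by
    intro j h1 h2
    rcases Nat.lt_or_ge j (m + 2) with h | h
    · exact hFFinv _ (hrpos j h1 (by omega)).le (hrlt1 j h1 (by omega))
    · have : j = m + 2 := by omega
      rw [this, hrtop, hFinv0, hF0]
  have hFg : ∀ k, 1 ≤ k → k ≤ m → F (Finv (rhocvx c π (k))) = rhocvx c π k := by
    intro k h1 h2
    obtain ⟨ha, hb⟩ := hrc01 k h1 h2
    exact hFFinv _ ha.le hb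
  have hBmono : ∀ i, 1 ≤ i → i ≤ m + 1 → Finv (rho (m + 1) c π (i + 1)) ≤ Finv (rho (m + 1) c π (i)) := by
    intro i h1 h2
    rcases Nat.lt_or_ge i (m + 1) with h | h
    · exact hFinvmono _ _ (hrpos (i + 1) (by omega) (by omega)).le
        (hrmono i (i + 1) h1 (by omega) (by omega)) (hrlt1 i h1 h2)
    · have hi : i = m + 1 := by omega
      rw [hi, hrtop, hFinv0]
      exact hBnn (m + 1) (by omega) (by omega)
  have hBg1 : ∀ k, 1 ≤ k → k ≤ m → Finv (rho (m + 1) c π (k + 1)) ≤ Finv (rhocvx c π (k)) := by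
    intro k h1 h2
    obtain ⟨ha, hb⟩ := hrcb k h1 h2
    obtain ⟨_, hb1⟩ := hrc01 k h1 h2
    exact hFinvmono _ _ (hrpos (k + 1) (by omega) (by omega)).le ha hb1
  have hBg2 : ∀ k, 1 ≤ k → k ≤ m → Finv (rhocvx c π (k)) ≤ Finv (rho (m + 1) c π (k)) := by
    intro k h1 h2
    obtain ⟨ha, hb⟩ := hrcb k h1 h2
    obtain ⟨ha1, _⟩ := hrc01 k h1 h2
    exact hFinvmono _ _ ha1.le hb (hrlt1 k h1 (by omega))
  -- ===== xstar and phi =====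
  have hxB : ∀ i, 1 ≤ i → i ≤ m + 1 →
      xstar (m + 1) c π Finv i = Finv (rho (m + 1) c π (i)) - Finv (rho (m + 1) c π (i + 1)) := by
    intro i h1 h2
    by_cases hi : i = m + 1
    · rw [xstar, if_pos hi, hi, hrtop, hFinv0, sub_zero]
    · rw [xstar, if_neg hi]
  have hphi : ∀ j, 1 ≤ j → j ≤ m + 2 →
      phi (m + 1) (xstar (m + 1) c π Finv) j = Finv (rho (m + 1) c π (j)) := by
    intro j h1 h2
    rw [phi]
    rw [Finset.sum_congr rfl (fun i hi => hxB i
      (le_trans h1 (Finset.mem_Icc.1 hi).1) (Finset.mem_Icc.1 hi).2)]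
    rw [telescope_sum _ (m + 1) j h2]
    rw [hrtop, hFinv0, sub_zero]
  -- ===== integral computation =====
  have hint : ∀ i, 1 ≤ i → i ≤ m + 1 →
      (∫ w in Set.Ioi (0:ℝ), ystar (m + 1) (xstar (m + 1) c π Finv) w i * f w)
        = (rho (m + 1) c π i * Finv (rho (m + 1) c π (i)) - G (Finv (rho (m + 1) c π (i))))
          - (rho (m + 1) c π (i + 1) * Finv (rho (m + 1) c π (i + 1)) - G (Finv (rho (m + 1) c π (i + 1)))) := by
    intro i h1 h2
    have hfuneq : (fun w => ystar (m + 1) (xstar (m + 1) c π Finv) w i * f w)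
        = fun w => (if w < Finv (rho (m + 1) c π (i + 1)) then Finv (rho (m + 1) c π (i)) - Finv (rho (m + 1) c π (i + 1))
            else if w < Finv (rho (m + 1) c π (i)) then Finv (rho (m + 1) c π (i)) - w else 0) * f w := by
      funext w
      rw [ystar, hphi (i + 1) (by omega) (by omega), hphi i (by omega) (by omega),
        hxB i h1 h2]
    rw [hfuneq, integral_piece hf_cont hf_int hF hG hF0
      (hBnn (i + 1) (by omega) (by omega)) (hBmono i h1 h2)]
    rw [hFB i h1 (by omega), hFB (i + 1) (by omega) (by omega)]
    ring
  -- ===== sum of pstar =====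
  have hsum1 : (∑ i ∈ Finset.Icc 1 (m + 1), pstar (m + 1) c π Finv G i)
      = (∑ i ∈ Finset.Icc 1 m, (c i * (Finv (rho (m + 1) c π (i)) - Finv (rho (m + 1) c π (i + 1)))
          + (π (i + 1) - π (i - 1)) * G (Finv (rhocvx c π (i)))
          - (π (i + 1) - π i) * G (Finv (rho (m + 1) c π (i + 1)))
          - (π i - π (i - 1)) * G (Finv (rho (m + 1) c π (i)))))
        + (c (m + 1) * Finv (rho (m + 1) c π (m + 1)) - (π (m + 1) - π m) * G (Finv (rho (m + 1) c π (m + 1)))) := by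
    rw [Finset.sum_Icc_succ_top (by omega : (1:ℕ) ≤ m + 1)]
    congr 1
    · apply Finset.sum_congr rfl
      intro i hi
      obtain ⟨hi1, hi2⟩ := Finset.mem_Icc.1 hi
      rw [pstar, if_neg (by omega), hxB i hi1 (by omega)]
    · rw [pstar, if_pos rfl, xstar, if_pos rfl]
      simp only [Nat.add_sub_cancel]
  -- ===== sum of penalties =====
  have hD0 : rho (m + 1) c π (m + 2) * Finv (rho (m + 1) c π (m + 2)) - G (Finv (rho (m + 1) c π (m + 2))) = 0 := by
    rw [hrtop, hFinv0, hG0]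
    ring
  have hsum2 : (∑ i ∈ Finset.Icc 1 (m + 1),
        π i * (∫ w in Set.Ioi (0:ℝ), ystar (m + 1) (xstar (m + 1) c π Finv) w i * f w))
      = ∑ i ∈ Finset.Icc 1 (m + 1), (π i - π (i - 1)) * (rho (m + 1) c π i * Finv (rho (m + 1) c π (i)) - G (Finv (rho (m + 1) c π (i)))) := by
    rw [Finset.sum_congr rfl (fun i hi => by
      rw [hint i (Finset.mem_Icc.1 hi).1 (Finset.mem_Icc.1 hi).2])]
    have habel := abel_sum_s17 (m + 1) π
      (fun j => rho (m + 1) c π j * Finv (rho (m + 1) c π (j)) - G (Finv (rho (m + 1) c π (j))))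
    rw [habel, hπ0, hD0]
    ring
  -- ===== core identity =====
  have hcore := core_identity m π c (rho (m + 1) c π) (rhocvx c π)
    (fun j => Finv (rho (m + 1) c π (j))) (fun k => Finv (rhocvx c π (k)))
    (fun j => G (Finv (rho (m + 1) c π (j)))) (fun k => G (Finv (rhocvx c π (k))))
    hπ0 hc0 hcrel hrcrel
  -- ===== target transformation =====
  have hcoefN : π (m + 1) * c m / (π (m + 1) - π m)
      - (c (m + 1) + c m) / 2 * (π m / (π (m + 1) - π m))
      = c m - π m * rho (m + 1) c π (m + 1) / 2 := by
    have hd := hΔ (m + 1) (by omega) le_rfl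
    simp only [Nat.add_sub_cancel] at hd
    rw [rho, if_pos le_rfl]
    simp only [Nat.add_sub_cancel]
    field_simp
    ring
  have htarget : (∑ i ∈ Finset.Icc 1 m,
        ((c i - π i * rho (m + 1) c π i) * xstar (m + 1) c π Finv i
          + (π (i - 1) * (c i - alphaB c π i) / (π i - π (i - 1)))
            * (Finv (rhocvx c π (i)) - Finv (rho (m + 1) c π (i + 1)))))
      + (π (m + 1) * c m / (π (m + 1) - π m)
          - (c (m + 1) + c m) / 2 * (π m / (π (m + 1) - π m)))
        * xstar (m + 1) c π Finv (m + 1)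
      = (∑ i ∈ Finset.Icc 1 m, ((c i - π i * rho (m + 1) c π i) * (Finv (rho (m + 1) c π (i)) - Finv (rho (m + 1) c π (i + 1)))
          + π (i - 1) * (rho (m + 1) c π i - rhocvx c π i) * (Finv (rhocvx c π (i)) - Finv (rho (m + 1) c π (i + 1)))))
        + (c m - π m * rho (m + 1) c π (m + 1) / 2) * Finv (rho (m + 1) c π (m + 1)) := by
    rw [hcoefN, hxB (m + 1) (by omega) le_rfl, hrtop, hFinv0, sub_zero]
    congr 1
    apply Finset.sum_congr rfl
    intro i hi
    obtain ⟨hi1, hi2⟩ := Finset.mem_Icc.1 hi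
    rw [hxB i hi1 (by omega)]
    have hco : π (i - 1) * (c i - alphaB c π i) / (π i - π (i - 1))
        = π (i - 1) * (rho (m + 1) c π i - rhocvx c π i) := by
      have hd1 := hΔ i hi1 (by omega)
      have hd2 := hΔc i hi1 hi2
      rw [alphaB, rhocvx, rho, if_pos (by omega : i ≤ m + 1)]
      field_simp
      ring
    rw [hco]
  -- ===== inequalities =====
  have hBpos : 0 < Finv (rho (m + 1) c π (m + 1)) := by
    rcases eq_or_lt_of_le (hBnn (m + 1) (by omega) (by omega)) with h | h
    · exfalso
      have := hFB (m + 1) (by omega) (by omega)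
      rw [← h, hF0] at this
      have := hrpos (m + 1) (by omega) le_rfl
      linarith
    · exact h
  have hxstarN : xstar (m + 1) c π Finv (m + 1) = Finv (rho (m + 1) c π (m + 1)) := by
    rw [xstar, if_pos rfl]
  rw [hxstarN] at hFconv
  have he1 : 0 ≤ π m * (G (Finv (rho (m + 1) c π (m + 1))) - rho (m + 1) c π (m + 1) * Finv (rho (m + 1) c π (m + 1)) / 2) := by
    apply mul_nonneg (hπnn m (by omega))
    have := G_lower hf_cont hf_int hF hG hBpos hF0 hFconv
    rw [hFB (m + 1) (by omega) (by omega)] at this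
    linarith
  have he2 : 0 ≤ ∑ k ∈ Finset.Icc 1 m,
      (π (k + 1) * ((G (Finv (rhocvx c π (k))) - G (Finv (rho (m + 1) c π (k + 1)))) - (rhocvx c π k - rho (m + 1) c π (k + 1)) * Finv (rho (m + 1) c π (k + 1)))
        + π (k - 1) * ((G (Finv (rho (m + 1) c π (k))) - G (Finv (rhocvx c π (k)))) - (rho (m + 1) c π k - rhocvx c π k) * Finv (rhocvx c π (k)))) := by
    apply Finset.sum_nonneg
    intro k hk
    obtain ⟨hk1, hk2⟩ := Finset.mem_Icc.1 hk
    have t1 := G_diff_ge hf_cont hf_int hfnn hF hG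
      (hBnn (k + 1) (by omega) (by omega)) (hBg1 k hk1 hk2)
    rw [hFg k hk1 hk2, hFB (k + 1) (by omega) (by omega)] at t1
    have t2 := G_diff_ge hf_cont hf_int hfnn hF hG
      (le_trans (hBnn (k + 1) (by omega) (by omega)) (hBg1 k hk1 hk2)) (hBg2 k hk1 hk2)
    rw [hFB k hk1 (by omega), hFg k hk1 hk2] at t2
    have p1 := hπnn (k + 1) (by omega)
    have p2 := hπnn (k - 1) (by omega)
    have c1 : Finv (rho (m + 1) c π (k + 1)) * (rhocvx c π k - rho (m + 1) c π (k + 1))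
        = (rhocvx c π k - rho (m + 1) c π (k + 1)) * Finv (rho (m + 1) c π (k + 1)) := mul_comm _ _
    have c2 : Finv (rhocvx c π (k)) * (rho (m + 1) c π k - rhocvx c π k)
        = (rho (m + 1) c π k - rhocvx c π k) * Finv (rhocvx c π (k)) := mul_comm _ _
    have w1 : 0 ≤ (G (Finv (rhocvx c π (k))) - G (Finv (rho (m + 1) c π (k + 1)))) - (rhocvx c π k - rho (m + 1) c π (k + 1)) * Finv (rho (m + 1) c π (k + 1)) := by
      rw [← c1]; linarith
    have w2 : 0 ≤ (G (Finv (rho (m + 1) c π (k))) - G (Finv (rhocvx c π (k)))) - (rho (m + 1) c π k - rhocvx c π k) * Finv (rhocvx c π (k)) := by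
      rw [← c2]; linarith
    exact add_nonneg (mul_nonneg p1 w1) (mul_nonneg p2 w2)
  -- ===== conclude =====
  rw [hsum1, hsum2, htarget, hcore]
  linarith [he1, he2]
end
end
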